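/- arXiv:math/0609586 — 12 statements merged into one kernel-verified Lean document; each statement's English description precedes it below -/
import Mathlib

section
/- Let q = 3^{2h+1} with h ≥ 0 an integer, and α = 3^{h+1}. For every a ∈ F_q, the map f_a : F_q → F_q defined by f_a(x) = x^{2α+3} + a^α x^α − a² x is a bijection of F_q (i.e., f_a is a permutation polynomial of F_q). -/
theorem reeTits_permutation_polynomial {F : Type*} [Field F] [Fintype F] (h : ℕ)
    (hcard : Fintype.card F = 3 ^ (2 * h + 1)) (a : F) :
    Function.Bijective
      (fun x : F => x ^ (2 * 3 ^ (h + 1) + 3) + a ^ (3 ^ (h + 1)) * x ^ (3 ^ (h + 1)) - a ^ 2 * x) := by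
  -- characteristic 3
  have h3 : (3 : F) = 0 := by
    have h0 : ((3 ^ (2 * h + 1) : ℕ) : F) = 0 := by
      rw [← hcard]; exact Nat.cast_card_eq_zero F
    push_cast at h0
    exact (pow_eq_zero_iff (by omega)).mp h0
  haveI hp3 : Fact (Nat.Prime 3) := ⟨by norm_num⟩
  haveI hchar : CharP F 3 := (CharP.charP_iff_prime_eq_zero (by norm_num)).mpr h3
  set n := 3 ^ (h + 1) with hn
  have hn0 : n ≠ 0 := by rw [hn]; positivity
  have hn1 : 1 ≤ n := Nat.one_le_iff_ne_zero.mpr hn0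
  have hoddn : Odd n := by rw [hn]; exact Odd.pow (by decide)
  have hq : ∀ u : F, u ^ (3 ^ (2 * h + 1)) = u := by
    intro u; rw [← hcard]; exact FiniteField.pow_card u
  have hadd : ∀ u v : F, (u + v) ^ n = u ^ n + v ^ n := by
    intro u v; rw [hn]; exact add_pow_char_pow u v 3 (h + 1)
  have hsub : ∀ u v : F, (u - v) ^ n = u ^ n - v ^ n := by
    intro u v; rw [hn]; exact sub_pow_char_pow u v (h + 1)
  have hnn : n * n = 3 ^ (2 * h + 1) * 3 := by
    rw [hn, ← pow_add, show h + 1 + (h + 1) = 2 * h + 1 + 1 from by omega, pow_succ]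
  have hkey : ∀ u : F, (u ^ n) ^ n = u ^ 3 := by
    intro u; rw [← pow_mul, hnn, pow_mul, hq]
  have hcomm : ∀ (u : F) (m : ℕ), (u ^ m) ^ n = (u ^ n) ^ m := fun u m => pow_right_comm u m n
  -- anisotropy of x^2+y^2
  have hcard4 : Fintype.card F % 4 = 3 := by
    rw [hcard, pow_succ, pow_mul, Nat.mul_mod, Nat.pow_mod]
    norm_num
  have hm1ns : ¬ IsSquare (-1 : F) := by
    have hrc : ringChar F = 3 := CharP.ringChar_of_prime_eq_zero (by norm_num) h3
    rw [FiniteField.isSquare_iff (by rw [hrc]; norm_num) (neg_ne_zero.mpr one_ne_zero)]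
    have hodd2 : Odd (Fintype.card F / 2) := Nat.odd_iff.mpr (by omega)
    rw [hodd2.neg_one_pow]
    intro hfe
    have h2 : (2 : F) = 0 := by linear_combination -hfe
    have h1 : (1 : F) = 0 := by linear_combination h3 - h2
    exact one_ne_zero h1
  have haniso : ∀ X Y : F, X ^ 2 + Y ^ 2 = 0 → X = 0 := by
    intro X Y hXY
    by_contra hX
    apply hm1ns
    refine ⟨Y * X⁻¹, ?_⟩
    field_simp
    linear_combination -hXY
  -- injectivity suffices
  rw [← Finite.injective_iff_bijective]
  intro x y hxy
  by_contra hne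
  dsimp only at hxy
  have hd0 : x - y ≠ 0 := sub_ne_zero.mpr hne
  set d := x - y with hd
  set s := (x + y) * d⁻¹ with hs
  set bb := a ^ 3 ^ h * d⁻¹ ^ (3 ^ h + 1) with hb
  have hds : d * s = x + y := by rw [hs]; field_simp
  have hxv : x = -(d * (s + 1)) := by linear_combination hds + hd + x * h3
  have hyv : y = -(d * (s - 1)) := by linear_combination hds - hd + y * h3
  -- b-facts
  have hm1 : 3 ^ h * n = 3 ^ (2 * h + 1) := by
    rw [hn, ← pow_add]; congr 1; omega
  have hm2 : (3 ^ h + 1) * n = 3 ^ (2 * h + 1) + n := by rw [add_mul, one_mul, hm1]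
  have hm3 : 3 ^ h * 3 = n := by rw [hn, pow_succ]
  have hm4 : (3 ^ h + 1) * 3 = n + 3 := by rw [add_mul, one_mul, hm3]
  have hBd : bb ^ n * (d * d ^ n) = a := by
    rw [hb, mul_pow, ← pow_mul, ← pow_mul, hm1, hm2, pow_add d⁻¹ (3 ^ (2 * h + 1)) n, hq a, hq d⁻¹, inv_pow]
    field_simp
  have hb3d : bb ^ 3 * (d ^ 3 * d ^ n) = a ^ n := by
    rw [hb, mul_pow, ← pow_mul, ← pow_mul, hm3, hm4, pow_add d⁻¹ n 3, inv_pow, inv_pow]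
    field_simp
  -- the collision equation, sigma-applied
  have e3 : ∀ t : F, t ^ (2 * n + 3) = t ^ 3 * (t ^ n) ^ 2 := by
    intro t
    rw [show 2 * n + 3 = 3 + n * 2 from by ring, pow_add, pow_mul t n 2]
  rw [e3 x, e3 y] at hxy
  have hxn : x ^ n = -(d ^ n * (s ^ n + 1)) := by
    rw [hxv, hoddn.neg_pow, mul_pow, hadd s 1, one_pow]
  have hyn : y ^ n = -(d ^ n * (s ^ n - 1)) := by
    rw [hyv, hoddn.neg_pow, mul_pow, hsub s 1, one_pow]
  have e2 : ∀ t : F, (t ^ (n + 2)) ^ n = t ^ 3 * (t ^ n) ^ 2 := by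
    intro t
    rw [← pow_mul, show (n + 2) * n = n * n + n * 2 from by ring, pow_add, pow_mul t n n,
      hkey t, pow_mul t n 2]
  have hw : (x ^ (n + 2) - y ^ (n + 2) + a * (x - y)) ^ n = a ^ 2 * (x - y) := by
    have e1 : x ^ (n + 2) - y ^ (n + 2) + a * (x - y) =
        (x ^ (n + 2) + a * x) - (y ^ (n + 2) + a * y) := by ring
    rw [e1, hsub, hadd, hadd, mul_pow, mul_pow, e2 x, e2 y]
    linear_combination hxy
  have hWform : x ^ (n + 2) - y ^ (n + 2) + a * (x - y) =
      a * d - d ^ n * d ^ 2 * (s * s ^ n - s ^ 2 - 1) := by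
    rw [pow_add x n 2, pow_add y n 2, hxn, hyn]
    linear_combination (d * d ^ n + d * s ^ n * d ^ n + d * s * d ^ n + d * s * s ^ n * d ^ n + a
        - x * d ^ n - x * s ^ n * d ^ n) * hxv
      + (-(d * d ^ n) + d * s ^ n * d ^ n + d * s * d ^ n - d * s * s ^ n * d ^ n - a
        - y * d ^ n + y * s ^ n * d ^ n) * hyv
      + (-(d ^ 2 * d ^ n) - d ^ 2 * s * s ^ n * d ^ n - d ^ 2 * s ^ 2 * d ^ n - a * d) * h3
  have hclub : (a * d - d ^ n * d ^ 2 * (s * s ^ n - s ^ 2 - 1)) ^ n = a ^ 2 * d := by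
    rw [← hWform, hw, ← hd]
  have e5 : (s * s ^ n - s ^ 2 - 1) ^ n = s ^ n * s ^ 3 - (s ^ n) ^ 2 - 1 := by
    simp only [hsub, mul_pow, one_pow]
    rw [hkey s, hcomm s 2]
  have e6 : (d ^ n * d ^ 2 * (s * s ^ n - s ^ 2 - 1)) ^ n =
      d ^ 3 * ((d ^ n) ^ 2 * (s ^ n * s ^ 3 - (s ^ n) ^ 2 - 1)) := by
    rw [mul_pow, mul_pow, hkey d, hcomm d 2, e5]; ring
  have hG : a ^ n * d ^ n - d ^ 3 * ((d ^ n) ^ 2 * (s ^ n * s ^ 3 - (s ^ n) ^ 2 - 1)) =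
      a ^ 2 * d := by
    rw [← mul_pow, ← e6, ← hsub]; exact hclub
  -- divide out d-powers
  have hGG : d ^ 3 * (d ^ n) ^ 2 *
      ((s ^ n) ^ 2 - s ^ 3 * s ^ n + 1 + bb ^ 3 - (bb ^ n) ^ 2) = 0 := by
    linear_combination hG + d ^ n * hb3d - d * (a + bb ^ n * (d * d ^ n)) * hBd
  have hQ : (s ^ n) ^ 2 - s ^ 3 * s ^ n + 1 + bb ^ 3 - (bb ^ n) ^ 2 = 0 := by
    have hnz : d ^ 3 * (d ^ n) ^ 2 ≠ 0 :=
      mul_ne_zero (pow_ne_zero _ hd0) (pow_ne_zero _ (pow_ne_zero _ hd0))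
    exact (mul_eq_zero.mp hGG).resolve_left hnz
  -- apply sigma and take cube root: the Claim C equation
  have hQn2 : s ^ 6 - (s ^ n) ^ 3 * s ^ 3 + 1 + (bb ^ n) ^ 3 - bb ^ 6 = 0 := by
    have e : ((s ^ n) ^ 2 - s ^ 3 * s ^ n + 1 + bb ^ 3 - (bb ^ n) ^ 2) ^ n =
        s ^ 6 - (s ^ n) ^ 3 * s ^ 3 + 1 + (bb ^ n) ^ 3 - bb ^ 6 := by
      simp only [hsub, hadd, mul_pow, one_pow]
      rw [hcomm (s ^ n) 2, hcomm s 3, hcomm bb 3, hcomm (bb ^ n) 2, hkey s, hkey bb]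
      try ring
    rw [← e, hQ]
    exact zero_pow hn0
  have hcube : (s * s ^ n - s ^ 2 + bb ^ 2 - bb ^ n - 1) ^ 3 = 0 := by
    linear_combination -hQn2 +
      (-(bb ^ n) - (bb ^ n) ^ 2 + bb ^ 2 + 2 * bb ^ 2 * bb ^ n + bb ^ 2 * (bb ^ n) ^ 2 - bb ^ 4
        - bb ^ 4 * bb ^ n + s * s ^ n + 2 * s * s ^ n * bb ^ n + s * s ^ n * (bb ^ n) ^ 2
        - 2 * s * bb ^ 2 * s ^ n - 2 * s * bb ^ 2 * s ^ n * bb ^ n + s * bb ^ 4 * s ^ n - s ^ 2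
        - 2 * s ^ 2 * bb ^ n - s ^ 2 * (bb ^ n) ^ 2 - s ^ 2 * (s ^ n) ^ 2
        - s ^ 2 * (s ^ n) ^ 2 * bb ^ n + 2 * s ^ 2 * bb ^ 2 + 2 * s ^ 2 * bb ^ 2 * bb ^ n
        + s ^ 2 * bb ^ 2 * (s ^ n) ^ 2 - s ^ 2 * bb ^ 4 + 2 * s ^ 3 * s ^ n
        + 2 * s ^ 3 * s ^ n * bb ^ n - 2 * s ^ 3 * bb ^ 2 * s ^ n - s ^ 4 - s ^ 4 * bb ^ n
        - s ^ 4 * (s ^ n) ^ 2 + s ^ 4 * bb ^ 2 + s ^ 5 * s ^ n) * h3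
  have hPa : s * s ^ n - s ^ 2 + bb ^ 2 - bb ^ n - 1 = 0 :=
    (pow_eq_zero_iff (by norm_num : (3 : ℕ) ≠ 0)).mp hcube
  have hPb : s ^ n * s ^ 3 - (s ^ n) ^ 2 + (bb ^ n) ^ 2 - bb ^ 3 - 1 = 0 := by
    have e2b : (s * s ^ n - s ^ 2 + bb ^ 2 - bb ^ n - 1) ^ n =
        s ^ n * s ^ 3 - (s ^ n) ^ 2 + (bb ^ n) ^ 2 - bb ^ 3 - 1 := by
      simp only [hsub, hadd, mul_pow, one_pow]
      rw [hcomm s 2, hcomm bb 2, hkey s, hkey bb]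
      try ring
    rw [← e2b, hPa]
    exact zero_pow hn0
  -- the norm certificate: v1*sigma(v1) + v2*sigma(v2) = 0
  have hV : (s * s ^ n + s ^ 2 + bb ^ 2 + bb) * (s ^ n * s ^ 3 + (s ^ n) ^ 2 + (bb ^ n) ^ 2 + bb ^ n)
      + (s + s ^ n + s * bb) * (s ^ n + s ^ 3 + s ^ n * bb ^ n) = 0 := by
    linear_combination
      (1 - (bb ^ n) ^ 2 + bb + bb * bb ^ n - bb ^ 2 - bb ^ 3 + s * s ^ n - s ^ 2 - s ^ 2 * bb
        - s ^ 3 * s ^ n) * hPa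
      + (-1 - bb ^ n - bb - bb ^ 2 - s * s ^ n) * hPb
      + (bb * bb ^ n + bb * (bb ^ n) ^ 2 - bb ^ 2 + bb ^ 2 * (bb ^ n) ^ 2 - bb ^ 3
        - bb ^ 3 * bb ^ n + s * s ^ n * bb ^ n + s * s ^ n * (bb ^ n) ^ 2 + s ^ 3 * s ^ n
        + s ^ 3 * bb * s ^ n + s ^ 3 * bb ^ 2 * s ^ n + s ^ 4 * (s ^ n) ^ 2) * h3
  have hw1 : (s * s ^ n + s ^ 2 + bb ^ 2 + bb) ^ n =
      s ^ n * s ^ 3 + (s ^ n) ^ 2 + (bb ^ n) ^ 2 + bb ^ n := by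
    simp only [hadd, mul_pow]
    rw [hcomm s 2, hcomm bb 2, hkey s]
    try ring
  have hw2 : (s + s ^ n + s * bb) ^ n = s ^ n + s ^ 3 + s ^ n * bb ^ n := by
    simp only [hadd, mul_pow]
    rw [hkey s]
    try ring
  obtain ⟨k, hk⟩ := hoddn.add_one
  have hk2 : n + 1 = k * 2 := by omega
  have hkne : k ≠ 0 := by omega
  have hsumsq : ((s * s ^ n + s ^ 2 + bb ^ 2 + bb) ^ k) ^ 2 + ((s + s ^ n + s * bb) ^ k) ^ 2 = 0 := by
    rw [← pow_mul, ← pow_mul, ← hk2, pow_succ (s * s ^ n + s ^ 2 + bb ^ 2 + bb) n,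
      pow_succ (s + s ^ n + s * bb) n, hw1, hw2]
    linear_combination hV
  have hz1 : s * s ^ n + s ^ 2 + bb ^ 2 + bb = 0 :=
    (pow_eq_zero_iff hkne).mp (haniso _ _ hsumsq)
  have hz2 : s + s ^ n + s * bb = 0 :=
    (pow_eq_zero_iff hkne).mp (haniso ((s + s ^ n + s * bb) ^ k)
      ((s * s ^ n + s ^ 2 + bb ^ 2 + bb) ^ k) (by linear_combination hsumsq))
  -- endgame
  have final : s ^ 2 = 1 → s ^ n = -s → False := by
    intro hs2 hSn
    obtain ⟨k2, hk2'⟩ := hoddn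
    have hsn' : s ^ n = s := by
      rw [hk2', pow_succ, pow_mul, hs2, one_pow, one_mul]
    have he : s = -s := hsn'.symm.trans hSn
    have hs0 : s = 0 := by linear_combination -he + s * h3
    rw [hs0] at hs2
    norm_num at hs2
  have hb0 : bb * (bb + 1 - s ^ 2) = 0 := by linear_combination hz1 - s * hz2
  rcases mul_eq_zero.mp hb0 with hbz | hbs
  · -- bb = 0
    have hBz : bb ^ n = 0 := by rw [hbz]; exact zero_pow hn0
    have hSeq : s ^ n = -s := by linear_combination hz2 - s * hbz
    have hs2 : s ^ 2 = 1 := by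
      linear_combination (-2 : F) * hPa + 2 * bb * hbz + (-2 : F) * hBz + 2 * s * hSeq
        + (-1 - s ^ 2) * h3
    exact final hs2 hSeq
  · -- bb + 1 - s^2 = 0
    have hS3 : s ^ n = -(s ^ 3) := by linear_combination hz2 - s * hbs
    have hbv : bb = s ^ 2 - 1 := by linear_combination hbs
    have hBv : bb ^ n = (s ^ n) ^ 2 - 1 := by
      rw [hbv, hsub, hcomm s 2, one_pow]
      
    have hs6 : s ^ 6 = 1 := by
      linear_combination (-1 : F) * hPa + (-1 + bb + s ^ 2) * hbv + (-1 : F) * hBv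
        + (-(s ^ n) + s + s ^ 3) * hS3 + (-(s ^ 2)) * h3
    have hs2 : s ^ 2 = 1 := by
      have e9 : (s ^ 2 - 1) ^ 3 = 0 := by linear_combination hs6 + (s ^ 2 - s ^ 4) * h3
      have e10 := (pow_eq_zero_iff (by norm_num : (3 : ℕ) ≠ 0)).mp e9
      linear_combination e10
    have hSeq : s ^ n = -s := by linear_combination hS3 - s * hs2
    exact final hs2 hSeq
end

section
/- Let q = 3^{2h+1} with h ≥ 0, α = 3^{h+1}, and for a ∈ F_q* set D_a = {f_a(x²) : x ∈ F_q*}, where f_a(x) = x^{2α+3} + a^α x^α − a² x. Then for every nonzero a ∈ F_q, D_a ∩ (−D_a) = ∅ and D_a ∪ (−D_a) ∪ {0} = F_q. -/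
private lemma reeTits_key {F : Type*} [Field F] (α : ℕ) (h3 : (3:F) = 0) (hα : α ≠ 0)
    (hodd : Odd α)
    (hadd : ∀ z w : F, (z + w) ^ α = z ^ α + w ^ α)
    (hsig : ∀ z : F, (z ^ α) ^ α = z ^ 3)
    (t u : F) : u ^ 2 - u ^ α - t ^ 2 + t * t ^ α - 1 ≠ 0 := by
  have hsub : ∀ z w : F, (z - w) ^ α = z ^ α - w ^ α := by
    intro z w
    rw [sub_eq_add_neg, hadd, hodd.neg_pow, ← sub_eq_add_neg]
  intro hQ
  set T := t ^ α with hTdef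
  set U := u ^ α with hUdef
  have hsT : T ^ α = t ^ 3 := hsig t
  have hsU : U ^ α = u ^ 3 := hsig u
  have hi : U = u ^ 2 - t ^ 2 - 1 + t * T := by linear_combination -hQ
  have hii : u ^ 3 = U ^ 2 - T ^ 2 - 1 + T * t ^ 3 := by
    have h0 : (u ^ 2 - U - t ^ 2 + t * T - 1) ^ α = 0 := by rw [hQ]; exact zero_pow hα
    rw [hsub, hadd, hsub, hsub, one_pow, mul_pow, hsT, hUdef, hsU,
      pow_right_comm u 2 α, pow_right_comm t 2 α] at h0
    linear_combination -h0
  by_cases ht1 : t = 1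
  · subst ht1
    have hT1 : T = 1 := by rw [hTdef, one_pow]
    rw [hT1] at hi hii
    have hU2 : U = u ^ 2 - 1 := by linear_combination hi
    have h5 : u ^ 3 = (u ^ 2 - 1) ^ 2 - 1 := by
      rw [hU2] at hii; linear_combination hii
    have h6 : (u * (u + 1)) ^ 2 = 0 := by linear_combination -h5 + (u ^ 3 + u ^ 2) * h3
    have h7 : u * (u + 1) = 0 := by
      exact (pow_eq_zero_iff (n := 2) (by norm_num)).mp h6
    rcases mul_eq_zero.mp h7 with h8 | h8
    · have hU0 : U = 0 := by rw [hUdef, h8, zero_pow hα]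
      exact one_ne_zero (α := F) (by linear_combination hU2 - hU0 + u * h8)
    · have h9 : u = -1 := by linear_combination h8
      have hUm : U = -1 := by rw [hUdef, h9, hodd.neg_one_pow]
      exact one_ne_zero (α := F) (by linear_combination hUm - hU2 + (1-u) * h9)
  by_cases htm : t = -1
  · subst htm
    have hT1 : T = -1 := by rw [hTdef, hodd.neg_one_pow]
    rw [hT1] at hi hii
    have hU2 : U = u ^ 2 - 1 := by linear_combination hi
    have h5 : u ^ 3 = (u ^ 2 - 1) ^ 2 - 1 := by
      rw [hU2] at hii; linear_combination hii
    have h6 : (u * (u + 1)) ^ 2 = 0 := by linear_combination -h5 + (u ^ 3 + u ^ 2) * h3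
    have h7 : u * (u + 1) = 0 := by
      exact (pow_eq_zero_iff (n := 2) (by norm_num)).mp h6
    rcases mul_eq_zero.mp h7 with h8 | h8
    · have hU0 : U = 0 := by rw [hUdef, h8, zero_pow hα]
      exact one_ne_zero (α := F) (by linear_combination hU2 - hU0 + u * h8)
    · have h9 : u = -1 := by linear_combination h8
      have hUm : U = -1 := by rw [hUdef, h9, hodd.neg_one_pow]
      exact one_ne_zero (α := F) (by linear_combination hUm - hU2 + (1-u) * h9)
  -- main case : t ≠ 1, t ≠ -1
  have ht1' : t - 1 ≠ 0 := sub_ne_zero.mpr ht1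
  have htm' : t + 1 ≠ 0 := by
    intro hc; exact htm (by linear_combination hc)
  have hF : ((t-1)*T - (t-1)*(u-t) + u^2) * ((t+1)*T + (t+1)*(t+u) + u^2) = 0 := by
    linear_combination (1-U-u^2-t*T+t^2) * hi + (-1) * hii +
      (u^2+u^3-t^2+t^2*u^2+t^3*T) * h3
  rcases mul_eq_zero.mp hF with hF1 | hF2
  · -- case F1
    have hP3 : (T-1)*t^3 - (T-1)*(U-T) + U^2 = 0 := by
      have h0 : ((t-1)*T - (t-1)*(u-t) + u^2) ^ α = 0 := by rw [hF1]; exact zero_pow hα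
      rw [hadd, hsub, mul_pow, mul_pow, hsub, hsub, one_pow, hsT,
        pow_right_comm u 2 α, ← hUdef, ← hTdef] at h0
      linear_combination h0
    have hKey : u^3 * (u+1-t^2) = 0 := by
      linear_combination (t-1)^2 * hP3
        - (U-T+u^2-2*t*U+3*t*T-2*t*u^2-t^2+t^2*U-3*t^2*T+t^2*u^2+2*t^3+t^3*T-t^4) * hi
        - (-T-u+2*t+2*t*T+2*t*u-2*t*u^2-4*t^2-2*t^2*T-2*t^2*u+t^2*u^2+4*t^3+t^3*T+t^3*u-2*t^4) * hF1
        - (-t*u-t*u^2+t^2+3*t^2*u+t^2*u^2-3*t^3-4*t^3*u+4*t^4+3*t^4*u-3*t^5-t^5*u+t^6) * h3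
    rcases mul_eq_zero.mp hKey with h8 | h8
    · have hu0 : u = 0 := by
        exact (pow_eq_zero_iff (n := 3) (by norm_num)).mp h8
      subst hu0
      have hU0 : U = 0 := by rw [hUdef, zero_pow hα]
      have hT2 : (t-1)*(T+t) = 0 := by linear_combination hF1
      have hTt : T = -t := by
        rcases mul_eq_zero.mp hT2 with hc | hc
        · exact absurd hc ht1'
        · linear_combination hc
      rw [hU0, hTt] at hi
      have : (t-1)*(t+1) = 0 := by linear_combination -hi + t^2 * h3
      rcases mul_eq_zero.mp this with hc | hc
      · exact ht1' hc
      · exact htm' hc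
    · have hu : u = t^2 - 1 := by linear_combination h8
      have hUz : (t-1)*U = 0 := by
        linear_combination (t-1) * hi + t * hF1 + (1-u-t) * hu + (t^2-t^3) * h3
      have hU0 : U = 0 := by
        rcases mul_eq_zero.mp hUz with hc | hc
        · exact absurd hc ht1'
        · exact hc
      have hune : u ≠ 0 := by
        rw [hu]
        intro hc
        have : (t-1)*(t+1) = 0 := by linear_combination hc
        rcases mul_eq_zero.mp this with hc2 | hc2
        · exact ht1' hc2
        · exact htm' hc2
      exact pow_ne_zero α hune (hUdef ▸ hU0)
  · -- case F2
    have hP3 : (T+1)*t^3 + (T+1)*(T+U) + U^2 = 0 := by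
      have h0 : ((t+1)*T + (t+1)*(t+u) + u^2) ^ α = 0 := by rw [hF2]; exact zero_pow hα
      rw [hadd, hadd, mul_pow, mul_pow, hadd, hadd, one_pow, hsT,
        pow_right_comm u 2 α, ← hUdef, ← hTdef] at h0
      linear_combination h0
    have hKey : u^3 * (u+1-t^2) = 0 := by
      linear_combination (t+1)^2 * hP3
        - (U+T+u^2+2*t*U+3*t*T+2*t*u^2-t^2+t^2*U+3*t^2*T+t^2*u^2-2*t^3+t^3*T-t^4) * hi
        - (T-u-2*t+2*t*T-2*t*u+2*t*u^2-4*t^2+2*t^2*T-2*t^2*u+t^2*u^2-4*t^3+t^3*T-t^3*u-2*t^4) * hF2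
        - (t*u+t*u^2+t^2+3*t^2*u+t^2*u^2+3*t^3+4*t^3*u+4*t^4+3*t^4*u+3*t^5+t^5*u+t^6) * h3
    rcases mul_eq_zero.mp hKey with h8 | h8
    · have hu0 : u = 0 := by
        exact (pow_eq_zero_iff (n := 3) (by norm_num)).mp h8
      subst hu0
      have hU0 : U = 0 := by rw [hUdef, zero_pow hα]
      have hT2 : (t+1)*(T+t) = 0 := by linear_combination hF2
      have hTt : T = -t := by
        rcases mul_eq_zero.mp hT2 with hc | hc
        · exact absurd hc htm'
        · linear_combination hc
      rw [hU0, hTt] at hi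
      have : (t-1)*(t+1) = 0 := by linear_combination -hi + t^2 * h3
      rcases mul_eq_zero.mp this with hc | hc
      · exact ht1' hc
      · exact htm' hc
    · have hu : u = t^2 - 1 := by linear_combination h8
      have hUz : (t+1)*U = 0 := by
        linear_combination (t+1) * hi + t * hF2 + (-1+u-t) * hu + (-t^2-t^3) * h3
      have hU0 : U = 0 := by
        rcases mul_eq_zero.mp hUz with hc | hc
        · exact absurd hc htm'
        · exact hc
      have hune : u ≠ 0 := by
        rw [hu]
        intro hc
        have : (t-1)*(t+1) = 0 := by linear_combination hc
        rcases mul_eq_zero.mp this with hc2 | hc2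
        · exact ht1' hc2
        · exact htm' hc2
      exact pow_ne_zero α hune (hUdef ▸ hU0)

private lemma reeTits_inj {F : Type*} [Field F] (α : ℕ) (h3 : (3:F) = 0) (hα : α ≠ 0)
    (hodd : Odd α)
    (hadd : ∀ z w : F, (z + w) ^ α = z ^ α + w ^ α)
    (hsig : ∀ z : F, (z ^ α) ^ α = z ^ 3)
    (a : F) {x y : F}
    (hfxy : x ^ (2*α+3) + a ^ α * x ^ α - a ^ 2 * x
          = y ^ (2*α+3) + a ^ α * y ^ α - a ^ 2 * y) : x = y := by
  have hsub : ∀ z w : F, (z - w) ^ α = z ^ α - w ^ α := by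
    intro z w
    rw [sub_eq_add_neg, hadd, hodd.neg_pow, ← sub_eq_add_neg]
  by_contra hne
  have hd : x - y ≠ 0 := sub_ne_zero.mpr hne
  have hcube : (x - y) ^ 3 = x ^ 3 - y ^ 3 := by
    linear_combination (x * y ^ 2 - x ^ 2 * y) * h3
  have hd3 : x ^ 3 - y ^ 3 ≠ 0 := by rw [← hcube]; exact pow_ne_zero _ hd
  have hXY : (x - y) ^ α = x ^ α - y ^ α := hsub x y
  have hDm : x ^ α - y ^ α ≠ 0 := by rw [← hXY]; exact pow_ne_zero _ hd
  set X := x ^ α with hXdef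
  set Y := y ^ α with hYdef
  set A := a ^ α with hAdef
  have hexp : ∀ z : F, z ^ (2*α+3) = (z ^ α) ^ 2 * z ^ 3 := by
    intro z
    rw [show 2*α+3 = α*2+3 by ring, pow_add, pow_mul]
  have hfxy' : X ^ 2 * x ^ 3 + A * X - a ^ 2 * x = Y ^ 2 * y ^ 3 + A * Y - a ^ 2 * y := by
    rw [hexp, hexp] at hfxy
    linear_combination hfxy
  set t := (X + Y) / (X - Y) with htdef
  set u := a / ((x - y) * (X - Y)) with hudef
  have hXa : X ^ α = x ^ 3 := hsig x
  have hYa : Y ^ α = y ^ 3 := hsig y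
  have htpow : t ^ α = (x ^ 3 + y ^ 3) / (x ^ 3 - y ^ 3) := by
    rw [htdef, div_pow, hadd, hsub, hXa, hYa]
  have hupow : u ^ α = A / ((X - Y) * (x ^ 3 - y ^ 3)) := by
    rw [hudef, div_pow, mul_pow, hXY, hsub, hXa, hYa, hAdef]
  have hN : (x - y) ^ 2 * (X - Y) ^ 2 * (x ^ 3 - y ^ 3) ≠ 0 :=
    mul_ne_zero (mul_ne_zero (pow_ne_zero _ hd) (pow_ne_zero _ hDm)) hd3
  have e1 : u ^ 2 * ((x - y) ^ 2 * (X - Y) ^ 2 * (x ^ 3 - y ^ 3)) = a ^ 2 * (x ^ 3 - y ^ 3) := by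
    rw [hudef]
    field_simp
  have e2 : u ^ α * ((x - y) ^ 2 * (X - Y) ^ 2 * (x ^ 3 - y ^ 3))
      = A * (x - y) ^ 2 * (X - Y) := by
    rw [hupow]
    field_simp
  have e3 : t ^ 2 * ((x - y) ^ 2 * (X - Y) ^ 2 * (x ^ 3 - y ^ 3))
      = (X + Y) ^ 2 * (x - y) ^ 2 * (x ^ 3 - y ^ 3) := by
    rw [htdef]
    field_simp
  have e4 : (t * t ^ α) * ((x - y) ^ 2 * (X - Y) ^ 2 * (x ^ 3 - y ^ 3))
      = (X + Y) * (x ^ 3 + y ^ 3) * (x - y) ^ 2 * (X - Y) := by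
    rw [htdef, htpow]
    field_simp
  have hmain : (u ^ 2 - u ^ α - t ^ 2 + t * t ^ α - 1)
      * ((x - y) ^ 2 * (X - Y) ^ 2 * (x ^ 3 - y ^ 3)) = 0 := by
    linear_combination e1 - e2 - e3 + e4 - (x - y) ^ 2 * hfxy'
      + (y^5*X^2 - x*y^2*a^2 - 2*x*y^4*X^2 + x^2*y*a^2 + x^2*y^3*X^2 - x^3*y^2*Y^2
        + 2*x^4*y*Y^2 - x^5*Y^2) * h3
  have hQ0 : u ^ 2 - u ^ α - t ^ 2 + t * t ^ α - 1 = 0 :=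
    (mul_eq_zero.mp hmain).resolve_right hN
  exact reeTits_key α h3 hα hodd hadd hsig t u hQ0


theorem reeTits_skew_set {F : Type*} [Field F] [Fintype F] (h : ℕ)
    (hcard : Fintype.card F = 3 ^ (2 * h + 1)) (a : F) (ha : a ≠ 0) :
    let α := 3 ^ (h + 1)
    let f : F → F := fun x => x ^ (2 * α + 3) + a ^ α * x ^ α - a ^ 2 * x
    let D : Set F := {y | ∃ x : F, x ≠ 0 ∧ y = f (x ^ 2)}
    D ∩ (-D) = ∅ ∧ D ∪ (-D) ∪ {0} = Set.univ := by
  classical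
  intro α f D
  obtain ⟨p, hp⟩ := CharP.exists F
  obtain ⟨n, hprime, hcard'⟩ := FiniteField.card F p
  have hp3 : p = 3 := by
    have hdvd : p ∣ 3 ^ (2 * h + 1) := by
      rw [← hcard, hcard']
      exact dvd_pow_self p n.pos.ne'
    exact (Nat.prime_dvd_prime_iff_eq hprime (by norm_num)).mp
      (hprime.dvd_of_dvd_pow hdvd)
  subst hp3
  haveI : Fact (Nat.Prime 3) := ⟨by norm_num⟩
  have h3 : (3 : F) = 0 := CharP.cast_eq_zero F 3
  have hαpos : 0 < α := by show 0 < 3 ^ (h + 1); positivity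
  have hα : α ≠ 0 := hαpos.ne'
  have hodd : Odd α := Odd.pow (by decide)
  have hadd : ∀ z w : F, (z + w) ^ α = z ^ α + w ^ α := fun z w =>
    add_pow_char_pow z w 3 (h + 1)
  have hsig : ∀ z : F, (z ^ α) ^ α = z ^ 3 := by
    intro z
    rw [← pow_mul]
    have hme : α * α = 3 ^ (2 * h + 1) * 3 := by
      show 3 ^ (h + 1) * 3 ^ (h + 1) = 3 ^ (2 * h + 1) * 3
      rw [← pow_add, ← pow_succ]
      congr 1
      omega
    rw [hme, pow_mul, ← hcard, FiniteField.pow_card]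
  have hf0 : f 0 = 0 := by
    show (0 : F) ^ (2 * α + 3) + a ^ α * 0 ^ α - a ^ 2 * 0 = 0
    rw [zero_pow (by omega), zero_pow hα]
    ring
  have hfodd : ∀ z : F, f (-z) = - f z := by
    intro z
    show (-z) ^ (2 * α + 3) + a ^ α * (-z) ^ α - a ^ 2 * (-z)
        = -(z ^ (2 * α + 3) + a ^ α * z ^ α - a ^ 2 * z)
    have h1 : Odd (2 * α + 3) := ⟨α + 1, by ring⟩
    rw [h1.neg_pow, hodd.neg_pow]
    ring
  have hinj : Function.Injective f := by
    intro x y hxy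
    exact reeTits_inj α h3 hα hodd hadd hsig a hxy
  have hsurj : Function.Surjective f := Finite.surjective_of_injective hinj
  have hcard4 : Fintype.card F % 4 = 3 := by
    rw [hcard]
    have h9 : (9 : ℕ) ^ h % 4 = 1 := by
      rw [Nat.pow_mod]
      norm_num
    have h39 : (3 : ℕ) ^ (2 * h + 1) = 3 * 9 ^ h := by
      rw [show (9 : ℕ) = 3 ^ 2 by norm_num, ← pow_mul]
      rw [← pow_succ']
    rw [h39, Nat.mul_mod, h9]
  have hm1 : ¬ IsSquare (-1 : F) := by
    intro hsq
    exact (FiniteField.isSquare_neg_one_iff.mp hsq) hcard4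
  have hsq_or : ∀ z : F, z ≠ 0 → ¬ IsSquare z → IsSquare (-z) := by
    intro z hz hnsq
    have h1 : quadraticChar F z = -1 := quadraticChar_neg_one_iff_not_isSquare.mpr hnsq
    have h2 : quadraticChar F (-1 : F) = -1 := quadraticChar_neg_one_iff_not_isSquare.mpr hm1
    have h3q : quadraticChar F (-z) = 1 := by
      rw [show (-z : F) = (-1) * z by ring, map_mul, h1, h2]
      norm_num
    exact (quadraticChar_one_iff_isSquare (neg_ne_zero.mpr hz)).mp h3q
  constructor
  · ext c
    simp only [Set.mem_inter_iff, Set.mem_empty_iff_false, iff_false, not_and]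
    intro hcD hcnD
    obtain ⟨x, hx, hcx⟩ := hcD
    rw [Set.mem_neg] at hcnD
    obtain ⟨y, hy, hcy⟩ := hcnD
    have hfe : f (x ^ 2) = f (-(y ^ 2)) := by
      rw [hfodd, ← hcy, hcx, neg_neg]
    have hxy := hinj hfe
    have hy0 : y ≠ 0 := hy
    have hsqm1 : IsSquare (-1 : F) := by
      refine ⟨x * y⁻¹, ?_⟩
      field_simp
      linear_combination -hxy
    exact hm1 hsqm1
  · ext c
    simp only [Set.mem_union, Set.mem_singleton_iff, Set.mem_univ, iff_true]
    obtain ⟨z, hz⟩ := hsurj c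
    by_cases hz0 : z = 0
    · right
      rw [← hz, hz0, hf0]
    by_cases hsq : IsSquare z
    · left; left
      obtain ⟨w, hw⟩ := hsq
      have hw0 : w ≠ 0 := by
        rintro rfl
        exact hz0 (by rw [hw, mul_zero])
      exact ⟨w, hw0, by rw [← hz, hw, ← pow_two]⟩
    · left; right
      obtain ⟨w, hw⟩ := hsq_or z hz0 hsq
      have hw0 : w ≠ 0 := by
        rintro rfl
        exact hz0 (neg_eq_zero.mp (hw.trans (mul_zero 0)))
      rw [Set.mem_neg]
      refine ⟨w, hw0, ?_⟩
      have hzw : z = -(w ^ 2) := by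
        have : -z = w ^ 2 := by rw [hw, pow_two]
        linear_combination -this
      rw [← hz, hzw, hfodd]
      ring
end

section
/- Let m be a positive odd integer and, for u ∈ F_{3^m}*, let DY(u) = {x^{10} − u x^6 − u² x² : x ∈ F_{3^m}*}. If u is a nonzero square in F_{3^m}, then DY(u) is equivalent to DY(1); if u is a nonsquare in F_{3^m}, then DY(u) is equivalent to DY(−1). (Here equivalence is as subsets of the additive group (F_{3^m}, +).) -/
/-- Two subsets `D₁`, `D₂` of an abelian group `G` are equivalent if there are a group
automorphism `σ` of `G` and `g ∈ G` with `σ(D₁) = D₂ + g`. -/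
def AreEquivalent {G : Type*} [AddCommGroup G] (D₁ D₂ : Set G) : Prop :=
  ∃ (σ : G ≃+ G) (g : G), (⇑σ) '' D₁ = (fun d => d + g) '' D₂

private def mulAddEquiv {F : Type*} [Field F] (c : F) (hc : c ≠ 0) : F ≃+ F where
  toFun := fun x => c * x
  invFun := fun x => c⁻¹ * x
  left_inv := fun x => by field_simp
  right_inv := fun x => by field_simp
  map_add' := mul_add c

private lemma dy_key {F : Type*} [Field F] (w c : F) (hc : c ≠ 0) :
    AreEquivalent {y : F | ∃ x : F, x ≠ 0 ∧ y = x ^ 10 - (w * c ^ 4) * x ^ 6 - (w * c ^ 4) ^ 2 * x ^ 2}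
      {y : F | ∃ x : F, x ≠ 0 ∧ y = x ^ 10 - w * x ^ 6 - w ^ 2 * x ^ 2} := by
  have hc10 : (c : F) ⁻¹ ^ 10 ≠ 0 := pow_ne_zero _ (inv_ne_zero hc)
  refine ⟨mulAddEquiv (c⁻¹ ^ 10) hc10, 0, ?_⟩
  ext y
  simp only [Set.mem_image, Set.mem_setOf_eq, add_zero, mulAddEquiv, AddEquiv.coe_mk,
    Equiv.coe_fn_mk]
  constructor
  · rintro ⟨_, ⟨x, hx, rfl⟩, rfl⟩
    have h1 : c⁻¹ * x ≠ 0 := mul_ne_zero (inv_ne_zero hc) hx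
    have h2 : c⁻¹ ^ 10 * (x ^ 10 - w * c ^ 4 * x ^ 6 - (w * c ^ 4) ^ 2 * x ^ 2)
        = (c⁻¹ * x) ^ 10 - w * (c⁻¹ * x) ^ 6 - w ^ 2 * (c⁻¹ * x) ^ 2 := by
      field_simp
    exact ⟨_, ⟨c⁻¹ * x, h1, rfl⟩, h2.symm⟩
  · rintro ⟨_, ⟨x, hx, rfl⟩, rfl⟩
    have h1 : c * x ≠ 0 := mul_ne_zero hc hx
    have h2 : c⁻¹ ^ 10 * ((c * x) ^ 10 - w * c ^ 4 * (c * x) ^ 6 - (w * c ^ 4) ^ 2 * (c * x) ^ 2)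
        = x ^ 10 - w * x ^ 6 - w ^ 2 * x ^ 2 := by
      field_simp
    exact ⟨_, ⟨c * x, h1, rfl⟩, h2⟩

theorem dingYuan_equivalence {F : Type*} [Field F] [Fintype F] (m : ℕ) (hm : Odd m)
    (hcard : Fintype.card F = 3 ^ m) (u : F) (hu : u ≠ 0) :
    let DY : F → Set F := fun w => {y | ∃ x : F, x ≠ 0 ∧ y = x ^ 10 - w * x ^ 6 - w ^ 2 * x ^ 2}
    (IsSquare u → AreEquivalent (DY u) (DY 1)) ∧
    (¬ IsSquare u → AreEquivalent (DY u) (DY (-1))) := by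
  classical
  intro DY
  -- card F % 4 = 3
  obtain ⟨k, rfl⟩ := hm
  have h4 : Fintype.card F % 4 = 3 := by
    rw [hcard]
    have h9 : ∀ n : ℕ, 9 ^ n % 4 = 1 := by
      intro n
      rw [Nat.pow_mod]
      norm_num
    have : (3 : ℕ) ^ (2 * k + 1) = 3 * 9 ^ k := by
      rw [pow_succ, pow_mul]
      norm_num [mul_comm]
    rw [this, Nat.mul_mod, h9]
  have hn1 : ¬ IsSquare (-1 : F) := by
    rw [FiniteField.isSquare_neg_one_iff]
    simp [h4]
  -- product of nonsquares is a square
  have hmul : ∀ a b : F, a ≠ 0 → ¬ IsSquare a → ¬ IsSquare b → IsSquare (a * b) := by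
    intro a b ha hsa hsb
    have hb : b ≠ 0 := fun h => hsb (h ▸ IsSquare.zero)
    have h1 : quadraticChar F a = -1 := quadraticChar_neg_one_iff_not_isSquare.mpr hsa
    have h2 : quadraticChar F b = -1 := quadraticChar_neg_one_iff_not_isSquare.mpr hsb
    have : quadraticChar F (a * b) = 1 := by rw [map_mul, h1, h2]; ring
    exact (quadraticChar_one_iff_isSquare (mul_ne_zero ha hb)).mp this
  -- every nonzero square is a fourth power
  have hfourth : ∀ a : F, a ≠ 0 → IsSquare a → ∃ d : F, d ≠ 0 ∧ a = d ^ 4 := by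
    intro a ha ⟨b, hb⟩
    have hb0 : b ≠ 0 := by rintro rfl; simp at hb; exact ha hb
    by_cases hsb : IsSquare b
    · obtain ⟨e, he⟩ := hsb
      exact ⟨e, by rintro rfl; simp at he; exact hb0 he, by rw [hb, he]; ring⟩
    · obtain ⟨e, he⟩ := hmul (-1) b (by norm_num) hn1 hsb
      refine ⟨e, ?_, ?_⟩
      · rintro rfl; simp at he; exact hb0 he
      · rw [hb]
        have : b = -(e * e) := by linear_combination -he
        rw [this]; ring
  constructor
  · intro hsq
    obtain ⟨d, hd, hud⟩ := hfourth u hu hsq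
    have := dy_key (F := F) 1 d hd
    rw [one_mul] at this
    subst hud
    exact this
  · intro hns
    have hsq : IsSquare (-u) := by
      have := hmul (-1) u (by norm_num) hn1 hns
      simpa using this
    obtain ⟨d, hd, hud⟩ := hfourth (-u) (neg_ne_zero.mpr hu) hsq
    have key := dy_key (F := F) (-1) d hd
    have : u = -1 * d ^ 4 := by linear_combination -hud
    rw [this]
    exact key
end

section
/- Let q = 3^m with m = 2h+1 odd, α = 3^{h+1}, and for a ∈ F_q* let D_a = {f_a(x²) : x ∈ F_q*}, where f_a(x) = x^{2α+3} + a^α x^α − a² x. If a is a nonzero square in F_q, then D_a is equivalent to D_1; if a is a nonsquare in F_q, then D_a is equivalent to D_{−1}. -/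
def mulLeftAddEquiv {F : Type*} [Field F] (c : F) (hc : c ≠ 0) : F ≃+ F where
  toFun x := c * x
  invFun x := c⁻¹ * x
  left_inv x := by field_simp
  right_inv x := by field_simp
  map_add' x y := mul_add c x y

lemma comp_id {F : Type*} [Field F] (k : ℕ) (b u ε : F) (hb : b ≠ 0)
    (hb3 : b ^ ((2*k+1)*(2*k+1)) = b ^ 3) (hε : ε = 1 ∨ ε = -1) :
    ((b^k*u)^2)^(2*(2*k+1)+3) + (ε*b^2)^(2*k+1) * ((b^k*u)^2)^(2*k+1) - (ε*b^2)^2 * (b^k*u)^2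
      = b^((2*k+1)+3) * ((u^2)^(2*(2*k+1)+3) + ε^(2*k+1) * (u^2)^(2*k+1) - ε^2 * u^2) := by
  have hb3' : b ≠ 0 := hb
  apply mul_left_cancel₀ (pow_ne_zero 3 hb)
  have e1 : b ^ (3 + 2*k*(2*(2*k+1)+3)) = b ^ ((2*k+1)+6) := by
    have hx : 3 + 2*k*(2*(2*k+1)+3) = (2*k+1)*(2*k+1) + ((2*k+1)*(2*k+1) + (2*k+1)) := by ring
    have hy : (2*k+1)+6 = 3 + (3 + (2*k+1)) := by ring
    rw [hx, hy, pow_add, pow_add, pow_add, pow_add, hb3]; ring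
  have e2 : b ^ (3 + (2*(2*k+1) + 2*k*(2*k+1))) = b ^ ((2*k+1)+6) := by
    have hx : 3 + (2*(2*k+1) + 2*k*(2*k+1)) = (2*k+1)*(2*k+1) + (2*k+4) := by ring
    have hy : (2*k+1)+6 = 3 + (2*k+4) := by ring
    rw [hx, hy, pow_add, pow_add, hb3]; ring
  have e3 : b ^ (3 + (4 + 2*k)) = b ^ ((2*k+1)+6) := by ring_nf
  rcases hε with rfl | rfl
  · simp only [one_mul, one_pow]
    linear_combination (u^2)^(2*(2*k+1)+3) * e1 + (u^2)^(2*k+1) * e2 - (u^2) * e3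
  · have hodd : ((-1 : F))^(2*k+1) = -1 := Odd.neg_one_pow ⟨k, by ring⟩
    rw [neg_one_mul, hodd]
    have h1 : ((-(b^2)))^(2*k+1) = -((b^2)^(2*k+1)) := Odd.neg_pow ⟨k, by ring⟩ _
    rw [h1]
    simp only [neg_neg, neg_pow_two, neg_sq]
    linear_combination (u^2)^(2*(2*k+1)+3) * e1 - (u^2)^(2*k+1) * e2 - (u^2) * e3

lemma key_set {F : Type*} [Field F] (k : ℕ) (b ε : F) (hb : b ≠ 0)
    (hb3 : b ^ ((2*k+1)*(2*k+1)) = b ^ 3) (hε : ε = 1 ∨ ε = -1) :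
    {y : F | ∃ x : F, x ≠ 0 ∧
        y = (x^2)^(2*(2*k+1)+3) + (ε*b^2)^(2*k+1) * (x^2)^(2*k+1) - (ε*b^2)^2 * x^2}
      = (fun y => b^((2*k+1)+3) * y) ''
        {y : F | ∃ x : F, x ≠ 0 ∧
          y = (x^2)^(2*(2*k+1)+3) + ε^(2*k+1) * (x^2)^(2*k+1) - ε^2 * x^2} := by
  have hbk : (b^k : F) ≠ 0 := pow_ne_zero k hb
  ext y
  constructor
  · rintro ⟨x, hx, rfl⟩
    refine ⟨_, ⟨(b^k)⁻¹ * x, mul_ne_zero (inv_ne_zero hbk) hx, rfl⟩, ?_⟩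
    dsimp only
    rw [← comp_id k b ((b^k)⁻¹*x) ε hb hb3 hε, mul_inv_cancel_left₀ hbk]
  · rintro ⟨_, ⟨u, hu, rfl⟩, rfl⟩
    exact ⟨b^k * u, mul_ne_zero hbk hu, (comp_id k b u ε hb hb3 hε).symm⟩

theorem reeTits_equivalence {F : Type*} [Field F] [Fintype F] (h : ℕ)
    (hcard : Fintype.card F = 3 ^ (2 * h + 1)) (a : F) (ha : a ≠ 0) :
    let α := 3 ^ (h + 1)
    let D : F → Set F := fun w =>
      {y | ∃ x : F, x ≠ 0 ∧
        y = (x ^ 2) ^ (2 * α + 3) + w ^ α * (x ^ 2) ^ α - w ^ 2 * x ^ 2}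
    (IsSquare a → AreEquivalent (D a) (D 1)) ∧
    (¬ IsSquare a → AreEquivalent (D a) (D (-1))) := by
  classical
  intro α D
  obtain ⟨k, hk⟩ : ∃ k : ℕ, (3:ℕ)^(h+1) = 2*k+1 := Odd.pow (by decide)
  have hb3 : ∀ b : F, b ^ ((2*k+1)*(2*k+1)) = b ^ 3 := by
    intro b
    have h1 : (2*k+1)*(2*k+1) = 3^(2*h+1) * 3 := by
      rw [← hk, ← pow_add]
      ring
    rw [h1, pow_mul, ← hcard, FiniteField.pow_card]
  have hD : ∀ w : F, D w = {y : F | ∃ x : F, x ≠ 0 ∧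
      y = (x^2)^(2*(2*k+1)+3) + w^(2*k+1) * (x^2)^(2*k+1) - w^2 * x^2} := by
    intro w
    have h0 : D w = {y : F | ∃ x : F, x ≠ 0 ∧
        y = (x^2)^(2*3^(h+1)+3) + w^(3^(h+1)) * (x^2)^(3^(h+1)) - w^2 * x^2} := rfl
    rw [h0, hk]
  have main : ∀ ε b : F, b ≠ 0 → (ε = 1 ∨ ε = -1) → AreEquivalent (D (ε*b^2)) (D ε) := by
    intro ε b hb hε
    have hμ : (b^((2*k+1)+3) : F) ≠ 0 := pow_ne_zero _ hb
    refine ⟨mulLeftAddEquiv (b^((2*k+1)+3))⁻¹ (inv_ne_zero hμ), 0, ?_⟩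
    rw [hD, hD, key_set k b ε hb (hb3 b) hε]
    have hσ : ∀ y : F,
        (mulLeftAddEquiv (b^((2*k+1)+3))⁻¹ (inv_ne_zero hμ)) ((b^((2*k+1)+3)) * y) = y := by
      intro y
      simp [mulLeftAddEquiv, inv_mul_cancel_left₀ hμ]
    simp only [Set.image_image, hσ, add_zero, Set.image_id']
  constructor
  · intro hsq
    obtain ⟨b, rfl⟩ := hsq
    have hb : b ≠ 0 := fun hb0 => ha (by rw [hb0, mul_zero])
    have hrw : b * b = (1:F) * b^2 := by ring
    rw [hrw]
    exact main 1 b hb (Or.inl rfl)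
  · intro hns
    have h4 : Fintype.card F % 4 = 3 := by
      rw [hcard, pow_succ, pow_mul, Nat.mul_mod, Nat.pow_mod]
      norm_num
    have hm1 : ¬ IsSquare (-1 : F) := fun hsq =>
      (FiniteField.isSquare_neg_one_iff.mp hsq) h4
    have hnegs : IsSquare (-a) := by
      have hq1 : quadraticChar F (-1) = -1 := quadraticChar_neg_one_iff_not_isSquare.mpr hm1
      have hqa : quadraticChar F a = -1 := quadraticChar_neg_one_iff_not_isSquare.mpr hns
      have hq : quadraticChar F (-a) = 1 := by
        rw [show (-a : F) = -1 * a by ring, map_mul, hq1, hqa]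
        ring
      exact (quadraticChar_one_iff_isSquare (neg_ne_zero.mpr ha)).mp hq
    obtain ⟨c, hc⟩ := hnegs
    have hc0 : c ≠ 0 := by
      rintro rfl
      exact ha (by simpa using hc.symm)
    have hrw : a = (-1:F) * c^2 := by
      rw [show (c:F)^2 = c*c from sq c, ← hc]
      ring
    rw [hrw]
    exact main (-1) c hc0 (Or.inr rfl)
end

section
/- Let q and q+2 both be odd prime powers. Then the set D = {(x,y) : x ∈ F_q*, y ∈ F_{q+2}*, x and y are both nonzero squares or both nonsquares in their respective fields} ∪ {(x,0) : x ∈ F_q} is a (4n−1, 2n−1, n−1) difference set in the additive group (F_q, +) × (F_{q+2}, +), where n = (q+1)²/4. -/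
open Finset

section Helpers

variable {F : Type*} [Field F] [Fintype F] [DecidableEq F]

lemma sum_shift (f : F → ℤ) (a : F) : ∑ x : F, f (x + a) = ∑ x : F, f x :=
  Fintype.sum_equiv (Equiv.addRight a) _ _ (fun _ => rfl)

lemma chiShiftZero (hF : ringChar F ≠ 2) (a : F) :
    ∑ x : F, quadraticChar F (x + a) = 0 := by
  rw [sum_shift (fun x => quadraticChar F x) a]
  exact quadraticChar_sum_zero hF

lemma sum_chiSq : ∑ x : F, (quadraticChar F x) ^ 2 = (Fintype.card F : ℤ) - 1 := by
  have h : ∀ x : F, (quadraticChar F x) ^ 2 = 1 - (if x = 0 then 1 else 0) := by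
    intro x
    by_cases hx : x = 0
    · simp [hx, quadraticChar_zero]
    · rw [quadraticChar_sq_one hx, if_neg hx, sub_zero]
  rw [Finset.sum_congr rfl fun x _ => h x, Finset.sum_sub_distrib,
    Finset.sum_ite_eq' univ (0 : F) (fun _ => (1 : ℤ))]
  simp [Finset.card_univ]

lemma sum_chiSq_shift (a : F) :
    ∑ x : F, (quadraticChar F (x + a)) ^ 2 = (Fintype.card F : ℤ) - 1 := by
  rw [sum_shift (fun x => (quadraticChar F x) ^ 2) a]
  exact sum_chiSq

lemma sum_chi_mul_chi (hF : ringChar F ≠ 2) {a : F} (ha : a ≠ 0) :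
    ∑ x : F, quadraticChar F x * quadraticChar F (x + a) = -1 := by
  have key : ∀ x : F, x ≠ 0 →
      quadraticChar F x * quadraticChar F (x + a) = quadraticChar F (1 + a * x⁻¹) := by
    intro x hx
    have hxa : x + a = x * (1 + a * x⁻¹) := by field_simp
    rw [hxa, map_mul, ← mul_assoc, ← sq, quadraticChar_sq_one hx, one_mul]
  rw [Fintype.sum_eq_sum_compl_add (0 : F), quadraticChar_zero, zero_mul, add_zero,
    Finset.sum_congr rfl fun x hx => key x (by simpa using hx)]
  have h2 : ∑ x ∈ ({(0 : F)}ᶜ : Finset F), quadraticChar F (1 + a * x⁻¹)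
      = ∑ z ∈ ({(1 : F)}ᶜ : Finset F), quadraticChar F z := by
    refine Finset.sum_nbij' (fun x => 1 + a * x⁻¹) (fun z => a * (z - 1)⁻¹) ?_ ?_ ?_ ?_ ?_
    · intro x hx
      simp only [Finset.mem_compl, Finset.mem_singleton] at hx ⊢
      intro h
      exact (mul_ne_zero ha (inv_ne_zero hx)) (add_eq_left.mp h)
    · intro z hz
      simp only [Finset.mem_compl, Finset.mem_singleton] at hz ⊢
      exact mul_ne_zero ha (inv_ne_zero (sub_ne_zero.mpr hz))
    · intro x hx
      simp only [Finset.mem_compl, Finset.mem_singleton] at hx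
      field_simp
      rw [add_sub_cancel_left, div_self ha]
    · intro z hz
      simp only [Finset.mem_compl, Finset.mem_singleton] at hz
      have h1 : z - 1 ≠ 0 := sub_ne_zero.mpr hz
      field_simp
      ring
    · intro x _
      rfl
  rw [h2]
  have h3 := Fintype.sum_eq_sum_compl_add (1 : F) (fun z => quadraticChar F z)
  rw [quadraticChar_sum_zero hF] at h3
  have h4 : quadraticChar F 1 = 1 := map_one _
  rw [h4] at h3
  linarith

lemma sum_chiSq_mul_chi (hF : ringChar F ≠ 2) (a : F) :
    ∑ x : F, (quadraticChar F x) ^ 2 * quadraticChar F (x + a) = -quadraticChar F a := by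
  have h : ∀ x : F, (quadraticChar F x) ^ 2 * quadraticChar F (x + a)
      = quadraticChar F (x + a) - (if x = 0 then quadraticChar F a else 0) := by
    intro x
    by_cases hx : x = 0
    · simp [hx, quadraticChar_zero]
    · rw [quadraticChar_sq_one hx, one_mul, if_neg hx, sub_zero]
  rw [Finset.sum_congr rfl fun x _ => h x, Finset.sum_sub_distrib, chiShiftZero hF,
    Finset.sum_ite_eq' univ (0 : F) (fun _ => quadraticChar F a)]
  simp

lemma sum_chi_mul_chiSq (hF : ringChar F ≠ 2) (a : F) :
    ∑ x : F, quadraticChar F x * (quadraticChar F (x + a)) ^ 2 = -quadraticChar F (-a) := by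
  have h : ∀ x : F, quadraticChar F x * (quadraticChar F (x + a)) ^ 2
      = quadraticChar F x - (if x = -a then quadraticChar F (-a) else 0) := by
    intro x
    by_cases hx : x = -a
    · subst hx
      simp [quadraticChar_zero]
    · have hxa : x + a ≠ 0 := fun h' => hx (by linear_combination h')
      rw [quadraticChar_sq_one hxa, mul_one, if_neg hx, sub_zero]
  rw [Finset.sum_congr rfl fun x _ => h x, Finset.sum_sub_distrib, quadraticChar_sum_zero hF,
    Finset.sum_ite_eq' univ (-a : F) (fun _ => quadraticChar F (-a))]
  simp

lemma sum_chiSq_mul_chiSq {a : F} (ha : a ≠ 0) :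
    ∑ x : F, (quadraticChar F x) ^ 2 * (quadraticChar F (x + a)) ^ 2
      = (Fintype.card F : ℤ) - 2 := by
  have h : ∀ x : F, (quadraticChar F x) ^ 2 * (quadraticChar F (x + a)) ^ 2
      = 1 - (if x = 0 then 1 else 0) - (if x = -a then 1 else 0) := by
    intro x
    by_cases hx : x = 0
    · have hne : x ≠ -a := by
        rw [hx]
        intro h'
        exact ha (neg_eq_zero.mp h'.symm)
      rw [if_pos hx, if_neg hne, hx, quadraticChar_zero]
      ring
    · by_cases hxa : x = -a
      · rw [if_neg hx, if_pos hxa, hxa, neg_add_cancel, quadraticChar_zero]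
        ring
      · have h2 : x + a ≠ 0 := fun h' => hxa (by linear_combination h')
        rw [quadraticChar_sq_one hx, quadraticChar_sq_one h2, if_neg hx, if_neg hxa]
        ring
  rw [Finset.sum_congr rfl fun x _ => h x, Finset.sum_sub_distrib, Finset.sum_sub_distrib,
    Finset.sum_ite_eq' univ (0 : F) (fun _ => (1 : ℤ)),
    Finset.sum_ite_eq' univ (-a : F) (fun _ => (1 : ℤ))]
  simp [Finset.card_univ]
  ring

lemma sum_w_mul (h : F → ℤ) (b : F) :
    ∑ y : F, (if y = 0 then (2 : ℤ) else 0) * h (y + b) = 2 * h b := by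
  have key : ∀ y : F, (if y = 0 then (2 : ℤ) else 0) * h (y + b)
      = if y = 0 then 2 * h b else 0 := by
    intro y
    by_cases hy : y = 0 <;> simp [hy]
  rw [Finset.sum_congr rfl fun y _ => key y,
    Finset.sum_ite_eq' univ (0 : F) (fun _ => 2 * h b)]
  simp

lemma sum_mul_w (h : F → ℤ) (b : F) :
    ∑ y : F, h y * (if y + b = 0 then (2 : ℤ) else 0) = 2 * h (-b) := by
  have key : ∀ y : F, h y * (if y + b = 0 then (2 : ℤ) else 0)
      = if y = -b then 2 * h (-b) else 0 := by
    intro y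
    by_cases hy : y = -b
    · subst hy
      simp [mul_comm]
    · have : y + b ≠ 0 := fun h' => hy (by linear_combination h')
      simp [hy, this]
  rw [Finset.sum_congr rfl fun y _ => key y,
    Finset.sum_ite_eq' univ (-b : F) (fun _ => 2 * h (-b))]
  simp

lemma sum_w_w {b : F} (hb : b ≠ 0) :
    ∑ y : F, (if y = 0 then (2 : ℤ) else 0) * (if y + b = 0 then (2 : ℤ) else 0) = 0 := by
  refine Finset.sum_eq_zero fun y _ => ?_
  by_cases hy : y = 0
  · have : y + b ≠ 0 := by simp [hy, hb]
    simp [this]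
  · simp [hy]

lemma factor3 {K L : Type*} [Fintype K] [Fintype L]
    (u u' : Fin 3 → K → ℤ) (v v' : Fin 3 → L → ℤ) :
    ∑ x : K, ∑ y : L, (∑ i, u i x * v i y) * (∑ j, u' j x * v' j y)
      = ∑ i, ∑ j, (∑ x : K, u i x * u' j x) * (∑ y : L, v i y * v' j y) := by
  have h1 : ∀ x : K, ∑ y : L, (∑ i, u i x * v i y) * (∑ j, u' j x * v' j y)
      = ∑ i, ∑ j, (u i x * u' j x) * ∑ y : L, v i y * v' j y := by
    intro x
    calc ∑ y : L, (∑ i, u i x * v i y) * (∑ j, u' j x * v' j y)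
        = ∑ y : L, ∑ i, ∑ j, (u i x * v i y) * (u' j x * v' j y) := by
          exact Finset.sum_congr rfl fun y _ => Finset.sum_mul_sum _ _ _ _
      _ = ∑ i, ∑ j, ∑ y : L, (u i x * v i y) * (u' j x * v' j y) := by
          rw [Finset.sum_comm]
          exact Finset.sum_congr rfl fun i _ => Finset.sum_comm
      _ = ∑ i, ∑ j, (u i x * u' j x) * ∑ y : L, v i y * v' j y := by
          refine Finset.sum_congr rfl fun i _ => Finset.sum_congr rfl fun j _ => ?_
          rw [Finset.mul_sum]
          exact Finset.sum_congr rfl fun y _ => by ring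
  rw [Finset.sum_congr rfl fun x _ => h1 x, Finset.sum_comm]
  refine Finset.sum_congr rfl fun i _ => ?_
  rw [Finset.sum_comm]
  refine Finset.sum_congr rfl fun j _ => ?_
  rw [← Finset.sum_mul]

end Helpers
section NegOne

lemma chi_neg_one_prod {K L : Type*} [Field K] [Field L] [Fintype K] [Fintype L]
    [DecidableEq K] [DecidableEq L] (q : ℕ) (hq : Fintype.card K = q)
    (hq2 : Fintype.card L = q + 2) (hodd : Odd q)
    (hK : ringChar K ≠ 2) (hL : ringChar L ≠ 2) :
    quadraticChar K (-1) * quadraticChar L (-1) = -1 := by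
  rw [quadraticChar_neg_one hK, quadraticChar_neg_one hL, hq, hq2,
    ZMod.χ₄_nat_eq_if_mod_four, ZMod.χ₄_nat_eq_if_mod_four]
  have h2 : q % 2 = 1 := Nat.odd_iff.mp hodd
  have h4 : q % 4 = 1 ∨ q % 4 = 3 := by omega
  rcases h4 with h | h
  · rw [if_neg (by omega), if_pos h, if_neg (by omega), if_neg (by omega)]
    norm_num
  · rw [if_neg (by omega), if_neg (by omega), if_neg (by omega), if_pos (by omega)]
    norm_num

end NegOne
/-- `D` is a `(v,k,λ)` difference set in the finite abelian group `G`. -/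
def IsDiffSet {G : Type*} [AddCommGroup G] (D : Set G) (v k l : ℕ) : Prop :=
  Nat.card G = v ∧ Nat.card D = k ∧
    ∀ g : G, g ≠ 0 → Nat.card {p : G × G | p.1 ∈ D ∧ p.2 ∈ D ∧ p.1 - p.2 = g} = l

theorem twin_prime_power_diffSet {K L : Type*} [Field K] [Field L] [Fintype K] [Fintype L]
    (q : ℕ) (hq : Fintype.card K = q) (hq2 : Fintype.card L = q + 2) (hodd : Odd q) :
    let n := (q + 1) ^ 2 / 4
    let D : Set (K × L) :=
      {p | (p.1 ≠ 0 ∧ p.2 ≠ 0 ∧ (IsSquare p.1 ↔ IsSquare p.2)) ∨ p.2 = 0}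
    IsDiffSet D (4 * n - 1) (2 * n - 1) (n - 1) := by
  classical
  intro n D
  have hK2 : ringChar K ≠ 2 := by
    intro h
    have h2 := FiniteField.even_card_iff_char_two.mp h
    have h3 := Nat.odd_iff.mp hodd
    rw [hq] at h2
    omega
  have hL2 : ringChar L ≠ 2 := by
    intro h
    have h2 := FiniteField.even_card_iff_char_two.mp h
    have h3 := Nat.odd_iff.mp hodd
    rw [hq2] at h2
    omega
  obtain ⟨k, hk⟩ := hodd
  have hn : n = (k + 1) ^ 2 := by
    show (q + 1) ^ 2 / 4 = (k + 1) ^ 2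
    have h1 : (q + 1) ^ 2 = 4 * (k + 1) ^ 2 := by rw [hk]; ring
    rw [h1]
    exact Nat.mul_div_cancel_left _ (by norm_num)
  have hcK : (Fintype.card K : ℤ) = (q : ℤ) := by exact_mod_cast congrArg (Nat.cast (R := ℤ)) hq
  have hcL : (Fintype.card L : ℤ) = (q : ℤ) + 2 := by
    rw [hq2]; push_cast; ring
  set u : Fin 3 → K → ℤ :=
    ![fun _ => 1, fun x => quadraticChar K x, fun x => (quadraticChar K x) ^ 2] with hu
  set v : Fin 3 → L → ℤ :=
    ![fun y => if y = 0 then 2 else 0, fun y => quadraticChar L y,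
      fun y => (quadraticChar L y) ^ 2] with hv
  have hDm : ∀ z : K × L, z ∈ D ↔ ((z.1 ≠ 0 ∧ z.2 ≠ 0 ∧ (IsSquare z.1 ↔ IsSquare z.2)) ∨ z.2 = 0) :=
    fun z => Iff.rfl
  -- indicator identity
  have hind : ∀ z : K × L, (if z ∈ D then (2 : ℤ) else 0) = ∑ i, u i z.1 * v i z.2 := by
    rintro ⟨x, y⟩
    rw [Fin.sum_univ_three]
    simp only [hu, hv, Matrix.cons_val_zero, Matrix.cons_val_one, Matrix.head_cons,
      Matrix.cons_val_two, Matrix.tail_cons, hDm]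
    by_cases hy : y = 0
    · rw [if_pos (Or.inr hy), if_pos hy, hy, quadraticChar_zero]
      ring
    · by_cases hx : x = 0
      · rw [if_neg (by
          rintro (⟨h1, -, -⟩ | h2)
          · exact h1 hx
          · exact hy h2), if_neg hy, hx, quadraticChar_zero]
        ring
      · rw [if_neg hy]
        have e1 : quadraticChar K x = 1 ↔ IsSquare x := quadraticChar_one_iff_isSquare hx
        have e1' : quadraticChar K x = -1 ↔ ¬IsSquare x := quadraticChar_neg_one_iff_not_isSquare
        have e2 : quadraticChar L y = 1 ↔ IsSquare y := quadraticChar_one_iff_isSquare hy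
        have e2' : quadraticChar L y = -1 ↔ ¬IsSquare y := quadraticChar_neg_one_iff_not_isSquare
        rcases quadraticChar_dichotomy (F := K) hx with h1 | h1 <;>
          rcases quadraticChar_dichotomy (F := L) hy with h2 | h2
        · rw [if_pos (Or.inl ⟨hx, hy, by rw [← e1, ← e2, h1, h2]⟩), h1, h2]
          ring
        · rw [if_neg (by
            rintro (⟨-, -, hiff⟩ | h)
            · exact (e2'.mp h2) (hiff.mp (e1.mp h1))
            · exact hy h), h1, h2]
          ring
        · rw [if_neg (by
            rintro (⟨-, -, hiff⟩ | h)
            · exact (e1'.mp h1) (hiff.mpr (e2.mp h2))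
            · exact hy h), h1, h2]
          ring
        · rw [if_pos (Or.inl ⟨hx, hy, iff_of_false (e1'.mp h1) (e2'.mp h2)⟩), h1, h2]
          ring
  -- master counting identity
  have master : ∀ (a : K) (b : L),
      4 * (((univ.filter fun z : K × L => z ∈ D ∧ z + (a, b) ∈ D)).card : ℤ)
        = ∑ i, ∑ j, (∑ x : K, u i x * u j (x + a)) * (∑ y : L, v i y * v j (y + b)) := by
    intro a b
    have step1 : (((univ.filter fun z : K × L => z ∈ D ∧ z + (a, b) ∈ D)).card : ℤ)
        = ∑ z : K × L, if z ∈ D ∧ z + (a, b) ∈ D then (1 : ℤ) else 0 := by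
      rw [Finset.card_filter]
      push_cast
      rfl
    have step2 : ∀ z : K × L,
        4 * (if z ∈ D ∧ z + (a, b) ∈ D then (1 : ℤ) else 0)
          = (∑ i, u i z.1 * v i z.2) * (∑ j, u j (z.1 + a) * v j (z.2 + b)) := by
      intro z
      have h2 : (if z + (a, b) ∈ D then (2 : ℤ) else 0)
          = ∑ i, u i (z.1 + a) * v i (z.2 + b) := hind (z + (a, b))
      rw [← hind z, ← h2]
      by_cases h3 : z ∈ D <;> by_cases h4 : z + (a, b) ∈ D <;> simp [h3, h4]
    calc 4 * (((univ.filter fun z : K × L => z ∈ D ∧ z + (a, b) ∈ D)).card : ℤ)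
        = ∑ z : K × L, 4 * (if z ∈ D ∧ z + (a, b) ∈ D then (1 : ℤ) else 0) := by
          rw [step1, Finset.mul_sum]
      _ = ∑ z : K × L, (∑ i, u i z.1 * v i z.2) * (∑ j, u j (z.1 + a) * v j (z.2 + b)) :=
          Finset.sum_congr rfl fun z _ => step2 z
      _ = ∑ x : K, ∑ y : L, (∑ i, u i x * v i y) * (∑ j, u j (x + a) * v j (y + b)) :=
          Fintype.sum_prod_type _
      _ = _ := factor3 u (fun j x => u j (x + a)) v (fun j y => v j (y + b))
  -- evaluation of the character sums
  have eval : ∀ (a : K) (b : L), ¬(a = 0 ∧ b = 0) →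
      (∑ i, ∑ j, (∑ x : K, u i x * u j (x + a)) * (∑ y : L, v i y * v j (y + b)))
        = (q : ℤ) ^ 2 + 2 * q - 3 := by
    intro a b hab
    simp only [Fin.sum_univ_three, hu, hv, Matrix.cons_val_zero, Matrix.cons_val_one,
      Matrix.head_cons, Matrix.cons_val_two, Matrix.tail_cons, one_mul, mul_one]
    have hA : (∑ _x : K, (1 : ℤ)) = (q : ℤ) := by
      simp [Finset.card_univ, hq]
    by_cases hb : b = 0
    · -- b = 0, a ≠ 0
      subst hb
      have ha : a ≠ 0 := fun h => hab ⟨h, rfl⟩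
      have hww : ∑ y : L, (if y = 0 then (2 : ℤ) else 0) * (if y + 0 = 0 then (2 : ℤ) else 0)
          = 4 := by
        have h : ∀ y : L, (if y = 0 then (2 : ℤ) else 0) * (if y + 0 = 0 then (2 : ℤ) else 0)
            = if y = 0 then 4 else 0 := by
          intro y
          by_cases hy : y = 0 <;> simp [hy]
        rw [Finset.sum_congr rfl fun y _ => h y,
          Finset.sum_ite_eq' univ (0 : L) (fun _ => (4 : ℤ))]
        simp
      have hVL : ∑ y : L, quadraticChar L y * quadraticChar L (y + 0) = (q : ℤ) + 1 := by
        have h : ∀ y : L, quadraticChar L y * quadraticChar L (y + 0)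
            = (quadraticChar L y) ^ 2 := by
          intro y
          rw [add_zero, sq]
        rw [Finset.sum_congr rfl fun y _ => h y, sum_chiSq, hcL]
        ring
      have hIL : ∑ y : L, (quadraticChar L y) ^ 2 * (quadraticChar L (y + 0)) ^ 2
          = (q : ℤ) + 1 := by
        have h : ∀ y : L, (quadraticChar L y) ^ 2 * (quadraticChar L (y + 0)) ^ 2
            = (quadraticChar L y) ^ 2 := by
          intro y
          rw [add_zero]
          by_cases hy : y = 0
          · simp [hy, quadraticChar_zero]
          · rw [quadraticChar_sq_one hy]
            ring
        rw [Finset.sum_congr rfl fun y _ => h y, sum_chiSq, hcL]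
        ring
      rw [hA, hww, hVL, hIL, sum_w_mul (fun t => quadraticChar L t) 0,
        sum_w_mul (fun t => (quadraticChar L t) ^ 2) 0,
        sum_mul_w (fun t => quadraticChar L t) 0,
        sum_mul_w (fun t => (quadraticChar L t) ^ 2) 0,
        sum_chi_mul_chiSq hL2 0, sum_chiSq_mul_chi hL2 0,
        sum_chi_mul_chi hK2 ha, sum_chiSq_mul_chiSq ha,
        sum_chi_mul_chiSq hK2 a, sum_chiSq_mul_chi hK2 a,
        chiShiftZero hK2 a, sum_chiSq_shift a, quadraticChar_sum_zero hK2, sum_chiSq, hcK]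
      simp only [neg_zero, quadraticChar_zero]
      ring
    · by_cases ha : a = 0
      · -- a = 0, b ≠ 0
        subst ha
        have hE0 : ∑ x : K, quadraticChar K x * quadraticChar K (x + 0) = (q : ℤ) - 1 := by
          have h : ∀ x : K, quadraticChar K x * quadraticChar K (x + 0)
              = (quadraticChar K x) ^ 2 := by
            intro x
            rw [add_zero, sq]
          rw [Finset.sum_congr rfl fun x _ => h x, sum_chiSq, hcK]
        have hI0 : ∑ x : K, (quadraticChar K x) ^ 2 * (quadraticChar K (x + 0)) ^ 2
            = (q : ℤ) - 1 := by
          have h : ∀ x : K, (quadraticChar K x) ^ 2 * (quadraticChar K (x + 0)) ^ 2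
              = (quadraticChar K x) ^ 2 := by
            intro x
            rw [add_zero]
            by_cases hx : x = 0
            · simp [hx, quadraticChar_zero]
            · rw [quadraticChar_sq_one hx]
              ring
          rw [Finset.sum_congr rfl fun x _ => h x, sum_chiSq, hcK]
        have hsL : (quadraticChar L b) ^ 2 = 1 := quadraticChar_sq_one hb
        have hsLn : (quadraticChar L (-b)) ^ 2 = 1 :=
          quadraticChar_sq_one (neg_ne_zero.mpr hb)
        rw [hA, hE0, hI0, sum_w_w hb, sum_w_mul (fun t => quadraticChar L t) b,
          sum_w_mul (fun t => (quadraticChar L t) ^ 2) b,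
          sum_mul_w (fun t => quadraticChar L t) b,
          sum_mul_w (fun t => (quadraticChar L t) ^ 2) b,
          sum_chi_mul_chi hL2 hb, sum_chi_mul_chiSq hL2 b, sum_chiSq_mul_chi hL2 b,
          sum_chiSq_mul_chiSq hb, hcL,
          sum_chi_mul_chiSq hK2 0, sum_chiSq_mul_chi hK2 0,
          chiShiftZero hK2 0, sum_chiSq_shift 0, quadraticChar_sum_zero hK2, sum_chiSq, hcK,
          hsL, hsLn]
        simp only [neg_zero, quadraticChar_zero]
        ring
      · -- a ≠ 0, b ≠ 0
        have hsK : (quadraticChar K a) ^ 2 = 1 := quadraticChar_sq_one ha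
        have hsL : (quadraticChar L b) ^ 2 = 1 := quadraticChar_sq_one hb
        have hsE2 : (quadraticChar L (-1)) ^ 2 = 1 :=
          quadraticChar_sq_one (neg_ne_zero.mpr one_ne_zero)
        have hna : quadraticChar K (-a) = quadraticChar K (-1) * quadraticChar K a := by
          rw [← map_mul, neg_one_mul]
        have hnb : quadraticChar L (-b) = quadraticChar L (-1) * quadraticChar L b := by
          rw [← map_mul, neg_one_mul]
        have hprod : quadraticChar K (-1) * quadraticChar L (-1) = -1 :=
          chi_neg_one_prod q hq hq2 ⟨k, hk⟩ hK2 hL2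
        rw [hA, sum_w_w hb, sum_w_mul (fun t => quadraticChar L t) b,
          sum_w_mul (fun t => (quadraticChar L t) ^ 2) b,
          sum_mul_w (fun t => quadraticChar L t) b,
          sum_mul_w (fun t => (quadraticChar L t) ^ 2) b,
          sum_chi_mul_chi hL2 hb, sum_chi_mul_chiSq hL2 b, sum_chiSq_mul_chi hL2 b,
          sum_chiSq_mul_chiSq hb, hcL,
          sum_chi_mul_chi hK2 ha, sum_chi_mul_chiSq hK2 a, sum_chiSq_mul_chi hK2 a,
          sum_chiSq_mul_chiSq ha,
          chiShiftZero hK2 a, sum_chiSq_shift a, quadraticChar_sum_zero hK2, sum_chiSq, hcK,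
          hna, hnb]
        linear_combination (2 * ((q : ℤ) - 1)) * hsL
          + (2 * ((q : ℤ) - 1)) * (quadraticChar L (-1)) ^ 2 * hsL
          + (2 * ((q : ℤ) - 1)) * hsE2
          + (quadraticChar K a * quadraticChar L b) * hprod
  -- cardinality of D
  have cardD_eq : 2 * (((univ.filter (· ∈ D)).card : ℤ)) = (q : ℤ) ^ 2 + 2 * q - 1 := by
    have s1 : (((univ.filter (· ∈ D)).card : ℤ)) = ∑ z : K × L, if z ∈ D then (1 : ℤ) else 0 := by
      rw [Finset.card_filter]
      push_cast
      rfl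
    rw [s1, Finset.mul_sum]
    have s2 : ∀ z : K × L, 2 * (if z ∈ D then (1 : ℤ) else 0) = ∑ i, u i z.1 * v i z.2 := by
      intro z
      rw [← hind z]
      by_cases h : z ∈ D <;> simp [h]
    rw [Finset.sum_congr rfl fun z _ => s2 z]
    calc ∑ z : K × L, ∑ i, u i z.1 * v i z.2
        = ∑ x : K, ∑ y : L, ∑ i, u i x * v i y := Fintype.sum_prod_type _
      _ = ∑ x : K, (2 + ((q : ℤ) + 1) * (quadraticChar K x) ^ 2) := by
          refine Finset.sum_congr rfl fun x _ => ?_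
          simp only [Fin.sum_univ_three, hu, hv, Matrix.cons_val_zero, Matrix.cons_val_one,
            Matrix.head_cons, Matrix.cons_val_two, Matrix.tail_cons, one_mul]
          rw [Finset.sum_add_distrib, Finset.sum_add_distrib, ← Finset.mul_sum,
            ← Finset.mul_sum, quadraticChar_sum_zero hL2, sum_chiSq, hcL,
            Finset.sum_ite_eq' univ (0 : L) (fun _ => (2 : ℤ))]
          simp
          ring
      _ = (q : ℤ) ^ 2 + 2 * q - 1 := by
          rw [Finset.sum_add_distrib, ← Finset.mul_sum, sum_chiSq, hcK, Finset.sum_const,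
            Finset.card_univ, hq]
          push_cast
          ring
  have hconv : ∀ (S : Set (K × L)) (t : Finset (K × L)), (∀ z, z ∈ S ↔ z ∈ t) →
      Nat.card S = t.card := by
    intro S t h
    rw [Nat.card_coe_set_eq,
      show S = (t : Set (K × L)) from by ext z; exact (h z).trans Finset.mem_coe.symm,
      Set.ncard_coe_finset]
  refine ⟨?_, ?_, ?_⟩
  · -- Nat.card G
    rw [Nat.card_eq_fintype_card, Fintype.card_prod, hq, hq2, hn, hk]
    have h : 4 * (k + 1) ^ 2 = (2 * k + 1) * (2 * k + 1 + 2) + 1 := by ring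
    omega
  · -- Nat.card D
    have hDfin : Nat.card D = ((univ.filter (· ∈ D)).card) :=
      hconv D _ (fun z => by
        simp only [Finset.mem_filter, Finset.mem_univ, true_and])
    have hval : ((univ.filter (· ∈ D)).card) = 2 * k ^ 2 + 4 * k + 1 := by
      have h1 : (((univ.filter (· ∈ D)).card : ℤ)) = 2 * (k : ℤ) ^ 2 + 4 * k + 1 := by
        have h2 : ((q : ℤ)) = 2 * (k : ℤ) + 1 := by exact_mod_cast congrArg (Nat.cast (R := ℤ)) hk
        rw [h2] at cardD_eq
        linarith
      exact_mod_cast h1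
    rw [hDfin, hval, hn]
    have h : 2 * (k + 1) ^ 2 = 2 * k ^ 2 + 4 * k + 2 := by ring
    omega
  · -- the difference count
    intro g hg
    obtain ⟨a, b⟩ := g
    have hab : ¬(a = 0 ∧ b = 0) := by
      rintro ⟨h1, h2⟩
      exact hg (by rw [h1, h2]; rfl)
    have hcongr : Nat.card {p : (K × L) × (K × L) | p.1 ∈ D ∧ p.2 ∈ D ∧ p.1 - p.2 = (a, b)}
        = Nat.card {z : K × L | z ∈ D ∧ z + (a, b) ∈ D} := by
      apply Nat.card_congr
      refine ⟨fun p => ⟨p.1.2, p.2.2.1, ?_⟩,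
        fun z => ⟨(z.1 + (a, b), z.1), z.2.2, z.2.1, add_sub_cancel_left z.1 (a, b)⟩,
        fun p => Subtype.ext (Prod.ext ?_ rfl), fun z => Subtype.ext rfl⟩
      · have h2 : p.1.2 + (a, b) = p.1.1 := by
          rw [eq_add_of_sub_eq p.2.2.2, add_comm]
        rw [h2]
        exact p.2.1
      · dsimp only
        rw [eq_add_of_sub_eq p.2.2.2, add_comm]
    have h2 : Nat.card {z : K × L | z ∈ D ∧ z + (a, b) ∈ D}
        = ((univ.filter fun z : K × L => z ∈ D ∧ z + (a, b) ∈ D)).card :=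
      hconv _ _ (fun z => by
        simp only [Set.mem_setOf_eq, Finset.mem_filter, Finset.mem_univ, true_and])
    rw [hcongr, h2]
    have hm := master a b
    rw [eval a b hab] at hm
    have hkz : ((q : ℤ)) = 2 * (k : ℤ) + 1 := by exact_mod_cast congrArg (Nat.cast (R := ℤ)) hk
    rw [hkz] at hm
    have h3 : (((univ.filter fun z : K × L => z ∈ D ∧ z + (a, b) ∈ D)).card : ℤ)
        = (k : ℤ) ^ 2 + 2 * k := by linarith
    have h4 : ((univ.filter fun z : K × L => z ∈ D ∧ z + (a, b) ∈ D)).card = k ^ 2 + 2 * k := by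
      exact_mod_cast h3
    rw [h4, hn]
    have h : (k + 1) ^ 2 = k ^ 2 + 2 * k + 1 := by ring
    omega
end

section
/- Let q and q+2 both be prime powers with q ≡ 3 (mod 4), and let E be a skew Hadamard difference set in (F_q, +). Then the set D = {(x,y) : x ∈ E, y a nonzero square in F_{q+2}} ∪ {(x,y) : x ∈ −E, y a nonsquare in F_{q+2}} ∪ {(x,0) : x ∈ F_q} is a (4n−1, 2n−1, n−1) difference set in (F_q, +) × (F_{q+2}, +), where n = (q+1)²/4. -/
/-- `D` is skew Hadamard: `G` is the disjoint union of `D`, `-D` and `{0}`. -/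
def IsSkewHadamard {G : Type*} [AddCommGroup G] (D : Set G) : Prop :=
  Disjoint D (-D) ∧ (0 : G) ∉ D ∧ D ∪ (-D) ∪ {0} = Set.univ

open Finset

lemma card_pairs {G : Type*} [AddCommGroup G] (S : Set G) (a : G) :
    Nat.card {p : G × G | p.1 ∈ S ∧ p.2 ∈ S ∧ p.1 - p.2 = a} =
      Nat.card {x : G | x ∈ S ∧ x - a ∈ S} := by
  have hsnd : ∀ p : G × G, p ∈ {p : G × G | p.1 ∈ S ∧ p.2 ∈ S ∧ p.1 - p.2 = a} →
      p.1 - a = p.2 ∧ (p.1 ∈ S ∧ p.1 - a ∈ S) := by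
    rintro ⟨x, y⟩ ⟨hx, hy, rfl⟩
    exact ⟨sub_sub_cancel x y, hx, by rwa [sub_sub_cancel x y]⟩
  apply Nat.card_congr
  refine ⟨fun p => ⟨p.1.1, (hsnd p.1 p.2).2⟩,
    fun x => ⟨(x.1, x.1 - a), x.2.1, x.2.2, sub_sub_cancel _ _⟩, ?_, ?_⟩
  · rintro ⟨p, hp⟩
    exact Subtype.ext (Prod.ext rfl ((hsnd p hp).1))
  · rintro ⟨x, hx⟩; rfl

lemma natCard_filter {G : Type*} [Fintype G] (P : G → Prop) [DecidablePred P] :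
    Nat.card {x : G | P x} = (univ.filter P).card := by
  rw [Nat.card_coe_set_eq, Set.ncard_eq_toFinset_card', Set.toFinset_setOf]

lemma sum_if_mul {α : Type*} [Fintype α] [DecidableEq α] (r : ℤ) (f : α → ℤ) (c : α) :
    ∑ x : α, (if x = c then r else 0) * f x = r * f c := by
  calc ∑ x : α, (if x = c then r else 0) * f x
      = ∑ x : α, (if x = c then r * f x else 0) :=
        Finset.sum_congr rfl fun x _ => by by_cases h : x = c <;> simp [h]
    _ = r * f c := by simp

lemma sum_mul_if {α : Type*} [Fintype α] [DecidableEq α] (r : ℤ) (f : α → ℤ) (c : α) :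
    ∑ x : α, f x * (if x = c then r else 0) = f c * r := by
  calc ∑ x : α, f x * (if x = c then r else 0)
      = ∑ x : α, (if x = c then f x * r else 0) :=
        Finset.sum_congr rfl fun x _ => by by_cases h : x = c <;> simp [h]
    _ = f c * r := by simp


lemma prodsum {K L : Type*} [Fintype K] [Fintype L] (f g : K → ℤ) (u v : L → ℤ) :
    ∑ z : K × L, (f z.1 * u z.2) * (g z.1 * v z.2) = (∑ x, f x * g x) * (∑ y, u y * v y) := by
  rw [Fintype.sum_prod_type, Fintype.sum_mul_sum]
  exact Finset.sum_congr rfl fun x _ => Finset.sum_congr rfl fun y _ => by ring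

lemma prodsum1 {K L : Type*} [Fintype K] [Fintype L] (f : K → ℤ) (u : L → ℤ) :
    ∑ z : K × L, f z.1 * u z.2 = (∑ x, f x) * (∑ y, u y) := by
  rw [Fintype.sum_prod_type, Fintype.sum_mul_sum]

open Classical in
noncomputable def eAux {K : Type*} [Neg K] (E : Set K) : K → ℤ :=
  fun x => if x ∈ E then 1 else if -x ∈ E then -1 else 0

open Classical in
noncomputable def chiAux {K : Type*} (E : Set K) : K → ℤ :=
  fun x => if x ∈ E then 1 else 0

section KSide

variable {K : Type*} [AddCommGroup K] [DecidableEq K] {E : Set K}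

lemma skew_tri (hs : IsSkewHadamard E) (x : K) :
    x = 0 ∨ (x ∈ E ∧ -x ∉ E) ∨ (x ∉ E ∧ -x ∈ E) := by
  obtain ⟨hdisj, h0, hcover⟩ := hs
  have hd : ¬(x ∈ E ∧ -x ∈ E) := fun ⟨h1, h2⟩ =>
    Set.disjoint_left.mp hdisj h1 (Set.mem_neg.mpr h2)
  have hx : x ∈ E ∪ -E ∪ {0} := hcover ▸ Set.mem_univ x
  rcases hx with (h | h) | h
  · exact Or.inr (Or.inl ⟨h, fun h2 => hd ⟨h, h2⟩⟩)
  · have h2 : -x ∈ E := Set.mem_neg.mp h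
    exact Or.inr (Or.inr ⟨fun h1 => hd ⟨h1, h2⟩, h2⟩)
  · exact Or.inl h

lemma eAux_zero (hs : IsSkewHadamard E) : eAux E 0 = 0 := by
  have h0 := hs.2.1
  simp [eAux, h0]

lemma eAux_neg (hs : IsSkewHadamard E) (x : K) : eAux E (-x) = - eAux E x := by
  rcases skew_tri hs x with rfl | ⟨h1, h2⟩ | ⟨h1, h2⟩
  · simp [eAux_zero hs]
  · simp [eAux, h1, h2]
  · simp [eAux, h1, h2]

lemma eAux_sq (hs : IsSkewHadamard E) (x : K) :
    eAux E x ^ 2 = 1 - (if x = 0 then 1 else 0) := by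
  rcases skew_tri hs x with rfl | ⟨h1, h2⟩ | ⟨h1, h2⟩
  · simp [eAux_zero hs]
  · have hx : ¬ x = 0 := by rintro rfl; exact hs.2.1 h1
    simp [eAux, h1, h2, hx]
  · have hx : ¬ x = 0 := by rintro rfl; exact hs.2.1 (by simpa using h2)
    simp [eAux, h1, h2, hx]

lemma eAux_eq_chi (hs : IsSkewHadamard E) (x : K) :
    eAux E x = chiAux E x - chiAux E (-x) := by
  rcases skew_tri hs x with rfl | ⟨h1, h2⟩ | ⟨h1, h2⟩
  · simp [chiAux, eAux_zero hs, hs.2.1]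
  · simp [eAux, chiAux, h1, h2]
  · simp [eAux, chiAux, h1, h2]

lemma chiAux_neg (hs : IsSkewHadamard E) (x : K) :
    chiAux E (-x) = 1 - chiAux E x - (if x = 0 then 1 else 0) := by
  rcases skew_tri hs x with rfl | ⟨h1, h2⟩ | ⟨h1, h2⟩
  · simp [chiAux, hs.2.1]
  · have hx : ¬ x = 0 := by rintro rfl; exact hs.2.1 h1
    simp [chiAux, h1, h2, hx]
  · have hx : ¬ x = 0 := by rintro rfl; exact hs.2.1 (by simpa using h2)
    simp [chiAux, h1, h2, hx]

lemma chiAux_skew (hs : IsSkewHadamard E) {x : K} (hx : x ≠ 0) :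
    chiAux E x + chiAux E (-x) = 1 := by
  rcases skew_tri hs x with rfl | ⟨h1, h2⟩ | ⟨h1, h2⟩
  · exact absurd rfl hx
  · simp [chiAux, h1, h2]
  · simp [chiAux, h1, h2]

variable [Fintype K]

lemma eAux_sum (hs : IsSkewHadamard E) : ∑ x : K, eAux E x = 0 := by
  have h1 : ∑ x : K, eAux E (-x) = ∑ x : K, eAux E x :=
    Fintype.sum_equiv (Equiv.neg K) _ _ fun x => rfl
  have h2 : ∑ x : K, eAux E (-x) = - ∑ x : K, eAux E x := by
    rw [Finset.sum_congr rfl fun x _ => eAux_neg hs x]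
    exact Finset.sum_neg_distrib (eAux E)
  linarith

end KSide

section KAuto

variable {K : Type*} [AddCommGroup K] [DecidableEq K] [Fintype K] {E : Set K}

set_option linter.unusedSectionVars false

lemma chiAux_count {q : ℕ} (hcard : Nat.card E = (q - 1) / 2) :
    ∑ x : K, chiAux E x = (((q - 1) / 2 : ℕ) : ℤ) := by
  classical
  unfold chiAux
  rw [Finset.sum_boole]
  congr 1
  rw [← hcard, ← natCard_filter]
  rfl

lemma chiAux_pair {q : ℕ}
    (hlam : ∀ g : K, g ≠ 0 →
      Nat.card {p : K × K | p.1 ∈ E ∧ p.2 ∈ E ∧ p.1 - p.2 = g} = (q - 3) / 4)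
    {c : K} (hc : c ≠ 0) :
    ∑ x : K, chiAux E x * chiAux E (x - c) = (((q - 3) / 4 : ℕ) : ℤ) := by
  classical
  have hcnt := hlam c hc
  rw [card_pairs, natCard_filter] at hcnt
  calc ∑ x : K, chiAux E x * chiAux E (x - c)
      = ∑ x : K, (if x ∈ E ∧ x - c ∈ E then (1 : ℤ) else 0) :=
        Finset.sum_congr rfl fun x _ => by
          by_cases h1 : x ∈ E <;> by_cases h2 : x - c ∈ E <;> simp [chiAux, h1, h2]
    _ = (((univ.filter fun x : K => x ∈ E ∧ x - c ∈ E).card : ℕ) : ℤ) := by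
        rw [Finset.sum_boole]
    _ = (((q - 3) / 4 : ℕ) : ℤ) := by rw [hcnt]

lemma eAux_auto (hs : IsSkewHadamard E) {q : ℕ}
    (hq : Fintype.card K = q) (hq4 : q % 4 = 3)
    (hcard : Nat.card E = (q - 1) / 2)
    (hlam : ∀ g : K, g ≠ 0 →
      Nat.card {p : K × K | p.1 ∈ E ∧ p.2 ∈ E ∧ p.1 - p.2 = g} = (q - 3) / 4)
    {a : K} (ha : a ≠ 0) :
    ∑ x : K, eAux E x * eAux E (x - a) = -1 := by
  classical
  have hchishift : ∑ x : K, chiAux E (x - a) = (((q - 1) / 2 : ℕ) : ℤ) := by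
    have h := Fintype.sum_equiv (Equiv.subRight a) (fun x : K => chiAux E (x - a))
      (fun x : K => chiAux E x) (fun x => rfl)
    rw [h, chiAux_count hcard]
  have expand : ∀ x : K, eAux E x * eAux E (x - a) =
      chiAux E x * chiAux E (x - a) - chiAux E x * chiAux E (-(x - a))
        - chiAux E (-x) * chiAux E (x - a) + chiAux E (-x) * chiAux E (-(x - a)) := by
    intro x; rw [eAux_eq_chi hs x, eAux_eq_chi hs (x - a)]; ring
  rw [Finset.sum_congr rfl fun x _ => expand x]
  rw [Finset.sum_add_distrib, Finset.sum_sub_distrib, Finset.sum_sub_distrib]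
  have hS1 := chiAux_pair hlam ha
  have hS4 : ∑ x : K, chiAux E (-x) * chiAux E (-(x - a)) = (((q - 3) / 4 : ℕ) : ℤ) := by
    have hsub : ∑ x : K, chiAux E (-x) * chiAux E (-(x - a))
        = ∑ x : K, chiAux E x * chiAux E (x - -a) := by
      apply Fintype.sum_equiv (Equiv.neg K)
      intro x
      have h1 : -(x - a) = -x - -a := by abel
      rw [h1]
      rfl
    rw [hsub]
    exact chiAux_pair hlam (neg_ne_zero.mpr ha)
  have hS2 : ∑ x : K, chiAux E x * chiAux E (-(x - a))
      = (((q - 1) / 2 : ℕ) : ℤ) - (((q - 3) / 4 : ℕ) : ℤ) - chiAux E a := by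
    have hpt : ∀ x : K, chiAux E x * chiAux E (-(x - a)) =
        chiAux E x - chiAux E x * chiAux E (x - a)
          - chiAux E x * (if x - a = 0 then 1 else 0) := by
      intro x; rw [chiAux_neg hs (x - a)]; ring
    rw [Finset.sum_congr rfl fun x _ => hpt x, Finset.sum_sub_distrib, Finset.sum_sub_distrib,
      chiAux_count hcard, chiAux_pair hlam ha]
    congr 1
    calc ∑ x : K, chiAux E x * (if x - a = 0 then (1 : ℤ) else 0)
        = ∑ x : K, chiAux E x * (if x = a then (1 : ℤ) else 0) := by
          simp only [sub_eq_zero]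
      _ = chiAux E a := by rw [sum_mul_if]; ring
  have hS3 : ∑ x : K, chiAux E (-x) * chiAux E (x - a)
      = (((q - 1) / 2 : ℕ) : ℤ) - (((q - 3) / 4 : ℕ) : ℤ) - chiAux E (-a) := by
    have hpt : ∀ x : K, chiAux E (-x) * chiAux E (x - a) =
        chiAux E (x - a) - chiAux E x * chiAux E (x - a)
          - (if x = 0 then 1 else 0) * chiAux E (x - a) := by
      intro x; rw [chiAux_neg hs x]; ring
    rw [Finset.sum_congr rfl fun x _ => hpt x, Finset.sum_sub_distrib, Finset.sum_sub_distrib,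
      hchishift, chiAux_pair hlam ha]
    congr 1
    calc ∑ x : K, (if x = 0 then (1 : ℤ) else 0) * chiAux E (x - a)
        = 1 * chiAux E (0 - a) := sum_if_mul 1 (fun x => chiAux E (x - a)) 0
      _ = chiAux E (-a) := by rw [zero_sub, one_mul]
  have hskewa := chiAux_skew hs ha
  have hl : (4 : ℤ) * (((q - 3) / 4 : ℕ) : ℤ) = (q : ℤ) - 3 := by omega
  have hk : (2 : ℤ) * (((q - 1) / 2 : ℕ) : ℤ) = (q : ℤ) - 1 := by omega
  rw [hS1, hS2, hS3, hS4]
  linarith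

end KAuto

lemma quadChar_auto {F : Type*} [Field F] [Fintype F] [DecidableEq F]
    (hF : ringChar F ≠ 2) {b : F} (hb : b ≠ 0) :
    ∑ y : F, quadraticChar F y * quadraticChar F (y - b) = -1 := by
  have key : ∀ y : F, quadraticChar F y * quadraticChar F (y - b)
      = if ¬ y = 0 then quadraticChar F (1 - b * y⁻¹) else 0 := by
    intro y
    by_cases hy : y = 0
    · simp [hy]
    · rw [if_pos hy]
      have h1 : y - b = y * (1 - b * y⁻¹) := by field_simp
      rw [h1, map_mul, ← mul_assoc, ← pow_two, quadraticChar_sq_one hy, one_mul]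
  rw [Finset.sum_congr rfl fun y _ => key y, ← Finset.sum_filter]
  have hbij : ∑ y ∈ univ.filter (fun y : F => ¬ y = 0), quadraticChar F (1 - b * y⁻¹)
      = ∑ v ∈ univ.filter (fun v : F => ¬ v = 1), quadraticChar F v := by
    refine Finset.sum_nbij' (i := fun y => 1 - b * y⁻¹) (j := fun v => b * (1 - v)⁻¹)
      ?_ ?_ ?_ ?_ ?_
    · intro y hy
      simp only [mem_filter, mem_univ, true_and] at *
      intro h
      have h2 : b * y⁻¹ = 0 := by linear_combination -h
      rcases mul_eq_zero.mp h2 with h' | h'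
      · exact hb h'
      · exact hy (inv_eq_zero.mp h')
    · intro v hv
      simp only [mem_filter, mem_univ, true_and] at *
      intro h
      rcases mul_eq_zero.mp h with h' | h'
      · exact hb h'
      · exact hv (by have := inv_eq_zero.mp h'; linear_combination -this)
    · intro y hy
      simp only [mem_filter, mem_univ, true_and] at hy
      field_simp
      rw [sub_sub_cancel, div_self hb]
    · intro v hv
      simp only [mem_filter, mem_univ, true_and] at hv
      have h1v : (1 : F) - v ≠ 0 := fun h => hv (by linear_combination -h)
      field_simp
      ring
    · intro y hy; rfl
  rw [hbij]
  have heq : (univ.filter (fun v : F => ¬ v = 1)) = univ.erase 1 := by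
    rw [← Finset.filter_ne']
  rw [heq, Finset.sum_erase_eq_sub (mem_univ 1), quadraticChar_sum_zero hF, map_one]
  ring

theorem twin_prime_power_variation {K L : Type*} [Field K] [Field L] [Fintype K] [Fintype L]
    (q : ℕ) (hq : Fintype.card K = q) (hq2 : Fintype.card L = q + 2) (hq4 : q % 4 = 3)
    (E : Set K)
    (hE : IsDiffSet E q ((q - 1) / 2) ((q - 3) / 4)) (hskew : IsSkewHadamard E) :
    let n := (q + 1) ^ 2 / 4
    let D : Set (K × L) :=
      {p | (p.1 ∈ E ∧ p.2 ≠ 0 ∧ IsSquare p.2) ∨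
           (p.1 ∈ -E ∧ p.2 ≠ 0 ∧ ¬ IsSquare p.2) ∨ p.2 = 0}
    IsDiffSet D (4 * n - 1) (2 * n - 1) (n - 1) := by
  classical
  intro n D
  obtain ⟨-, hcardE, hlam⟩ := hE
  have hq3 : 3 ≤ q := by omega
  obtain ⟨m, hm⟩ : ∃ m, q * q = m := ⟨_, rfl⟩
  have hm' : ((m : ℕ) : ℤ) = (q : ℤ) * (q : ℤ) := by rw [← hm]; push_cast; ring
  obtain ⟨t, ht⟩ : 2 ∣ q + 1 := by omega
  have hn' : n = (q + 1) ^ 2 / 4 := rfl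
  have hnt : n = t ^ 2 := by
    rw [hn', ht, show (2 * t) ^ 2 = 4 * t ^ 2 by ring,
      Nat.mul_div_cancel_left _ (by norm_num : 0 < 4)]
  have hn4 : 4 * n = m + 2 * q + 1 := by
    calc 4 * n = 4 * t ^ 2 := by rw [hnt]
      _ = (2 * t) * (2 * t) := by ring
      _ = (q + 1) * (q + 1) := by rw [← ht]
      _ = q * q + 2 * q + 1 := by ring
      _ = m + 2 * q + 1 := by rw [hm]
  -- membership characterization
  have hD : ∀ z : K × L, z ∈ D ↔
      ((z.1 ∈ E ∧ z.2 ≠ 0 ∧ IsSquare z.2) ∨ (-z.1 ∈ E ∧ z.2 ≠ 0 ∧ ¬ IsSquare z.2)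
        ∨ z.2 = 0) := by
    intro z
    have h0 : z ∈ D ↔ ((z.1 ∈ E ∧ z.2 ≠ 0 ∧ IsSquare z.2)
        ∨ (z.1 ∈ -E ∧ z.2 ≠ 0 ∧ ¬ IsSquare z.2) ∨ z.2 = 0) := Iff.rfl
    rw [h0, Set.mem_neg]
  -- L-side facts
  have hcharL : ringChar L ≠ 2 := by
    intro h
    have h2 := FiniteField.even_card_of_char_two h
    rw [hq2] at h2; omega
  have hm1 : IsSquare (-1 : L) := FiniteField.isSquare_neg_one_iff.mpr (by rw [hq2]; omega)
  have hLneg : ∀ y : L, quadraticChar L (-y) = quadraticChar L y := by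
    intro y
    have h1 : quadraticChar L (-1 : L) = 1 :=
      (quadraticChar_one_iff_isSquare (neg_ne_zero.mpr one_ne_zero)).mpr hm1
    calc quadraticChar L (-y) = quadraticChar L (-1 * y) := by rw [neg_one_mul]
      _ = quadraticChar L (-1) * quadraticChar L y := map_mul _ _ _
      _ = quadraticChar L y := by rw [h1, one_mul]
  have hLsq : ∀ y : L, quadraticChar L y ^ 2 = 1 - (if y = 0 then (1 : ℤ) else 0) := by
    intro y; by_cases h : y = 0
    · simp [h]
    · rw [if_neg h, quadraticChar_sq_one h]; ring
  have hLsum : ∑ y : L, quadraticChar L y = 0 := quadraticChar_sum_zero hcharL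
  -- basic sums
  have hKcard : ∑ _x : K, (1 : ℤ) = (q : ℤ) := by
    rw [Finset.sum_const, Finset.card_univ, hq]; simp
  have hLcard : ∑ _y : L, (1 : ℤ) = (q : ℤ) + 2 := by
    rw [Finset.sum_const, Finset.card_univ, hq2]; push_cast; ring
  have hKi0 : ∑ x : K, (if x = 0 then (1 : ℤ) else 0) = 1 := by simp
  have hLj0 : ∑ y : L, (if y = 0 then (1 : ℤ) else 0) = 1 := by simp
  have hKe2 : ∑ x : K, eAux E x ^ 2 = (q : ℤ) - 1 := by
    calc ∑ x : K, eAux E x ^ 2 = ∑ x : K, (1 - if x = 0 then (1 : ℤ) else 0) :=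
          Finset.sum_congr rfl fun x _ => eAux_sq hskew x
      _ = (q : ℤ) - 1 := by rw [Finset.sum_sub_distrib, hKcard, hKi0]
  have hLc2 : ∑ y : L, quadraticChar L y ^ 2 = (q : ℤ) + 1 := by
    calc ∑ y : L, quadraticChar L y ^ 2 = ∑ y : L, (1 - if y = 0 then (1 : ℤ) else 0) :=
          Finset.sum_congr rfl fun y _ => hLsq y
      _ = (q : ℤ) + 1 := by rw [Finset.sum_sub_distrib, hLcard, hLj0]; ring
  -- the indicator identity
  have claimA : ∀ z : K × L, (if z ∈ D then (2 : ℤ) else 0) =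
      (1 : ℤ) * (if z.2 = 0 then (2 : ℤ) else 0)
        + eAux E z.1 ^ 2 * quadraticChar L z.2 ^ 2
        + eAux E z.1 * quadraticChar L z.2 := by
    intro z
    by_cases hy : z.2 = 0
    · rw [if_pos ((hD z).mpr (Or.inr (Or.inr hy))), hy, if_pos rfl, quadraticChar_zero]
      ring
    · rw [if_neg hy]
      rcases skew_tri hskew z.1 with hz | ⟨h1, h2⟩ | ⟨h1, h2⟩
      · have he0 : eAux E z.1 = 0 := by rw [hz]; exact eAux_zero hskew
        have hmem : ¬ z ∈ D := by
          intro hc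
          rcases (hD z).mp hc with ⟨hE1, _, _⟩ | ⟨hE2, _, _⟩ | h0
          · exact hskew.2.1 (hz ▸ hE1)
          · apply hskew.2.1; rwa [hz, neg_zero] at hE2
          · exact hy h0
        rw [if_neg hmem, he0]; ring
      · have he1 : eAux E z.1 = 1 := by simp [eAux, h1]
        by_cases hs : IsSquare z.2
        · have hc1 : quadraticChar L z.2 = 1 := (quadraticChar_one_iff_isSquare hy).mpr hs
          rw [if_pos ((hD z).mpr (Or.inl ⟨h1, hy, hs⟩)), he1, hc1]; ring
        · have hc1 : quadraticChar L z.2 = -1 := quadraticChar_neg_one_iff_not_isSquare.mpr hs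
          have hmem : ¬ z ∈ D := by
            intro hc
            rcases (hD z).mp hc with ⟨_, _, hs'⟩ | ⟨h2', _, _⟩ | h0
            exacts [hs hs', h2 h2', hy h0]
          rw [if_neg hmem, he1, hc1]; ring
      · have he1 : eAux E z.1 = -1 := by simp [eAux, h1, h2]
        by_cases hs : IsSquare z.2
        · have hc1 : quadraticChar L z.2 = 1 := (quadraticChar_one_iff_isSquare hy).mpr hs
          have hmem : ¬ z ∈ D := by
            intro hc
            rcases (hD z).mp hc with ⟨h1', _, _⟩ | ⟨_, _, hs'⟩ | h0
            exacts [h1 h1', hs' hs, hy h0]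
          rw [if_neg hmem, he1, hc1]; ring
        · have hc1 : quadraticChar L z.2 = -1 := quadraticChar_neg_one_iff_not_isSquare.mpr hs
          rw [if_pos ((hD z).mpr (Or.inr (Or.inl ⟨h2, hy, hs⟩))), he1, hc1]; ring
  
  -- key counting identity
  have key : ∀ gg : K × L, gg ≠ 0 →
      (4 : ℤ) * (((Finset.univ.filter fun z : K × L => z ∈ D ∧ z - gg ∈ D).card : ℕ) : ℤ)
        = (q : ℤ) * q + 2 * q - 3 := by
    rintro ⟨a, b⟩ hg
    have hnot : ¬ (a = 0 ∧ b = 0) := by rintro ⟨rfl, rfl⟩; exact hg rfl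
    have hIJ : (if a = 0 then (1:ℤ) else 0) * (if b = 0 then (1:ℤ) else 0) = 0 := by
      by_cases ha : a = 0
      · by_cases hb : b = 0
        · exact absurd ⟨ha, hb⟩ hnot
        · simp [hb]
      · simp [ha]
    have hKsh : ∑ x : K, eAux E (x - a) = 0 := by
      rw [Fintype.sum_equiv (Equiv.subRight a) (fun x : K => eAux E (x - a))
        (fun x : K => eAux E x) (fun x => rfl)]
      exact eAux_sum hskew
    have hKsh2 : ∑ x : K, eAux E (x - a) ^ 2 = (q : ℤ) - 1 := by
      rw [Fintype.sum_equiv (Equiv.subRight a) (fun x : K => eAux E (x - a) ^ 2)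
        (fun x : K => eAux E x ^ 2) (fun x => rfl)]
      exact hKe2
    have hKia : ∑ x : K, (if x - a = 0 then (1:ℤ) else 0) = 1 := by simp [sub_eq_zero]
    have hKS11 : ∑ x : K, (1:ℤ) * 1 = (q:ℤ) := by simpa using hKcard
    have hKS12 : ∑ x : K, (1:ℤ) * eAux E (x - a) ^ 2 = (q:ℤ) - 1 := by simpa using hKsh2
    have hKS13 : ∑ x : K, (1:ℤ) * eAux E (x - a) = 0 := by simpa using hKsh
    have hKS21 : ∑ x : K, eAux E x ^ 2 * 1 = (q:ℤ) - 1 := by simpa using hKe2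
    have hKS31 : ∑ x : K, eAux E x * 1 = 0 := by simpa using eAux_sum hskew
    have hKS22 : ∑ x : K, eAux E x ^ 2 * eAux E (x - a) ^ 2
        = (q:ℤ) - 2 + (if a = 0 then 1 else 0) := by
      have hdd : ∑ x : K, (if x = 0 then (1:ℤ) else 0) * (if x - a = 0 then (1:ℤ) else 0)
          = (if a = 0 then (1:ℤ) else 0) := by
        rw [sum_if_mul 1 (fun x : K => if x - a = 0 then (1:ℤ) else 0) 0]
        by_cases ha : a = 0 <;> simp [ha]
      calc ∑ x : K, eAux E x ^ 2 * eAux E (x - a) ^ 2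
          = ∑ x : K, (1 - (if x = 0 then (1:ℤ) else 0) - (if x - a = 0 then (1:ℤ) else 0)
              + (if x = 0 then (1:ℤ) else 0) * (if x - a = 0 then (1:ℤ) else 0)) :=
            Finset.sum_congr rfl fun x _ => by
              rw [eAux_sq hskew x, eAux_sq hskew (x - a)]; ring
        _ = (q:ℤ) - 1 - 1 + (if a = 0 then 1 else 0) := by
            rw [Finset.sum_add_distrib, Finset.sum_sub_distrib, Finset.sum_sub_distrib,
              hKcard, hKi0, hKia, hdd]
        _ = (q:ℤ) - 2 + (if a = 0 then 1 else 0) := by ring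
    have hKS23 : ∑ x : K, eAux E x ^ 2 * eAux E (x - a) = eAux E a := by
      calc ∑ x : K, eAux E x ^ 2 * eAux E (x - a)
          = ∑ x : K, (eAux E (x - a) - (if x = 0 then (1:ℤ) else 0) * eAux E (x - a)) :=
            Finset.sum_congr rfl fun x _ => by rw [eAux_sq hskew x]; ring
        _ = 0 - 1 * eAux E (0 - a) := by
            rw [Finset.sum_sub_distrib, hKsh, sum_if_mul 1 (fun x : K => eAux E (x - a)) 0]
        _ = eAux E a := by rw [zero_sub a, eAux_neg hskew]; ring
    have hKS32 : ∑ x : K, eAux E x * eAux E (x - a) ^ 2 = - eAux E a := by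
      calc ∑ x : K, eAux E x * eAux E (x - a) ^ 2
          = ∑ x : K, (eAux E x - eAux E x * (if x - a = 0 then (1:ℤ) else 0)) :=
            Finset.sum_congr rfl fun x _ => by rw [eAux_sq hskew (x - a)]; ring
        _ = 0 - eAux E a * 1 := by
            rw [Finset.sum_sub_distrib, eAux_sum hskew]
            congr 1
            calc ∑ x : K, eAux E x * (if x - a = 0 then (1:ℤ) else 0)
                = ∑ x : K, eAux E x * (if x = a then (1:ℤ) else 0) := by
                  simp only [sub_eq_zero]
              _ = eAux E a * 1 := sum_mul_if 1 (fun x => eAux E x) a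
        _ = - eAux E a := by ring
    have hKS33 : ∑ x : K, eAux E x * eAux E (x - a)
        = (q:ℤ) * (if a = 0 then 1 else 0) - 1 := by
      by_cases ha : a = 0
      · calc ∑ x : K, eAux E x * eAux E (x - a) = ∑ x : K, eAux E x ^ 2 :=
              Finset.sum_congr rfl fun x _ => by rw [ha, sub_zero]; ring
          _ = (q:ℤ) - 1 := hKe2
          _ = (q:ℤ) * (if a = 0 then 1 else 0) - 1 := by rw [if_pos ha]; ring
      · rw [eAux_auto hskew hq hq4 hcardE hlam ha, if_neg ha]; ring
    have hLsh : ∑ y : L, quadraticChar L (y - b) = 0 := by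
      rw [Fintype.sum_equiv (Equiv.subRight b) (fun y : L => quadraticChar L (y - b))
        (fun y : L => quadraticChar L y) (fun y => rfl)]
      exact hLsum
    have hLjb : ∑ y : L, (if y - b = 0 then (1:ℤ) else 0) = 1 := by simp [sub_eq_zero]
    have hLS11 : ∑ y : L, (if y = 0 then (2:ℤ) else 0) * (if y - b = 0 then (2:ℤ) else 0)
        = 4 * (if b = 0 then (1:ℤ) else 0) := by
      rw [sum_if_mul 2 (fun y : L => if y - b = 0 then (2:ℤ) else 0) 0]
      by_cases hb : b = 0 <;> simp [hb]
    have hLS12 : ∑ y : L, (if y = 0 then (2:ℤ) else 0) * quadraticChar L (y - b) ^ 2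
        = 2 - 2 * (if b = 0 then (1:ℤ) else 0) := by
      rw [sum_if_mul 2 (fun y : L => quadraticChar L (y - b) ^ 2) 0, zero_sub b,
        show quadraticChar L (-b) ^ 2 = quadraticChar L b ^ 2 by rw [hLneg], hLsq b]
      ring
    have hLS13 : ∑ y : L, (if y = 0 then (2:ℤ) else 0) * quadraticChar L (y - b)
        = 2 * quadraticChar L b := by
      rw [sum_if_mul 2 (fun y : L => quadraticChar L (y - b)) 0, zero_sub b, hLneg]
    have hLS21 : ∑ y : L, quadraticChar L y ^ 2 * (if y - b = 0 then (2:ℤ) else 0)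
        = 2 - 2 * (if b = 0 then (1:ℤ) else 0) := by
      calc ∑ y : L, quadraticChar L y ^ 2 * (if y - b = 0 then (2:ℤ) else 0)
          = ∑ y : L, quadraticChar L y ^ 2 * (if y = b then (2:ℤ) else 0) := by
            simp only [sub_eq_zero]
        _ = quadraticChar L b ^ 2 * 2 := sum_mul_if 2 (fun y => quadraticChar L y ^ 2) b
        _ = 2 - 2 * (if b = 0 then (1:ℤ) else 0) := by rw [hLsq b]; ring
    have hLS31 : ∑ y : L, quadraticChar L y * (if y - b = 0 then (2:ℤ) else 0)
        = quadraticChar L b * 2 := by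
      calc ∑ y : L, quadraticChar L y * (if y - b = 0 then (2:ℤ) else 0)
          = ∑ y : L, quadraticChar L y * (if y = b then (2:ℤ) else 0) := by
            simp only [sub_eq_zero]
        _ = quadraticChar L b * 2 := sum_mul_if 2 (fun y => quadraticChar L y) b
    have hLS22 : ∑ y : L, quadraticChar L y ^ 2 * quadraticChar L (y - b) ^ 2
        = (q:ℤ) + (if b = 0 then (1:ℤ) else 0) := by
      have hdd : ∑ y : L, (if y = 0 then (1:ℤ) else 0) * (if y - b = 0 then (1:ℤ) else 0)
          = (if b = 0 then (1:ℤ) else 0) := by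
        rw [sum_if_mul 1 (fun y : L => if y - b = 0 then (1:ℤ) else 0) 0]
        by_cases hb : b = 0 <;> simp [hb]
      calc ∑ y : L, quadraticChar L y ^ 2 * quadraticChar L (y - b) ^ 2
          = ∑ y : L, (1 - (if y = 0 then (1:ℤ) else 0) - (if y - b = 0 then (1:ℤ) else 0)
              + (if y = 0 then (1:ℤ) else 0) * (if y - b = 0 then (1:ℤ) else 0)) :=
            Finset.sum_congr rfl fun y _ => by rw [hLsq y, hLsq (y - b)]; ring
        _ = ((q:ℤ) + 2) - 1 - 1 + (if b = 0 then 1 else 0) := by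
            rw [Finset.sum_add_distrib, Finset.sum_sub_distrib, Finset.sum_sub_distrib,
              hLcard, hLj0, hLjb, hdd]
        _ = (q:ℤ) + (if b = 0 then (1:ℤ) else 0) := by ring
    have hLS23 : ∑ y : L, quadraticChar L y ^ 2 * quadraticChar L (y - b)
        = - quadraticChar L b := by
      calc ∑ y : L, quadraticChar L y ^ 2 * quadraticChar L (y - b)
          = ∑ y : L, (quadraticChar L (y - b)
              - (if y = 0 then (1:ℤ) else 0) * quadraticChar L (y - b)) :=
            Finset.sum_congr rfl fun y _ => by rw [hLsq y]; ring
        _ = 0 - 1 * quadraticChar L (0 - b) := by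
            rw [Finset.sum_sub_distrib, hLsh,
              sum_if_mul 1 (fun y : L => quadraticChar L (y - b)) 0]
        _ = - quadraticChar L b := by rw [zero_sub b, hLneg]; ring
    have hLS32 : ∑ y : L, quadraticChar L y * quadraticChar L (y - b) ^ 2
        = - quadraticChar L b := by
      calc ∑ y : L, quadraticChar L y * quadraticChar L (y - b) ^ 2
          = ∑ y : L, (quadraticChar L y
              - quadraticChar L y * (if y - b = 0 then (1:ℤ) else 0)) :=
            Finset.sum_congr rfl fun y _ => by rw [hLsq (y - b)]; ring
        _ = 0 - quadraticChar L b * 1 := by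
            rw [Finset.sum_sub_distrib, hLsum]
            congr 1
            calc ∑ y : L, quadraticChar L y * (if y - b = 0 then (1:ℤ) else 0)
                = ∑ y : L, quadraticChar L y * (if y = b then (1:ℤ) else 0) := by
                  simp only [sub_eq_zero]
              _ = quadraticChar L b * 1 := sum_mul_if 1 (fun y => quadraticChar L y) b
        _ = - quadraticChar L b := by ring
    have hLS33 : ∑ y : L, quadraticChar L y * quadraticChar L (y - b)
        = ((q:ℤ) + 2) * (if b = 0 then 1 else 0) - 1 := by
      by_cases hb : b = 0
      · calc ∑ y : L, quadraticChar L y * quadraticChar L (y - b)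
            = ∑ y : L, quadraticChar L y ^ 2 :=
              Finset.sum_congr rfl fun y _ => by rw [hb, sub_zero]; ring
          _ = (q:ℤ) + 1 := hLc2
          _ = ((q:ℤ) + 2) * (if b = 0 then 1 else 0) - 1 := by rw [if_pos hb]; ring
      · rw [quadChar_auto hcharL hb, if_neg hb]; ring
    have E11 : ∑ z : K × L,
        ((1:ℤ) * (if z.2 = 0 then (2:ℤ) else 0)) * ((1:ℤ) * (if z.2 - b = 0 then (2:ℤ) else 0))
        = (∑ x : K, (1:ℤ) * 1)
          * (∑ y : L, (if y = 0 then (2:ℤ) else 0) * (if y - b = 0 then (2:ℤ) else 0)) :=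
      prodsum (fun _ : K => (1:ℤ)) (fun _ : K => (1:ℤ))
        (fun y : L => if y = 0 then (2:ℤ) else 0) (fun y : L => if y - b = 0 then (2:ℤ) else 0)
    have E12 : ∑ z : K × L,
        ((1:ℤ) * (if z.2 = 0 then (2:ℤ) else 0))
          * (eAux E (z.1 - a) ^ 2 * quadraticChar L (z.2 - b) ^ 2)
        = (∑ x : K, (1:ℤ) * eAux E (x - a) ^ 2)
          * (∑ y : L, (if y = 0 then (2:ℤ) else 0) * quadraticChar L (y - b) ^ 2) :=
      prodsum (fun _ : K => (1:ℤ)) (fun x : K => eAux E (x - a) ^ 2)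
        (fun y : L => if y = 0 then (2:ℤ) else 0) (fun y : L => quadraticChar L (y - b) ^ 2)
    have E13 : ∑ z : K × L,
        ((1:ℤ) * (if z.2 = 0 then (2:ℤ) else 0))
          * (eAux E (z.1 - a) * quadraticChar L (z.2 - b))
        = (∑ x : K, (1:ℤ) * eAux E (x - a))
          * (∑ y : L, (if y = 0 then (2:ℤ) else 0) * quadraticChar L (y - b)) :=
      prodsum (fun _ : K => (1:ℤ)) (fun x : K => eAux E (x - a))
        (fun y : L => if y = 0 then (2:ℤ) else 0) (fun y : L => quadraticChar L (y - b))
    have E21 : ∑ z : K × L,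
        (eAux E z.1 ^ 2 * quadraticChar L z.2 ^ 2)
          * ((1:ℤ) * (if z.2 - b = 0 then (2:ℤ) else 0))
        = (∑ x : K, eAux E x ^ 2 * 1)
          * (∑ y : L, quadraticChar L y ^ 2 * (if y - b = 0 then (2:ℤ) else 0)) :=
      prodsum (fun x : K => eAux E x ^ 2) (fun _ : K => (1:ℤ))
        (fun y : L => quadraticChar L y ^ 2) (fun y : L => if y - b = 0 then (2:ℤ) else 0)
    have E22 : ∑ z : K × L,
        (eAux E z.1 ^ 2 * quadraticChar L z.2 ^ 2)
          * (eAux E (z.1 - a) ^ 2 * quadraticChar L (z.2 - b) ^ 2)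
        = (∑ x : K, eAux E x ^ 2 * eAux E (x - a) ^ 2)
          * (∑ y : L, quadraticChar L y ^ 2 * quadraticChar L (y - b) ^ 2) :=
      prodsum (fun x : K => eAux E x ^ 2) (fun x : K => eAux E (x - a) ^ 2)
        (fun y : L => quadraticChar L y ^ 2) (fun y : L => quadraticChar L (y - b) ^ 2)
    have E23 : ∑ z : K × L,
        (eAux E z.1 ^ 2 * quadraticChar L z.2 ^ 2)
          * (eAux E (z.1 - a) * quadraticChar L (z.2 - b))
        = (∑ x : K, eAux E x ^ 2 * eAux E (x - a))
          * (∑ y : L, quadraticChar L y ^ 2 * quadraticChar L (y - b)) :=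
      prodsum (fun x : K => eAux E x ^ 2) (fun x : K => eAux E (x - a))
        (fun y : L => quadraticChar L y ^ 2) (fun y : L => quadraticChar L (y - b))
    have E31 : ∑ z : K × L,
        (eAux E z.1 * quadraticChar L z.2) * ((1:ℤ) * (if z.2 - b = 0 then (2:ℤ) else 0))
        = (∑ x : K, eAux E x * 1)
          * (∑ y : L, quadraticChar L y * (if y - b = 0 then (2:ℤ) else 0)) :=
      prodsum (fun x : K => eAux E x) (fun _ : K => (1:ℤ))
        (fun y : L => quadraticChar L y) (fun y : L => if y - b = 0 then (2:ℤ) else 0)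
    have E32 : ∑ z : K × L,
        (eAux E z.1 * quadraticChar L z.2)
          * (eAux E (z.1 - a) ^ 2 * quadraticChar L (z.2 - b) ^ 2)
        = (∑ x : K, eAux E x * eAux E (x - a) ^ 2)
          * (∑ y : L, quadraticChar L y * quadraticChar L (y - b) ^ 2) :=
      prodsum (fun x : K => eAux E x) (fun x : K => eAux E (x - a) ^ 2)
        (fun y : L => quadraticChar L y) (fun y : L => quadraticChar L (y - b) ^ 2)
    have E33 : ∑ z : K × L,
        (eAux E z.1 * quadraticChar L z.2) * (eAux E (z.1 - a) * quadraticChar L (z.2 - b))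
        = (∑ x : K, eAux E x * eAux E (x - a))
          * (∑ y : L, quadraticChar L y * quadraticChar L (y - b)) :=
      prodsum (fun x : K => eAux E x) (fun x : K => eAux E (x - a))
        (fun y : L => quadraticChar L y) (fun y : L => quadraticChar L (y - b))
    calc (4 : ℤ) * (((Finset.univ.filter fun z : K × L => z ∈ D ∧ z - (a, b) ∈ D).card : ℕ) : ℤ)
        = ∑ z : K × L, (if z ∈ D then (2:ℤ) else 0) * (if z - (a, b) ∈ D then (2:ℤ) else 0) := by
          rw [Finset.sum_congr rfl fun z _ => show
              (if z ∈ D then (2:ℤ) else 0) * (if z - (a, b) ∈ D then (2:ℤ) else 0)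
                = 4 * (if z ∈ D ∧ z - (a, b) ∈ D then (1:ℤ) else 0) from by
            by_cases h1 : z ∈ D <;> by_cases h2 : z - (a, b) ∈ D <;> simp [h1, h2]]
          rw [← Finset.mul_sum, Finset.sum_boole]
      _ = ∑ z : K × L, (
            ((1:ℤ) * (if z.2 = 0 then (2:ℤ) else 0)) * ((1:ℤ) * (if z.2 - b = 0 then (2:ℤ) else 0))
          + ((1:ℤ) * (if z.2 = 0 then (2:ℤ) else 0)) * (eAux E (z.1 - a) ^ 2 * quadraticChar L (z.2 - b) ^ 2)
          + ((1:ℤ) * (if z.2 = 0 then (2:ℤ) else 0)) * (eAux E (z.1 - a) * quadraticChar L (z.2 - b))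
          + (eAux E z.1 ^ 2 * quadraticChar L z.2 ^ 2) * ((1:ℤ) * (if z.2 - b = 0 then (2:ℤ) else 0))
          + (eAux E z.1 ^ 2 * quadraticChar L z.2 ^ 2) * (eAux E (z.1 - a) ^ 2 * quadraticChar L (z.2 - b) ^ 2)
          + (eAux E z.1 ^ 2 * quadraticChar L z.2 ^ 2) * (eAux E (z.1 - a) * quadraticChar L (z.2 - b))
          + (eAux E z.1 * quadraticChar L z.2) * ((1:ℤ) * (if z.2 - b = 0 then (2:ℤ) else 0))
          + (eAux E z.1 * quadraticChar L z.2) * (eAux E (z.1 - a) ^ 2 * quadraticChar L (z.2 - b) ^ 2)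
          + (eAux E z.1 * quadraticChar L z.2) * (eAux E (z.1 - a) * quadraticChar L (z.2 - b))) := by
          refine Finset.sum_congr rfl fun z _ => ?_
          rw [claimA z, claimA (z - (a, b)), Prod.fst_sub, Prod.snd_sub]
          ring
      _ = (q:ℤ) * q + 2 * q - 3 := by
          simp only [Finset.sum_add_distrib]
          rw [E11, E12, E13, E21, E22, E23, E31, E32, E33,
            hKS11, hKS12, hKS13, hKS21, hKS22, hKS23, hKS31, hKS32, hKS33,
            hLS11, hLS12, hLS13, hLS21, hLS22, hLS23, hLS31, hLS32, hLS33]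
          linear_combination ((q:ℤ) * q + 2 * q + 1) * hIJ
  refine ⟨?_, ?_, ?_⟩
  · rw [Nat.card_eq_fintype_card, Fintype.card_prod, hq, hq2]
    have hqq : q * (q + 2) = m + 2 * q := by rw [← hm]; ring
    omega
  · have hDc : Nat.card D = (Finset.univ.filter fun z : K × L => z ∈ D).card :=
      natCard_filter fun z : K × L => z ∈ D
    have ED1 : ∑ z : K × L, (1:ℤ) * (if z.2 = 0 then (2:ℤ) else 0)
        = (∑ _x : K, (1:ℤ)) * (∑ y : L, (if y = 0 then (2:ℤ) else 0)) :=
      prodsum1 (fun _ : K => (1:ℤ)) (fun y : L => if y = 0 then (2:ℤ) else 0)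
    have ED2 : ∑ z : K × L, eAux E z.1 ^ 2 * quadraticChar L z.2 ^ 2
        = (∑ x : K, eAux E x ^ 2) * (∑ y : L, quadraticChar L y ^ 2) :=
      prodsum1 (fun x : K => eAux E x ^ 2) (fun y : L => quadraticChar L y ^ 2)
    have ED3 : ∑ z : K × L, eAux E z.1 * quadraticChar L z.2
        = (∑ x : K, eAux E x) * (∑ y : L, quadraticChar L y) :=
      prodsum1 (fun x : K => eAux E x) (fun y : L => quadraticChar L y)
    have hv1 : ∑ y : L, (if y = 0 then (2:ℤ) else 0) = 2 := by simp
    have hsum2 : (2:ℤ) * (((Finset.univ.filter fun z : K × L => z ∈ D).card : ℕ) : ℤ)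
        = (m:ℤ) + 2 * q - 1 := by
      calc (2:ℤ) * (((Finset.univ.filter fun z : K × L => z ∈ D).card : ℕ) : ℤ)
          = ∑ z : K × L, (if z ∈ D then (2:ℤ) else 0) := by
            rw [Finset.sum_congr rfl fun z _ => show (if z ∈ D then (2:ℤ) else 0)
                = 2 * (if z ∈ D then (1:ℤ) else 0) from by by_cases h : z ∈ D <;> simp [h]]
            rw [← Finset.mul_sum, Finset.sum_boole]
        _ = ∑ z : K × L, ((1:ℤ) * (if z.2 = 0 then (2:ℤ) else 0)
              + eAux E z.1 ^ 2 * quadraticChar L z.2 ^ 2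
              + eAux E z.1 * quadraticChar L z.2) :=
            Finset.sum_congr rfl fun z _ => claimA z
        _ = (m:ℤ) + 2 * q - 1 := by
            simp only [Finset.sum_add_distrib]
            rw [ED1, ED2, ED3, hKcard, hv1, hKe2, hLc2, eAux_sum hskew, hLsum, hm']
            ring
    rw [hDc]
    omega
  · intro g hg
    rw [card_pairs D g, natCard_filter]
    have hk := key g hg
    rw [← hm'] at hk
    omega
end

section
/- Let q and q+2 both be prime powers with q ≡ 3 (mod 4), and let E and F be skew Hadamard difference sets in (F_q, +) that are inequivalent. Define D = {(x,y) : x ∈ E, y a nonzero square in F_{q+2}} ∪ {(x,y) : x ∈ −E, y a nonsquare in F_{q+2}} ∪ {(x,0) : x ∈ F_q}, and D' = {(x,y) : x ∈ F, y a nonzero square in F_{q+2}} ∪ {(x,y) : x ∈ −F, y a nonsquare in F_{q+2}} ∪ {(x,0) : x ∈ F_q}, both subsets of G = (F_q, +) × (F_{q+2}, +). Then D and D' are inequivalent difference sets in G. -/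
/-- Negation as an additive automorphism of an abelian group. -/
def negEquiv (G : Type*) [AddCommGroup G] : G ≃+ G :=
  { Equiv.neg G with map_add' := fun a b => neg_add a b }

lemma areEquivalent_of_pointwise {G : Type*} [AddCommGroup G] (E₁ E₂ : Set G)
    (σ : G ≃+ G) (t : G) (H : ∀ x, x ∈ E₁ ↔ σ x - t ∈ E₂) : AreEquivalent E₁ E₂ := by
  refine ⟨σ, t, ?_⟩
  ext z
  constructor
  · rintro ⟨x, hx, rfl⟩
    exact ⟨σ x - t, (H x).1 hx, by simp⟩
  · rintro ⟨d, hd, rfl⟩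
    refine ⟨σ.symm (d + t), (H _).2 ?_, by simp⟩
    simpa using hd

theorem twin_prime_power_inequivalence {K L : Type*} [Field K] [Field L] [Fintype K] [Fintype L]
    (q : ℕ) (hq : Fintype.card K = q) (hq2 : Fintype.card L = q + 2) (hq4 : q % 4 = 3)
    (E₁ E₂ : Set K)
    (hE₁ : IsDiffSet E₁ q ((q - 1) / 2) ((q - 3) / 4)) (hskew₁ : IsSkewHadamard E₁)
    (hE₂ : IsDiffSet E₂ q ((q - 1) / 2) ((q - 3) / 4)) (hskew₂ : IsSkewHadamard E₂)
    (hineq : ¬ AreEquivalent E₁ E₂) :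
    let D : Set (K × L) :=
      {p | (p.1 ∈ E₁ ∧ p.2 ≠ 0 ∧ IsSquare p.2) ∨
           (p.1 ∈ -E₁ ∧ p.2 ≠ 0 ∧ ¬ IsSquare p.2) ∨ p.2 = 0}
    let D' : Set (K × L) :=
      {p | (p.1 ∈ E₂ ∧ p.2 ≠ 0 ∧ IsSquare p.2) ∨
           (p.1 ∈ -E₂ ∧ p.2 ≠ 0 ∧ ¬ IsSquare p.2) ∨ p.2 = 0}
    ¬ AreEquivalent D D' := by
  intro D D'
  rintro ⟨σ, g, hσ⟩
  have h0E₂ : (0 : K) ∉ E₂ := hskew₂.2.1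
  have h0nE₂ : (0 : K) ∉ -E₂ := by
    intro h; exact h0E₂ (by simpa using Set.mem_neg.mp h)
  -- torsion facts
  have hKt : ∀ x : K, q • x = 0 := by
    intro x; rw [← hq]; exact card_nsmul_eq_zero
  have hLt : ∀ y : L, (q + 2) • y = 0 := by
    intro y; rw [← hq2]; exact card_nsmul_eq_zero
  have hgcd : Nat.gcd q (q + 2) = 1 := by
    have h2 : q % 2 = 1 := by omega
    have hd2 : Nat.gcd q (q + 2) ∣ 2 := by
      have := Nat.dvd_sub (Nat.gcd_dvd_right q (q + 2)) (Nat.gcd_dvd_left q (q + 2))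
      simpa using this
    have hdq : Nat.gcd q (q + 2) ∣ q := Nat.gcd_dvd_left _ _
    rcases (Nat.le_of_dvd (by norm_num) hd2).lt_or_eq with h | h
    · interval_cases hg : Nat.gcd q (q + 2)
      · exfalso; have := Nat.eq_zero_of_gcd_eq_zero_left hg; omega
      · rfl
    · exfalso; rw [h] at hdq; omega
  have hkey : ∀ y : L, q • y = 0 → y = 0 := by
    intro y hy
    have h1 : addOrderOf y ∣ q := addOrderOf_dvd_of_nsmul_eq_zero hy
    have h2 : addOrderOf y ∣ q + 2 := addOrderOf_dvd_of_nsmul_eq_zero (hLt y)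
    have h3 : addOrderOf y = 1 := Nat.eq_one_of_dvd_one (hgcd ▸ Nat.dvd_gcd h1 h2)
    exact AddMonoid.addOrderOf_eq_one_iff.mp h3
  have hkeyK : ∀ x : K, (q + 2) • x = 0 → x = 0 := by
    intro x hx
    have h1 : addOrderOf x ∣ q := addOrderOf_dvd_of_nsmul_eq_zero (hKt x)
    have h2 : addOrderOf x ∣ q + 2 := addOrderOf_dvd_of_nsmul_eq_zero hx
    have h3 : addOrderOf x = 1 := Nat.eq_one_of_dvd_one (hgcd ▸ Nat.dvd_gcd h1 h2)
    exact AddMonoid.addOrderOf_eq_one_iff.mp h3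
  -- membership translation
  have hmemD : ∀ p : K × L, p ∈ D ↔ σ p - g ∈ D' := by
    intro p
    have h1 : p ∈ D ↔ σ p ∈ (⇑σ) '' D := (σ.injective.mem_set_image).symm
    rw [h1, hσ]
    constructor
    · rintro ⟨d, hd, hdg⟩
      have : σ p - g = d := by simp only at hdg; rw [← hdg]; abel
      rwa [this]
    · intro h; exact ⟨σ p - g, h, by simp⟩
  -- the first-component homomorphism
  let f : K →+ K :=
    { toFun := fun x => (σ (x, 0)).1
      map_zero' := by show (σ 0).1 = 0; rw [map_zero]; rfl
      map_add' := by
        intro a b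
        show (σ (a + b, 0)).1 = (σ (a, 0)).1 + (σ (b, 0)).1
        have : ((a + b, 0) : K × L) = (a, 0) + (b, 0) := by
          rw [Prod.mk_add_mk, add_zero]
        rw [this, map_add]; rfl }
  have hsnd : ∀ x : K, (σ (x, 0)).2 = 0 := by
    intro x
    apply hkey
    have h1 : q • σ (x, 0) = 0 := by
      rw [← map_nsmul, Prod.smul_mk, hKt x, smul_zero]
      simp
    calc q • (σ (x, 0)).2 = (q • σ (x, 0)).2 := rfl
      _ = 0 := by rw [h1]; rfl
  have hσx0 : ∀ x : K, σ (x, 0) = (f x, (0 : L)) := by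
    intro x
    exact Prod.ext rfl (hsnd x)
  have hfinj : Function.Injective f := by
    intro a b hab
    have : σ (a, 0) = σ (b, 0) := by
      rw [hσx0, hσx0, hab]
    have := σ.injective this
    exact (Prod.mk.injEq _ _ _ _).mp this |>.1
  have hfbij : Function.Bijective f := (Finite.injective_iff_bijective).mp hfinj
  -- g.2 = 0
  have hg2 : g.2 = 0 := by
    by_contra hg2
    obtain ⟨x₀, hx₀⟩ := hfbij.2 g.1
    have h1 : ((x₀, 0) : K × L) ∈ D := Or.inr (Or.inr rfl)
    have h2 := (hmemD _).1 h1
    rw [hσx0] at h2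
    have h3 : ((f x₀, (0 : L)) - g) = ((0 : K), -g.2) := by
      have : g = (g.1, g.2) := rfl
      rw [this, Prod.mk_sub_mk, hx₀, sub_self, zero_sub]
    rw [h3] at h2
    rcases h2 with ⟨h, _, _⟩ | ⟨h, _, _⟩ | h
    · exact h0E₂ h
    · exact h0nE₂ h
    · exact hg2 (by simpa using h)
  -- σ (0, 1) = (0, c) with c ≠ 0
  set c : L := (σ ((0 : K), (1 : L))).2 with hc_def
  have hfst : (σ ((0 : K), (1 : L))).1 = 0 := by
    apply hkeyK
    have h1 : (q + 2) • σ ((0 : K), (1 : L)) = 0 := by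
      rw [← map_nsmul, Prod.smul_mk, hLt 1, smul_zero]
      simp
    calc (q + 2) • (σ ((0 : K), (1 : L))).1 = ((q + 2) • σ ((0 : K), (1 : L))).1 := rfl
      _ = 0 := by rw [h1]; rfl
  have hσ01 : σ ((0 : K), (1 : L)) = ((0 : K), c) := Prod.ext hfst rfl
  have hcne : c ≠ 0 := by
    intro h
    have h1 : σ ((0 : K), (1 : L)) = (0, 0) := by rw [hσ01, h]
    have h2 : ((0 : K), (1 : L)) = ((0 : K), (0 : L)) := σ.injective (h1.trans (by show (0 : K × L) = σ 0; rw [map_zero]))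
    exact one_ne_zero ((Prod.mk.injEq _ _ _ _).mp h2).2
  have hσx1 : ∀ x : K, σ (x, (1 : L)) = (f x, c) := by
    intro x
    have h1 : ((x, (1 : L)) : K × L) = (x, 0) + (0, 1) := by
      rw [Prod.mk_add_mk, add_zero, zero_add]
    rw [h1, map_add, hσx0, hσ01, Prod.mk_add_mk, add_zero, zero_add]
  -- the key pointwise equivalence
  have hmem1 : ∀ x : K, x ∈ E₁ ↔ ((f x - g.1 : K), c) ∈ D' := by
    intro x
    have hD : ((x, (1 : L)) : K × L) ∈ D ↔ x ∈ E₁ := by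
      constructor
      · rintro (⟨h, _, _⟩ | ⟨_, _, hns⟩ | h0)
        · exact h
        · exact absurd IsSquare.one hns
        · exact absurd h0 one_ne_zero
      · intro h; exact Or.inl ⟨h, one_ne_zero, IsSquare.one⟩
    have hsub : σ ((x, (1 : L)) : K × L) - g = ((f x - g.1 : K), c) := by
      have hgg : g = (g.1, g.2) := rfl
      rw [hσx1, hgg, Prod.mk_sub_mk, hg2, sub_zero]
    rw [← hD, hmemD, hsub]
  rcases em (IsSquare c) with hsq | hsq
  · apply hineq
    refine areEquivalent_of_pointwise E₁ E₂ (AddEquiv.ofBijective f hfbij) g.1 ?_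
    intro x
    rw [hmem1 x]
    show ((f x - g.1 : K), c) ∈ D' ↔ f x - g.1 ∈ E₂
    constructor
    · rintro (⟨h, _, _⟩ | ⟨_, _, hns⟩ | h0)
      · exact h
      · exact absurd hsq hns
      · exact absurd h0 hcne
    · intro h; exact Or.inl ⟨h, hcne, hsq⟩
  · apply hineq
    refine areEquivalent_of_pointwise E₁ E₂
      ((AddEquiv.ofBijective f hfbij).trans (negEquiv K)) (-g.1) ?_
    intro x
    rw [hmem1 x]
    have hmemneg : ((f x - g.1 : K), c) ∈ D' ↔ f x - g.1 ∈ -E₂ := by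
      constructor
      · rintro (⟨_, _, hs⟩ | ⟨h, _, _⟩ | h0)
        · exact absurd hs hsq
        · exact h
        · exact absurd h0 hcne
      · intro h; exact Or.inr (Or.inl ⟨h, hcne, hsq⟩)
    rw [hmemneg]
    show f x - g.1 ∈ -E₂ ↔ -(f x) - -g.1 ∈ E₂
    rw [Set.mem_neg]
    have heq : -(f x - g.1) = -(f x) - -g.1 := by abel
    rw [heq]
end

section
/- Let q and q+2 both be prime powers with q ≡ 3 (mod 4), let E be a skew Hadamard difference set in (F_q, +), and let Q be a (q+2, (q+1)/2, (q−3)/4, (q+1)/4) partial difference set in (F_{q+2}, +) with 0 ∉ Q. Then the set D' = {(x,y) : x ∈ E, y ∈ Q} ∪ {(x,y) : x ∈ −E, y ∈ F_{q+2}* \ Q} ∪ {(x,0) : x ∈ F_q} is a (4n−1, 2n−1, n−1) difference set in (F_q, +) × (F_{q+2}, +), where n = (q+1)²/4. -/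
/-- `Q` is a `(v,k,λ,μ)` partial difference set in the finite abelian group `H`:
every nonzero element of `Q` is represented exactly `λ` times as a difference of two
elements of `Q`, and every nonzero element outside `Q` exactly `μ` times. -/
def IsPartialDiffSet {H : Type*} [AddCommGroup H] (Q : Set H) (v k l mu : ℕ) : Prop :=
  Nat.card H = v ∧ Nat.card Q = k ∧
    (∀ g : H, g ≠ 0 → g ∈ Q →
      Nat.card {p : H × H | p.1 ∈ Q ∧ p.2 ∈ Q ∧ p.1 - p.2 = g} = l) ∧
    (∀ g : H, g ≠ 0 → g ∉ Q →
      Nat.card {p : H × H | p.1 ∈ Q ∧ p.2 ∈ Q ∧ p.1 - p.2 = g} = mu)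


noncomputable def dcnt {G : Type*} [AddCommGroup G] (S T : Set G) (g : G) : ℕ :=
  Nat.card {p : G × G | p.1 ∈ S ∧ p.2 ∈ T ∧ p.1 - p.2 = g}

lemma dcnt_union_left {G : Type*} [AddCommGroup G] [Finite G] {S1 S2 : Set G}
    (h : Disjoint S1 S2) (T : Set G) (g : G) :
    dcnt (S1 ∪ S2) T g = dcnt S1 T g + dcnt S2 T g := by
  unfold dcnt
  have hset : {p : G × G | p.1 ∈ S1 ∪ S2 ∧ p.2 ∈ T ∧ p.1 - p.2 = g}
      = {p : G × G | p.1 ∈ S1 ∧ p.2 ∈ T ∧ p.1 - p.2 = g}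
        ∪ {p : G × G | p.1 ∈ S2 ∧ p.2 ∈ T ∧ p.1 - p.2 = g} := by
    ext p; simp only [Set.mem_union, Set.mem_setOf_eq]; tauto
  have hdis : Disjoint {p : G × G | p.1 ∈ S1 ∧ p.2 ∈ T ∧ p.1 - p.2 = g}
      {p : G × G | p.1 ∈ S2 ∧ p.2 ∈ T ∧ p.1 - p.2 = g} := by
    rw [Set.disjoint_left]
    rintro p ⟨h1, -, -⟩ ⟨h2, -, -⟩
    exact Set.disjoint_left.1 h h1 h2
  rw [hset, Nat.card_coe_set_eq, Nat.card_coe_set_eq, Nat.card_coe_set_eq,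
    Set.ncard_union_eq hdis (Set.toFinite _) (Set.toFinite _)]

lemma dcnt_union_right {G : Type*} [AddCommGroup G] [Finite G] {T1 T2 : Set G}
    (h : Disjoint T1 T2) (S : Set G) (g : G) :
    dcnt S (T1 ∪ T2) g = dcnt S T1 g + dcnt S T2 g := by
  unfold dcnt
  have hset : {p : G × G | p.1 ∈ S ∧ p.2 ∈ T1 ∪ T2 ∧ p.1 - p.2 = g}
      = {p : G × G | p.1 ∈ S ∧ p.2 ∈ T1 ∧ p.1 - p.2 = g}
        ∪ {p : G × G | p.1 ∈ S ∧ p.2 ∈ T2 ∧ p.1 - p.2 = g} := by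
    ext p; simp only [Set.mem_union, Set.mem_setOf_eq]; tauto
  have hdis : Disjoint {p : G × G | p.1 ∈ S ∧ p.2 ∈ T1 ∧ p.1 - p.2 = g}
      {p : G × G | p.1 ∈ S ∧ p.2 ∈ T2 ∧ p.1 - p.2 = g} := by
    rw [Set.disjoint_left]
    rintro p ⟨-, h1, -⟩ ⟨-, h2, -⟩
    exact Set.disjoint_left.1 h h1 h2
  rw [hset, Nat.card_coe_set_eq, Nat.card_coe_set_eq, Nat.card_coe_set_eq,
    Set.ncard_union_eq hdis (Set.toFinite _) (Set.toFinite _)]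

lemma dcnt_prod {K L : Type*} [AddCommGroup K] [AddCommGroup L]
    (S1 S2 : Set K) (T1 T2 : Set L) (a : K) (b : L) :
    dcnt (S1 ×ˢ T1) (S2 ×ˢ T2) ((a, b) : K × L) = dcnt S1 S2 a * dcnt T1 T2 b := by
  unfold dcnt
  rw [← Nat.card_prod]
  apply Nat.card_congr
  refine ⟨fun p => (⟨(p.1.1.1, p.1.2.1), p.2.1.1, p.2.2.1.1, congrArg Prod.fst p.2.2.2⟩,
                    ⟨(p.1.1.2, p.1.2.2), p.2.1.2, p.2.2.1.2, congrArg Prod.snd p.2.2.2⟩),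
          fun q => ⟨((q.1.1.1, q.2.1.1), (q.1.1.2, q.2.1.2)),
                    ⟨q.1.2.1, q.2.2.1⟩, ⟨q.1.2.2.1, q.2.2.2.1⟩, ?_⟩, fun p => rfl, fun q => rfl⟩
  have h1 := q.1.2.2.2
  have h2 := q.2.2.2.2
  exact Prod.ext h1 h2

lemma dcnt_univ_right {G : Type*} [AddCommGroup G] (S : Set G) (g : G) :
    dcnt S Set.univ g = Nat.card S := by
  apply Nat.card_congr
  refine ⟨fun p => ⟨p.1.1, p.2.1⟩,
          fun x => ⟨(x.1, x.1 - g), x.2, trivial, sub_sub_cancel _ _⟩, ?_, fun x => rfl⟩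
  rintro ⟨⟨x, y⟩, hx, -, h⟩
  simp only [Subtype.mk.injEq, Prod.mk.injEq, true_and]
  rw [← h]
  abel

lemma dcnt_univ_left {G : Type*} [AddCommGroup G] (S : Set G) (g : G) :
    dcnt Set.univ S g = Nat.card S := by
  apply Nat.card_congr
  refine ⟨fun p => ⟨p.1.2, p.2.2.1⟩,
          fun y => ⟨(g + y.1, y.1), trivial, y.2, add_sub_cancel_right _ _⟩, ?_, fun y => rfl⟩
  rintro ⟨⟨x, y⟩, -, hy, h⟩
  simp only [Subtype.mk.injEq, Prod.mk.injEq, and_true]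
  rw [← h]
  abel

lemma dcnt_zero {G : Type*} [AddCommGroup G] (S T : Set G) :
    dcnt S T 0 = Nat.card ↥(S ∩ T) := by
  apply Nat.card_congr
  refine ⟨fun p => ⟨p.1.1, p.2.1, ?_⟩,
          fun x => ⟨(x.1, x.1), x.2.1, x.2.2, sub_self _⟩, ?_, fun x => rfl⟩
  · have h := p.2.2.2
    rw [sub_eq_zero] at h
    exact h ▸ p.2.2.1
  · rintro ⟨⟨x, y⟩, hx, hy, h⟩
    rw [sub_eq_zero] at h
    exact Subtype.ext (Prod.ext rfl h)

lemma dcnt_singleton_right {G : Type*} [AddCommGroup G] (S : Set G) (g : G) [Decidable (g ∈ S)] :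
    dcnt S {0} g = if g ∈ S then 1 else 0 := by
  unfold dcnt
  split_ifs with h
  · rw [show {p : G × G | p.1 ∈ S ∧ p.2 ∈ ({0} : Set G) ∧ p.1 - p.2 = g}
        = {((g : G), (0 : G))} from ?_]
    · rw [Nat.card_coe_set_eq, Set.ncard_singleton]
    · ext ⟨x, y⟩
      simp only [Set.mem_setOf_eq, Set.mem_singleton_iff, Prod.mk.injEq]
      constructor
      · rintro ⟨hx, rfl, hdd⟩
        rw [sub_zero] at hdd
        exact ⟨hdd, rfl⟩
      · rintro ⟨rfl, rfl⟩
        exact ⟨h, rfl, sub_zero _⟩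
  · rw [show {p : G × G | p.1 ∈ S ∧ p.2 ∈ ({0} : Set G) ∧ p.1 - p.2 = g}
        = (∅ : Set (G × G)) from ?_]
    · rw [Nat.card_coe_set_eq, Set.ncard_empty]
    · ext ⟨x, y⟩
      simp only [Set.mem_setOf_eq, Set.mem_empty_iff_false, iff_false]
      rintro ⟨hx, rfl, hdd⟩
      rw [sub_zero] at hdd
      exact h (hdd ▸ hx)

lemma dcnt_singleton_left {G : Type*} [AddCommGroup G] (S : Set G) (g : G) [Decidable (-g ∈ S)] :
    dcnt {0} S g = if -g ∈ S then 1 else 0 := by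
  unfold dcnt
  split_ifs with h
  · rw [show {p : G × G | p.1 ∈ ({0} : Set G) ∧ p.2 ∈ S ∧ p.1 - p.2 = g}
        = {((0 : G), (-g : G))} from ?_]
    · rw [Nat.card_coe_set_eq, Set.ncard_singleton]
    · ext ⟨x, y⟩
      simp only [Set.mem_setOf_eq, Set.mem_singleton_iff, Prod.mk.injEq]
      constructor
      · rintro ⟨rfl, hy, hdd⟩
        rw [zero_sub] at hdd
        exact ⟨rfl, by rw [← hdd, neg_neg]⟩
      · rintro ⟨rfl, rfl⟩
        exact ⟨rfl, h, by rw [zero_sub, neg_neg]⟩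
  · rw [show {p : G × G | p.1 ∈ ({0} : Set G) ∧ p.2 ∈ S ∧ p.1 - p.2 = g}
        = (∅ : Set (G × G)) from ?_]
    · rw [Nat.card_coe_set_eq, Set.ncard_empty]
    · ext ⟨x, y⟩
      simp only [Set.mem_setOf_eq, Set.mem_empty_iff_false, iff_false]
      rintro ⟨rfl, hy, hdd⟩
      rw [zero_sub] at hdd
      exact h (by rw [← hdd, neg_neg]; exact hy)

lemma dcnt_comm {G : Type*} [AddCommGroup G] (S T : Set G) (g : G) :
    dcnt S T g = dcnt T S (-g) := by
  apply Nat.card_congr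
  exact (Equiv.prodComm G G).subtypeEquiv (by
    rintro ⟨x, y⟩
    simp only [Set.mem_setOf_eq, Equiv.prodComm_apply, Prod.swap_prod_mk]
    constructor
    · rintro ⟨h1, h2, h3⟩
      exact ⟨h2, h1, by rw [← h3, neg_sub]⟩
    · rintro ⟨h1, h2, h3⟩
      exact ⟨h2, h1, by rw [← neg_neg g, ← h3, neg_sub]⟩)

lemma dcnt_neg {G : Type*} [AddCommGroup G] {S S' T T' : Set G}
    (hS : ∀ x, x ∈ S' ↔ -x ∈ S) (hT : ∀ x, x ∈ T' ↔ -x ∈ T) (g : G) :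
    dcnt S' T' g = dcnt S T (-g) := by
  apply Nat.card_congr
  exact (Equiv.neg (G × G)).subtypeEquiv (by
    rintro ⟨x, y⟩
    simp only [Set.mem_setOf_eq, Equiv.neg_apply, Prod.neg_mk]
    constructor
    · rintro ⟨h1, h2, h3⟩
      exact ⟨(hS x).1 h1, (hT y).1 h2, by rw [neg_sub_neg, ← h3, neg_sub]⟩
    · rintro ⟨h1, h2, h3⟩
      refine ⟨(hS x).2 h1, (hT y).2 h2, ?_⟩
      rw [neg_sub_neg] at h3
      rw [← neg_neg g, ← h3, neg_sub])

lemma card_set_neg {G : Type*} [AddCommGroup G] (S : Set G) :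
    Nat.card ↥(-S) = Nat.card ↥S := by
  apply Nat.card_congr
  refine ⟨fun x => ⟨-x.1, x.2⟩, fun x => ⟨-x.1, by simp [x.2]⟩, ?_, ?_⟩
  · rintro ⟨x, hx⟩
    exact Subtype.ext (neg_neg _)
  · rintro ⟨x, hx⟩
    exact Subtype.ext (neg_neg _)

lemma card_set_prod {K L : Type*} (S : Set K) (T : Set L) :
    Nat.card ↥(S ×ˢ T) = Nat.card S * Nat.card T := by
  rw [Nat.card_congr (Equiv.Set.prod S T), Nat.card_prod]

set_option maxHeartbeats 2000000 in
theorem twin_prime_power_pds_variation {K L : Type*} [Field K] [Field L] [Fintype K] [Fintype L]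
    (q : ℕ) (hq : Fintype.card K = q) (hq2 : Fintype.card L = q + 2) (hq4 : q % 4 = 3)
    (E : Set K)
    (hE : IsDiffSet E q ((q - 1) / 2) ((q - 3) / 4)) (hskew : IsSkewHadamard E)
    (Q : Set L)
    (hQ : IsPartialDiffSet Q (q + 2) ((q + 1) / 2) ((q - 3) / 4) ((q + 1) / 4))
    (hQ0 : (0 : L) ∉ Q) :
    let n := (q + 1) ^ 2 / 4
    let D' : Set (K × L) :=
      {p | (p.1 ∈ E ∧ p.2 ∈ Q) ∨
           (p.1 ∈ -E ∧ p.2 ≠ 0 ∧ p.2 ∉ Q) ∨ p.2 = 0}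
    IsDiffSet D' (4 * n - 1) (2 * n - 1) (n - 1) := by
  intro n D'
  classical
  obtain ⟨hKcard, hEcard, hEdiff⟩ := hE
  obtain ⟨hDisj, hE0, hEuniv⟩ := hskew
  obtain ⟨hLcard, hQcard, hQlam, hQmu⟩ := hQ
  obtain ⟨m, rfl⟩ : ∃ m, q = 4 * m + 3 := ⟨q / 4, by omega⟩
  have hn : n = 4 * (m + 1) ^ 2 := by
    show (4 * m + 3 + 1) ^ 2 / 4 = 4 * (m + 1) ^ 2
    rw [show (4 * m + 3 + 1) ^ 2 = 4 * (4 * (m + 1) ^ 2) by ring]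
    omega
  have hEcard' : Nat.card ↥E = 2 * m + 1 := by rw [hEcard]; omega
  have hQcard' : Nat.card ↥Q = 2 * m + 2 := by rw [hQcard]; omega
  have hEd : ∀ a : K, a ≠ 0 → dcnt E E a = m := by
    intro a ha
    have h := hEdiff a ha
    rw [show (4 * m + 3 - 3) / 4 = m by omega] at h
    exact h
  have hQl : ∀ y : L, y ≠ 0 → y ∈ Q → dcnt Q Q y = m := by
    intro y hy hyQ
    have h := hQlam y hy hyQ
    rw [show (4 * m + 3 - 3) / 4 = m by omega] at h
    exact h
  have hQm : ∀ y : L, y ≠ 0 → y ∉ Q → dcnt Q Q y = m + 1 := by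
    intro y hy hyQ
    have h := hQmu y hy hyQ
    rw [show (4 * m + 3 + 1) / 4 = m + 1 by omega] at h
    exact h
  have hnegE : ∀ x : K, x ∈ -E ↔ -x ∈ E := fun x => Set.mem_neg
  have hQsymm : ∀ y : L, y ∈ Q → -y ∈ Q := by
    intro y hy
    by_contra hny
    have hy0 : y ≠ 0 := fun h => hQ0 (h ▸ hy)
    have h1 := hQl y hy0 hy
    have h2 := hQm (-y) (neg_ne_zero.2 hy0) hny
    rw [dcnt_comm] at h1
    omega
  set Q' : Set L := {y : L | y ≠ 0 ∧ y ∉ Q} with hQ'def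
  have hQ'mem : ∀ y : L, y ∈ Q' ↔ y ≠ 0 ∧ y ∉ Q := fun y => Iff.rfl
  have hQuniv : Q ∪ Q' ∪ {0} = (Set.univ : Set L) := by
    ext y
    simp only [Set.mem_union, Set.mem_singleton_iff, Set.mem_univ, iff_true, hQ'mem]
    by_cases h : y = 0 <;> by_cases h2 : y ∈ Q <;> tauto
  have hdQQ' : Disjoint Q Q' := by
    rw [Set.disjoint_left]
    intro y hy hy'
    exact ((hQ'mem y).1 hy').2 hy
  have hdQ0 : Disjoint (Q ∪ Q') ({0} : Set L) := by
    rw [Set.disjoint_left]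
    rintro y hy rfl
    rcases hy with h | h
    · exact hQ0 h
    · exact ((hQ'mem 0).1 h).1 rfl
  have hdE0 : Disjoint (E ∪ (-E)) ({0} : Set K) := by
    rw [Set.disjoint_left]
    rintro x hx rfl
    rcases hx with h | h
    · exact hE0 h
    · exact hE0 (by simpa using (hnegE 0).1 h)
  have hKsplitR : ∀ (S : Set K) (a : K),
      dcnt S Set.univ a = dcnt S E a + dcnt S (-E) a + dcnt S {0} a := by
    intro S a
    rw [← hEuniv, dcnt_union_right hdE0, dcnt_union_right hDisj]
  have hKsplitL : ∀ (S : Set K) (a : K),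
      dcnt Set.univ S a = dcnt E S a + dcnt (-E) S a + dcnt {0} S a := by
    intro S a
    rw [← hEuniv, dcnt_union_left hdE0, dcnt_union_left hDisj]
  have hLsplitR : ∀ (S : Set L) (b : L),
      dcnt S Set.univ b = dcnt S Q b + dcnt S Q' b + dcnt S {0} b := by
    intro S b
    rw [← hQuniv, dcnt_union_right hdQ0, dcnt_union_right hdQQ']
  have hLsplitL : ∀ (S : Set L) (b : L),
      dcnt Set.univ S b = dcnt Q S b + dcnt Q' S b + dcnt {0} S b := by
    intro S b
    rw [← hQuniv, dcnt_union_left hdQ0, dcnt_union_left hdQQ']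
  have hQ'card : Nat.card ↥Q' = 2 * m + 2 := by
    have h1 : (Set.univ : Set L).ncard = 4 * m + 5 := by
      rw [Set.ncard_univ, hLcard]
    rw [← hQuniv, Set.ncard_union_eq hdQ0 (Set.toFinite _) (Set.toFinite _),
      Set.ncard_union_eq hdQQ' (Set.toFinite _) (Set.toFinite _), Set.ncard_singleton] at h1
    have h2 : Q.ncard = 2 * m + 2 := by rw [← Nat.card_coe_set_eq]; exact hQcard'
    rw [Nat.card_coe_set_eq]
    omega
  have hEneg_card : Nat.card ↥(-E) = 2 * m + 1 := by rw [card_set_neg]; exact hEcard'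
  have htri : ∀ x : K, x ≠ 0 → (x ∈ E ∧ -x ∉ E) ∨ (x ∉ E ∧ -x ∈ E) := by
    intro x hx
    have h1 : x ∈ E ∪ (-E) ∪ {0} := by rw [hEuniv]; trivial
    have h2 : ¬(x ∈ E ∧ -x ∈ E) := fun h => Set.disjoint_left.1 hDisj h.1 ((hnegE x).2 h.2)
    rcases h1 with (h | h) | h
    · exact Or.inl ⟨h, fun hc => h2 ⟨h, hc⟩⟩
    · exact Or.inr ⟨fun hc => h2 ⟨hc, (hnegE x).1 h⟩, (hnegE x).1 h⟩
    · exact (hx h).elim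
  have hdAB : Disjoint (E ×ˢ Q) ((-E) ×ˢ Q') := by
    rw [Set.disjoint_left]
    rintro ⟨x, y⟩ ⟨hx, hy⟩ ⟨hx', hy'⟩
    exact Set.disjoint_left.1 hDisj hx hx'
  have hdC : Disjoint ((E ×ˢ Q) ∪ ((-E) ×ˢ Q')) (Set.univ ×ˢ ({0} : Set L)) := by
    rw [Set.disjoint_left]
    rintro ⟨x, y⟩ h ⟨-, hy0⟩
    rw [Set.mem_singleton_iff] at hy0
    subst hy0
    rcases h with ⟨-, hy⟩ | ⟨-, hy⟩
    · exact hQ0 hy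
    · exact ((hQ'mem 0).1 hy).1 rfl
  have hD'eq : D' = (E ×ˢ Q) ∪ ((-E) ×ˢ Q') ∪ (Set.univ ×ˢ ({0} : Set L)) := by
    ext ⟨x, y⟩
    simp only [D', Set.mem_setOf_eq, Set.mem_union, Set.mem_prod, Set.mem_univ, true_and,
      Set.mem_singleton_iff, hQ'mem]
    tauto
  refine ⟨?_, ?_, ?_⟩
  · rw [Nat.card_eq_fintype_card, Fintype.card_prod, hq, hq2, hn]
    symm
    exact Nat.sub_eq_of_eq_add (by ring)
  · rw [hD'eq, hn, Nat.card_coe_set_eq,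
      Set.ncard_union_eq hdC (Set.toFinite _) (Set.toFinite _),
      Set.ncard_union_eq hdAB (Set.toFinite _) (Set.toFinite _)]
    have p1 : (E ×ˢ Q).ncard = (2 * m + 1) * (2 * m + 2) := by
      rw [← Nat.card_coe_set_eq, card_set_prod, hEcard', hQcard']
    have p2 : ((-E) ×ˢ Q').ncard = (2 * m + 1) * (2 * m + 2) := by
      rw [← Nat.card_coe_set_eq, card_set_prod, hEneg_card, hQ'card]
    have p3 : ((Set.univ : Set K) ×ˢ ({0} : Set L)).ncard = 4 * m + 3 := by
      rw [← Nat.card_coe_set_eq, card_set_prod, Nat.card_coe_set_eq,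
        Nat.card_coe_set_eq, Set.ncard_univ, Set.ncard_singleton, hKcard, mul_one]
    rw [p1, p2, p3]
    symm
    exact Nat.sub_eq_of_eq_add (by ring)
  · rintro ⟨a, b⟩ hg
    show dcnt D' D' (a, b) = n - 1
    rw [hD'eq, hn,
      dcnt_union_left hdC, dcnt_union_left hdAB,
      dcnt_union_right hdC, dcnt_union_right hdAB,
      dcnt_union_right hdC, dcnt_union_right hdAB,
      dcnt_union_right hdC, dcnt_union_right hdAB]
    simp only [dcnt_prod]
    -- univ-row K facts (valid for any a)
    have kEu : dcnt E Set.univ a = 2 * m + 1 := by rw [dcnt_univ_right]; exact hEcard'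
    have kuE : dcnt Set.univ E a = 2 * m + 1 := by rw [dcnt_univ_left]; exact hEcard'
    have kE'u : dcnt (-E) Set.univ a = 2 * m + 1 := by rw [dcnt_univ_right]; exact hEneg_card
    have kuE' : dcnt Set.univ (-E) a = 2 * m + 1 := by rw [dcnt_univ_left]; exact hEneg_card
    have kuu : dcnt (Set.univ : Set K) Set.univ a = 4 * m + 3 := by
      rw [dcnt_univ_right, Nat.card_coe_set_eq, Set.ncard_univ, hKcard]
    by_cases hb : b = 0
    · -- case b = 0, a ≠ 0
      subst hb
      have ha : a ≠ 0 := fun h => hg (by rw [h]; rfl)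
      have l1 : dcnt Q Q (0 : L) = 2 * m + 2 := by
        rw [dcnt_zero, Set.inter_self]; exact hQcard'
      have l2 : dcnt Q ({0} : Set L) 0 = 0 := by
        rw [dcnt_singleton_right, if_neg hQ0]
      have l3 : dcnt ({0} : Set L) Q 0 = 0 := by
        rw [dcnt_singleton_left, if_neg (by simpa using hQ0)]
      have l4 : dcnt Q Q' (0 : L) = 0 := by
        rw [dcnt_zero, Set.disjoint_iff_inter_eq_empty.1 hdQQ']
        simp [Nat.card_coe_set_eq]
      have l5 : dcnt Q' Q (0 : L) = 0 := by
        rw [dcnt_zero, Set.inter_comm, Set.disjoint_iff_inter_eq_empty.1 hdQQ']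
        simp [Nat.card_coe_set_eq]
      have l6 : dcnt Q' Q' (0 : L) = 2 * m + 2 := by
        rw [dcnt_zero, Set.inter_self]; exact hQ'card
      have l7 : dcnt Q' ({0} : Set L) 0 = 0 := by
        rw [dcnt_singleton_right, if_neg (fun h => ((hQ'mem 0).1 h).1 rfl)]
      have l8 : dcnt ({0} : Set L) Q' 0 = 0 := by
        rw [dcnt_singleton_left, if_neg]
        rw [neg_zero]
        exact fun h => ((hQ'mem 0).1 h).1 rfl
      have l9 : dcnt ({0} : Set L) ({0} : Set L) 0 = 1 := by
        rw [dcnt_singleton_right, if_pos (Set.mem_singleton (0 : L))]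
      have k1 : dcnt E E a = m := hEd a ha
      have k2 : dcnt (-E) (-E) a = m := by
        rw [dcnt_neg hnegE hnegE]
        exact hEd (-a) (neg_ne_zero.2 ha)
      rw [l1, l2, l3, l4, l5, l6, l7, l8, l9, k1, k2, kuu]
      simp only [mul_zero, zero_mul, mul_one, add_zero, zero_add]
      symm
      exact Nat.sub_eq_of_eq_add (by ring)
    · -- case b ≠ 0
      -- L-side values
      have lQu : dcnt Q Set.univ b = 2 * m + 2 := by rw [dcnt_univ_right]; exact hQcard'
      have luQ : dcnt Set.univ Q b = 2 * m + 2 := by rw [dcnt_univ_left]; exact hQcard'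
      have lQ'u : dcnt Q' Set.univ b = 2 * m + 2 := by rw [dcnt_univ_right]; exact hQ'card
      have l9 : dcnt ({0} : Set L) ({0} : Set L) b = 0 := by
        rw [dcnt_singleton_right, if_neg (by simpa using hb)]
      by_cases hbQ : b ∈ Q
      · have l1 : dcnt Q Q b = m := hQl b hb hbQ
        have l2 : dcnt Q ({0} : Set L) b = 1 := by
          rw [dcnt_singleton_right, if_pos hbQ]
        have l3 : dcnt ({0} : Set L) Q b = 1 := by
          rw [dcnt_singleton_left, if_pos (hQsymm b hbQ)]
        have l4 : dcnt Q' ({0} : Set L) b = 0 := by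
          rw [dcnt_singleton_right, if_neg (fun h => ((hQ'mem b).1 h).2 hbQ)]
        have l5 : dcnt ({0} : Set L) Q' b = 0 := by
          rw [dcnt_singleton_left, if_neg (fun h => ((hQ'mem (-b)).1 h).2 (hQsymm b hbQ))]
        have l6 : dcnt Q Q' b = m + 1 := by have hs := hLsplitR Q b; omega
        have l7 : dcnt Q' Q b = m + 1 := by have hs := hLsplitL Q b; omega
        have l8 : dcnt Q' Q' b = m + 1 := by have hs := hLsplitR Q' b; omega
        by_cases ha : a = 0
        · subst ha
          have k1 : dcnt E E (0 : K) = 2 * m + 1 := by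
            rw [dcnt_zero, Set.inter_self]; exact hEcard'
          have k2 : dcnt E (-E) (0 : K) = 0 := by
            rw [dcnt_zero, Set.disjoint_iff_inter_eq_empty.1 hDisj]
            simp [Nat.card_coe_set_eq]
          have k3 : dcnt (-E) E (0 : K) = 0 := by
            rw [dcnt_zero, Set.inter_comm, Set.disjoint_iff_inter_eq_empty.1 hDisj]
            simp [Nat.card_coe_set_eq]
          have k4 : dcnt (-E) (-E) (0 : K) = 2 * m + 1 := by
            rw [dcnt_zero, Set.inter_self]; exact hEneg_card
          rw [l1, l2, l3, l4, l5, l6, l7, l8, l9, k1, k2, k3, k4, kEu, kuE, kE'u, kuE', kuu]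
          symm
          exact Nat.sub_eq_of_eq_add (by ring)
        · have k1 : dcnt E E a = m := hEd a ha
          have k2 : dcnt (-E) (-E) a = m := by
            rw [dcnt_neg hnegE hnegE]
            exact hEd (-a) (neg_ne_zero.2 ha)
          rcases htri a ha with ⟨haE, hanE⟩ | ⟨haE, hanE⟩
          · have kE0 : dcnt E ({0} : Set K) a = 1 := by
              rw [dcnt_singleton_right, if_pos haE]
            have k0E : dcnt ({0} : Set K) E a = 0 := by
              rw [dcnt_singleton_left, if_neg hanE]
            have k5 : dcnt E (-E) a = m := by have hs := hKsplitR E a; omega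
            have k6 : dcnt (-E) E a = m + 1 := by have hs := hKsplitL E a; omega
            rw [l1, l2, l3, l4, l5, l6, l7, l8, l9, k1, k2, k5, k6, kEu, kuE, kE'u, kuE', kuu]
            symm
            exact Nat.sub_eq_of_eq_add (by ring)
          · have kE0 : dcnt E ({0} : Set K) a = 0 := by
              rw [dcnt_singleton_right, if_neg haE]
            have k0E : dcnt ({0} : Set K) E a = 1 := by
              rw [dcnt_singleton_left, if_pos hanE]
            have k5 : dcnt E (-E) a = m + 1 := by have hs := hKsplitR E a; omega
            have k6 : dcnt (-E) E a = m := by have hs := hKsplitL E a; omega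
            rw [l1, l2, l3, l4, l5, l6, l7, l8, l9, k1, k2, k5, k6, kEu, kuE, kE'u, kuE', kuu]
            symm
            exact Nat.sub_eq_of_eq_add (by ring)
      · have hnbQ : -b ∉ Q := fun h => hbQ (by simpa using hQsymm (-b) h)
        have l1 : dcnt Q Q b = m + 1 := hQm b hb hbQ
        have l2 : dcnt Q ({0} : Set L) b = 0 := by
          rw [dcnt_singleton_right, if_neg hbQ]
        have l3 : dcnt ({0} : Set L) Q b = 0 := by
          rw [dcnt_singleton_left, if_neg hnbQ]
        have l4 : dcnt Q' ({0} : Set L) b = 1 := by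
          rw [dcnt_singleton_right, if_pos ((hQ'mem b).2 ⟨hb, hbQ⟩)]
        have l5 : dcnt ({0} : Set L) Q' b = 1 := by
          rw [dcnt_singleton_left, if_pos ((hQ'mem (-b)).2 ⟨neg_ne_zero.2 hb, hnbQ⟩)]
        have l6 : dcnt Q Q' b = m + 1 := by have hs := hLsplitR Q b; omega
        have l7 : dcnt Q' Q b = m + 1 := by have hs := hLsplitL Q b; omega
        have l8 : dcnt Q' Q' b = m := by have hs := hLsplitR Q' b; omega
        by_cases ha : a = 0
        · subst ha
          have k1 : dcnt E E (0 : K) = 2 * m + 1 := by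
            rw [dcnt_zero, Set.inter_self]; exact hEcard'
          have k2 : dcnt E (-E) (0 : K) = 0 := by
            rw [dcnt_zero, Set.disjoint_iff_inter_eq_empty.1 hDisj]
            simp [Nat.card_coe_set_eq]
          have k3 : dcnt (-E) E (0 : K) = 0 := by
            rw [dcnt_zero, Set.inter_comm, Set.disjoint_iff_inter_eq_empty.1 hDisj]
            simp [Nat.card_coe_set_eq]
          have k4 : dcnt (-E) (-E) (0 : K) = 2 * m + 1 := by
            rw [dcnt_zero, Set.inter_self]; exact hEneg_card
          rw [l1, l2, l3, l4, l5, l6, l7, l8, l9, k1, k2, k3, k4, kEu, kuE, kE'u, kuE', kuu]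
          symm
          exact Nat.sub_eq_of_eq_add (by ring)
        · have k1 : dcnt E E a = m := hEd a ha
          have k2 : dcnt (-E) (-E) a = m := by
            rw [dcnt_neg hnegE hnegE]
            exact hEd (-a) (neg_ne_zero.2 ha)
          rcases htri a ha with ⟨haE, hanE⟩ | ⟨haE, hanE⟩
          · have kE0 : dcnt E ({0} : Set K) a = 1 := by
              rw [dcnt_singleton_right, if_pos haE]
            have k0E : dcnt ({0} : Set K) E a = 0 := by
              rw [dcnt_singleton_left, if_neg hanE]
            have k5 : dcnt E (-E) a = m := by have hs := hKsplitR E a; omega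
            have k6 : dcnt (-E) E a = m + 1 := by have hs := hKsplitL E a; omega
            rw [l1, l2, l3, l4, l5, l6, l7, l8, l9, k1, k2, k5, k6, kEu, kuE, kE'u, kuE', kuu]
            symm
            exact Nat.sub_eq_of_eq_add (by ring)
          · have kE0 : dcnt E ({0} : Set K) a = 0 := by
              rw [dcnt_singleton_right, if_neg haE]
            have k0E : dcnt ({0} : Set K) E a = 1 := by
              rw [dcnt_singleton_left, if_pos hanE]
            have k5 : dcnt E (-E) a = m + 1 := by have hs := hKsplitR E a; omega
            have k6 : dcnt (-E) E a = m := by have hs := hKsplitL E a; omega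
            rw [l1, l2, l3, l4, l5, l6, l7, l8, l9, k1, k2, k5, k6, kEu, kuE, kE'u, kuE', kuu]
            symm
            exact Nat.sub_eq_of_eq_add (by ring)
end

section
/- Let m = 2h+1 be a positive odd integer, q = 3^m, and α = 3^{(m+1)/2} = 3^{h+1}. For every integer a with 0 ≤ a ≤ q−2, the base-3 digit sums satisfy s(a) + s((q−1)/2 − a(α+2)) ≥ m. -/
open Finset

private def s3 (n : ℕ) : ℕ := (Nat.digits 3 n).sum

private lemma s3_step (d t : ℕ) (hd : d < 3) : s3 (d + 3 * t) = d + s3 t := by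
  rcases Nat.eq_zero_or_pos (d + 3 * t) with h | h
  · have hd0 : d = 0 := by omega
    have ht0 : t = 0 := by omega
    simp [hd0, ht0, s3]
  · rw [s3, Nat.digits_def' (by norm_num : 1 < 3) h]
    have h1 : (d + 3 * t) % 3 = d := by omega
    have h2 : (d + 3 * t) / 3 = t := by omega
    rw [h1, h2, List.sum_cons]; rfl

private lemma s3_eq (n : ℕ) : s3 n = n % 3 + s3 (n / 3) := by
  conv_lhs => rw [show n = n % 3 + 3 * (n / 3) by omega]
  rw [s3_step _ _ (by omega)]

/-- digit sum of a number given by bounded digits -/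
private lemma s3_ofdigits (f : ℕ → ℕ) (hf : ∀ i, f i ≤ 2) :
    ∀ m, s3 (∑ i ∈ range m, f i * 3 ^ i) = ∑ i ∈ range m, f i := by
  intro m
  induction m generalizing f with
  | zero => simp [s3]
  | succ m ih =>
    rw [Finset.sum_range_succ' (fun i => f i * 3 ^ i), Finset.sum_range_succ' f]
    have e1 : ∀ i, f (i+1) * 3 ^ (i+1) = 3 * (f (i+1) * 3 ^ i) := by
      intro i; rw [pow_succ]; ring
    rw [Finset.sum_congr rfl (fun i _ => e1 i), ← Finset.mul_sum]
    have e2 : (3 * ∑ i ∈ range m, f (i+1) * 3 ^ i) + f 0 * 3 ^ 0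
        = f 0 + 3 * ∑ i ∈ range m, f (i+1) * 3 ^ i := by ring
    rw [e2, s3_step _ _ (by have := hf 0; omega), ih (fun i => f (i + 1)) (fun i => hf _)]
    omega

private lemma s3_rep (m : ℕ) : ∀ n, n < 3 ^ m →
    (∑ i ∈ range m, (n / 3 ^ i % 3) * 3 ^ i = n) ∧ s3 n = ∑ i ∈ range m, n / 3 ^ i % 3 := by
  induction m with
  | zero => intro n hn; interval_cases n; simp [s3]
  | succ m ih =>
    intro n hn
    have h3 : n / 3 < 3 ^ m := by
      rw [Nat.div_lt_iff_lt_mul (by norm_num)]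
      calc n < 3 ^ (m+1) := hn
      _ = 3 ^ m * 3 := by ring
    obtain ⟨ih1, ih2⟩ := ih (n / 3) h3
    have hdd : ∀ i, n / 3 ^ (i+1) = n / 3 / 3 ^ i := by
      intro i
      rw [Nat.div_div_eq_div_mul, pow_succ']
    constructor
    · rw [Finset.sum_range_succ' (fun i => (n / 3 ^ i % 3) * 3 ^ i)]
      have e1 : ∀ i, n / 3 ^ (i+1) % 3 * 3 ^ (i+1) = 3 * (n / 3 / 3 ^ i % 3 * 3 ^ i) := by
        intro i; rw [hdd i, pow_succ]; ring
      rw [Finset.sum_congr rfl (fun i _ => e1 i), ← Finset.mul_sum, ih1]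
      simp; omega
    · rw [s3_eq, Finset.sum_range_succ' (fun i => n / 3 ^ i % 3)]
      rw [Finset.sum_congr rfl (fun i (_ : i ∈ range m) => by rw [hdd i])]
      rw [ih2]; simp; omega

private lemma s3_compl (m : ℕ) : ∀ B, B ≤ 3 ^ m - 1 → s3 B + s3 (3 ^ m - 1 - B) = 2 * m := by
  induction m with
  | zero => intro B hB; interval_cases B; simp [s3]
  | succ m ih =>
    intro B hB
    have h1 : 3 ^ (m+1) = 3 * 3 ^ m := by ring
    have hp : 1 ≤ 3 ^ m := Nat.one_le_pow _ _ (by norm_num)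
    have hB3 : B / 3 ≤ 3 ^ m - 1 := by omega
    have key : 3 ^ (m+1) - 1 - B = (2 - B % 3) + 3 * (3 ^ m - 1 - B / 3) := by omega
    rw [key, s3_step _ _ (by omega), s3_eq B]
    have := ih (B / 3) hB3
    omega

private lemma zmod_sum (m : ℕ) [NeZero m] (F : ℕ → ℕ) :
    ∑ i : ZMod m, F i.val = ∑ i ∈ range m, F i := by
  rw [← Fin.sum_univ_eq_sum_range]
  symm
  apply Fintype.sum_bijective (fun (i : Fin m) => ((i : ℕ) : ZMod m))
  · constructor
    · intro i j hij
      have := congrArg ZMod.val hij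
      rw [ZMod.val_cast_of_lt i.isLt, ZMod.val_cast_of_lt j.isLt] at this
      exact Fin.val_inj.mp this
    · intro x
      exact ⟨⟨x.val, x.val_lt⟩, ZMod.natCast_zmod_val x⟩
  · intro i
    rw [ZMod.val_cast_of_lt i.isLt]

private lemma zmod_shift (m : ℕ) [NeZero m] (f : ZMod m → ℕ) (k : ZMod m) :
    ∑ i : ZMod m, f (i + k) = ∑ i : ZMod m, f i :=
  Fintype.sum_equiv (Equiv.addRight k) _ _ (fun _ => rfl)

private lemma carry_exists (m : ℕ) [NeZero m] (w : ZMod m → ℕ) (hw : ∀ i, w i ≤ 7) :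
    ∃ g : ZMod m → ℕ, (∀ i, g i ≤ 3) ∧ ∀ i, g (i + 1) = (w i + g i) / 3 := by
  set F : (ZMod m → ℕ) → (ZMod m → ℕ) := fun g i => (w (i - 1) + g (i - 1)) / 3 with hF
  set gk : ℕ → ZMod m → ℕ := fun k => F^[k] (fun _ => 0) with hgk
  have hmono : ∀ g g' : ZMod m → ℕ, (∀ i, g i ≤ g' i) → ∀ i, F g i ≤ F g' i := by
    intro g g' hle i
    exact Nat.div_le_div_right (by have := hle (i - 1); omega)
  have hstep : ∀ k i, gk k i ≤ gk (k + 1) i := by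
    intro k
    induction k with
    | zero => intro i; simp [hgk]
    | succ k ih =>
      intro i
      show F^[k+1] (fun _ => 0) i ≤ F^[k+1+1] (fun _ => 0) i
      rw [Function.iterate_succ_apply', Function.iterate_succ_apply' (n := k+1)]
      exact hmono _ _ ih i
  have hbound : ∀ k i, gk k i ≤ 3 := by
    intro k
    induction k with
    | zero => intro i; simp [hgk]
    | succ k ih =>
      intro i
      show F^[k+1] (fun _ => 0) i ≤ 3
      rw [Function.iterate_succ_apply']
      show (w (i - 1) + F^[k] (fun _ => 0) (i - 1)) / 3 ≤ 3
      have h1 := hw (i - 1)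
      have h2 := ih (i - 1)
      simp only [hgk] at h2
      omega
  have hfix : ∃ k, ∀ i, gk (k + 1) i = gk k i := by
    by_contra hcon
    push_neg at hcon
    have hlt : ∀ k, (∑ i, gk k i) < ∑ i, gk (k + 1) i := by
      intro k
      obtain ⟨j, hj⟩ := hcon k
      exact Finset.sum_lt_sum (fun i _ => hstep k i)
        ⟨j, Finset.mem_univ j, lt_of_le_of_ne (hstep k j) (Ne.symm hj)⟩
    have hge : ∀ k, k ≤ ∑ i, gk k i := by
      intro k
      induction k with
      | zero => omega
      | succ k ih => have := hlt k; omega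
    have hle3 : (∑ i, gk (3 * m + 1) i) ≤ 3 * m := by
      calc (∑ i, gk (3 * m + 1) i) ≤ ∑ _i : ZMod m, 3 :=
            Finset.sum_le_sum (fun i _ => hbound _ i)
        _ = 3 * m := by
            rw [Finset.sum_const, Finset.card_univ, ZMod.card m]; ring
    have := hge (3 * m + 1)
    omega
  obtain ⟨k, hk⟩ := hfix
  refine ⟨gk k, fun i => hbound k i, fun i => ?_⟩
  have h1 : gk k (i + 1) = F (gk k) (i + 1) := by
    rw [← hk (i + 1)]
    show F^[k+1] (fun _ => 0) (i+1) = F (F^[k] (fun _ => 0)) (i+1)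
    rw [Function.iterate_succ_apply']
  rw [h1, hF]
  simp

private def psi (g G p : ℕ) : ℕ :=
  if (g = 1 ∧ G = 0 ∧ p = 2) ∨ (g = 1 ∧ G = 1 ∧ p = 1) ∨
     (g = 2 ∧ G = 1 ∧ p = 2) ∨ (g = 2 ∧ G = 2 ∧ p = 2) then 1 else 0

private lemma psi_key : ∀ g < 4, ∀ G < 4, ∀ p < 3, ∀ c < 3, ∀ C < 3,
    c + C + psi g G p ≤ (2*c + C + 1 + g)/3 + (2*C + p + 1 + G)/3 +
      psi ((2*c + C + 1 + g)/3) ((2*C + p + 1 + G)/3) c := by decide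

private lemma carry_ge (h : ℕ) (d g : ZMod (2*h+1) → ℕ)
    (hd : ∀ i, d i ≤ 2) (hg3 : ∀ i, g i ≤ 3)
    (hrec : ∀ i, g (i + 1) = (2 * d i + d (i + (h : ZMod (2*h+1))) + 1 + g i) / 3) :
    ∑ i, d i ≤ ∑ i, g i := by
  haveI : NeZero (2*h+1) := ⟨by omega⟩
  have hh : (h : ZMod (2*h+1)) + h = -1 := by
    have h0 : ((2*h+1 : ℕ) : ZMod (2*h+1)) = 0 := ZMod.natCast_self _
    push_cast at h0
    linear_combination h0
  set Φ : ZMod (2*h+1) → ℕ := fun i => psi (g i) (g (i + h)) (d (i - 1)) with hΦ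
  have key : ∀ i : ZMod (2*h+1),
      d i + d (i + h) + Φ i ≤ g (i + 1) + g (i + h + 1) + Φ (i + 1) := by
    intro i
    have e1 : g (i + 1) = (2 * d i + d (i + h) + 1 + g i) / 3 := hrec i
    have e2 : g (i + h + 1) = (2 * d (i + h) + d (i - 1) + 1 + g (i + h)) / 3 := by
      have hi : i + (h : ZMod (2*h+1)) + h = i - 1 := by
        rw [add_assoc, hh]; ring
      have e := hrec (i + (h : ZMod (2*h+1)))
      rwa [hi] at e
    have a1 : i + 1 + (h : ZMod (2*h+1)) = i + h + 1 := by ring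
    have a2 : i + 1 - 1 = i := by ring
    simp only [hΦ]
    rw [a1, a2, e1, e2]
    exact psi_key (g i) (by have := hg3 i; omega) (g (i + h)) (by have := hg3 (i+h); omega)
      (d (i - 1)) (by have := hd (i-1); omega) (d i) (by have := hd i; omega)
      (d (i + h)) (by have := hd (i+h); omega)
  have hsum := Finset.sum_le_sum (fun i (_ : i ∈ (univ : Finset (ZMod (2*h+1)))) => key i)
  rw [Finset.sum_add_distrib, Finset.sum_add_distrib, Finset.sum_add_distrib,
      Finset.sum_add_distrib] at hsum
  have r1 : ∑ i : ZMod (2*h+1), d (i + h) = ∑ i, d i := zmod_shift _ d _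
  have r2 : ∑ i : ZMod (2*h+1), g (i + 1) = ∑ i, g i := zmod_shift _ g _
  have r3 : ∑ i : ZMod (2*h+1), g (i + h + 1) = ∑ i, g i := by
    have : ∀ i : ZMod (2*h+1), i + h + 1 = i + (h + 1) := by intro i; ring
    rw [Finset.sum_congr rfl (fun i _ => by rw [this i])]
    exact zmod_shift _ g _
  have r4 : ∑ i : ZMod (2*h+1), Φ (i + 1) = ∑ i, Φ i := zmod_shift _ Φ _
  rw [r1, r2, r3, r4] at hsum
  omega


private lemma two_geom : ∀ m : ℕ, 2 * (∑ i ∈ range m, 3 ^ i) + 1 = 3 ^ m := by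
  intro m
  induction m with
  | zero => simp
  | succ m ih => rw [Finset.sum_range_succ, pow_succ]; omega

private lemma pow_sub_dvd (m e f : ℕ) (he : e % m = f % m) :
    ((3:ℤ) ^ m - 1) ∣ 3 ^ e - 3 ^ f := by
  have key : ∀ t : ℕ, ((3:ℤ) ^ m - 1) ∣ 3 ^ t - 3 ^ (t % m) := by
    intro t
    have h1 : (3:ℤ) ^ t = 3 ^ (t % m) * ((3 ^ m) ^ (t / m)) := by
      rw [← pow_mul, ← pow_add]
      congr 1
      exact (Nat.mod_add_div t m).symm
    have h2 : ((3:ℤ) ^ m - 1) ∣ (3 ^ m) ^ (t / m) - 1 ^ (t / m) :=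
      sub_dvd_pow_sub_pow _ _ _
    rw [one_pow] at h2
    have : (3:ℤ) ^ t - 3 ^ (t % m) = 3 ^ (t % m) * ((3 ^ m) ^ (t / m) - 1) := by
      rw [h1]; ring
    rw [this]
    exact Dvd.dvd.mul_left h2 _
  have h3 := key e
  have h4 := key f
  rw [he] at h3
  have : (3:ℤ) ^ e - 3 ^ f = (3 ^ e - 3 ^ (f % m)) - (3 ^ f - 3 ^ (f % m)) := by ring
  rw [this]
  exact dvd_sub h3 h4

/-- The base-3 digit sum `s(a)` of an integer `a` taken modulo `3^m - 1`:
the sum of the base-3 digits of the least nonnegative residue of `a` modulo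
`3^m - 1` (which is the least positive residue `L(a)` when `3^m - 1 ∤ a`,
and is `0` when `3^m - 1 ∣ a`). -/
def digitSum (m : ℕ) (a : ℤ) : ℕ :=
  (Nat.digits 3 ((a % ((3 : ℤ) ^ m - 1)).toNat)).sum

set_option maxHeartbeats 1000000 in
theorem stickelberger_digit_sum_ineq (h : ℕ) :
    let m := 2 * h + 1
    let q : ℤ := 3 ^ m
    let α : ℤ := 3 ^ (h + 1)
    ∀ a : ℤ, 0 ≤ a → a ≤ q - 2 →
      m ≤ digitSum m a + digitSum m ((q - 1) / 2 - a * (α + 2)) := by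
  intro m q α a ha0 ha1
  have hmd : m = 2 * h + 1 := rfl
  have hqd : q = 3 ^ m := rfl
  have hαd : α = 3 ^ (h + 1) := rfl
  clear_value m q α
  subst hqd hαd hmd
  haveI : NeZero (2*h+1) := ⟨by omega⟩
  -- basic numeric facts
  have hpow3 : (3:ℤ) ≤ 3 ^ (2*h+1) := by
    calc (3:ℤ) = 3 ^ 1 := by norm_num
    _ ≤ 3 ^ (2*h+1) := pow_le_pow_right₀ (by norm_num) (by omega)
  set c' : ℕ := ∑ i ∈ Finset.range (2*h+1), 3 ^ i with hc'
  have hgeom : 2 * c' + 1 = 3 ^ (2*h+1) := two_geom _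
  have hgeomZ : 2 * (c':ℤ) + 1 = 3 ^ (2*h+1) := by exact_mod_cast hgeom
  have hQeq : (3:ℤ) ^ (2*h+1) - 1 = 2 * (c':ℤ) := by linarith
  have hchalf : ((3:ℤ) ^ (2*h+1) - 1) / 2 = (c' : ℤ) := by
    rw [hQeq]; exact Int.mul_ediv_cancel_left _ (by norm_num)
  have hc'pos : 1 ≤ c' := by
    have h3 : (3:ℕ) ≤ 3 ^ (2*h+1) := by exact_mod_cast hpow3
    omega
  -- n and digits
  set n : ℕ := a.toNat with hn
  have hna : (n:ℤ) = a := Int.toNat_of_nonneg ha0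
  have hnltZ : (n:ℤ) < 3 ^ (2*h+1) - 1 := by linarith
  have hnlt : n < 3 ^ (2*h+1) := by
    have : (n:ℤ) < ((3 ^ (2*h+1) : ℕ) : ℤ) := by push_cast; linarith
    exact_mod_cast this
  have hda : digitSum (2*h+1) a = s3 n := by
    unfold digitSum
    rw [Int.emod_eq_of_lt ha0 (by linarith)]
    rfl
  set d : ZMod (2*h+1) → ℕ := fun i => n / 3 ^ i.val % 3 with hdd
  have hd2 : ∀ i, d i ≤ 2 := fun i => by simp only [hdd]; omega
  set w : ZMod (2*h+1) → ℕ := fun i => 2 * d i + d (i + (h:ZMod (2*h+1))) + 1 with hwd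
  obtain ⟨g, hg3, hgrec⟩ := carry_exists (2*h+1) w (fun i => by
    simp only [hwd]
    have := hd2 i; have := hd2 (i + (h:ZMod (2*h+1))); omega)
  have hrec' : ∀ i, g (i+1) = (2 * d i + d (i + (h : ZMod (2*h+1))) + 1 + g i) / 3 := by
    intro i
    rw [hgrec i]
  have hcge : ∑ i, d i ≤ ∑ i, g i := carry_ge h d g hd2 hg3 hrec'
  set b : ZMod (2*h+1) → ℕ := fun i => (w i + g i) % 3 with hbd
  have hb2 : ∀ i, b i ≤ 2 := fun i => by simp only [hbd]; omega
  have heuc : ∀ i, w i + g i = 3 * g (i+1) + b i := by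
    intro i
    simp only [hbd]
    rw [hgrec i]
    omega
  -- sum representations
  have hSd : s3 n = ∑ i : ZMod (2*h+1), d i := by
    obtain ⟨-, h2⟩ := s3_rep (2*h+1) n hnlt
    rw [h2, ← zmod_sum (2*h+1) (fun j => n / 3 ^ j % 3)]
  have hNd : ∑ i : ZMod (2*h+1), d i * 3 ^ i.val = n := by
    obtain ⟨h1, -⟩ := s3_rep (2*h+1) n hnlt
    conv_rhs => rw [← h1]
    rw [← zmod_sum (2*h+1) (fun j => n / 3 ^ j % 3 * 3 ^ j)]
  have hc'sum : ∑ i : ZMod (2*h+1), 3 ^ i.val = c' := by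
    rw [hc', ← zmod_sum (2*h+1) (fun j => 3 ^ j)]
  set W : ℕ := ∑ i : ZMod (2*h+1), w i * 3 ^ i.val with hWdef
  set B : ℕ := ∑ i : ZMod (2*h+1), b i * 3 ^ i.val with hBdef
  set U : ℕ := ∑ i : ZMod (2*h+1), d (i + (h:ZMod (2*h+1))) * 3 ^ i.val with hUdef
  have hW : W = 2 * n + U + c' := by
    rw [hWdef]
    calc ∑ i : ZMod (2*h+1), w i * 3 ^ i.val
        = ∑ i : ZMod (2*h+1), (2 * (d i * 3 ^ i.val) +
            (d (i + (h:ZMod (2*h+1))) * 3 ^ i.val + 3 ^ i.val)) := by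
          apply Finset.sum_congr rfl
          intro i _
          simp only [hwd]
          ring
      _ = 2 * n + U + c' := by
          rw [Finset.sum_add_distrib, Finset.sum_add_distrib, ← Finset.mul_sum, hNd,
            ← hUdef, hc'sum]
          ring
  have hBle : B ≤ 2 * c' := by
    rw [hBdef]
    calc ∑ i : ZMod (2*h+1), b i * 3 ^ i.val
        ≤ ∑ i : ZMod (2*h+1), 2 * 3 ^ i.val :=
          Finset.sum_le_sum (fun i _ => Nat.mul_le_mul_right _ (hb2 i))
      _ = 2 * c' := by rw [← Finset.mul_sum, hc'sum]
  -- identity W + g 0 = B + g 0 * 3^m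
  have hsum1 : W + (∑ i : ZMod (2*h+1), g i * 3 ^ i.val)
      = (∑ i : ZMod (2*h+1), g (i+1) * 3 ^ (i.val + 1)) + B := by
    rw [hWdef, hBdef, ← Finset.sum_add_distrib, ← Finset.sum_add_distrib]
    apply Finset.sum_congr rfl
    intro i _
    have e := heuc i
    calc w i * 3 ^ i.val + g i * 3 ^ i.val = (w i + g i) * 3 ^ i.val := by ring
      _ = (3 * g (i+1) + b i) * 3 ^ i.val := by rw [e]
      _ = g (i+1) * 3 ^ (i.val + 1) + b i * 3 ^ i.val := by rw [pow_succ]; ring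
  have hT : (∑ i : ZMod (2*h+1), g (i+1) * 3 ^ (i.val + 1))
      = ∑ j : ZMod (2*h+1), g j * 3 ^ ((j - 1).val + 1) := by
    apply Fintype.sum_equiv (Equiv.addRight (1 : ZMod (2*h+1)))
    intro x
    simp
  have hval0 : ((0:ZMod (2*h+1)) - 1).val = 2*h := by
    have e : ((0:ZMod (2*h+1)) - 1) = -1 := by ring
    rw [e]
    exact ZMod.val_neg_one (2*h)
  have hvalne : ∀ j : ZMod (2*h+1), j ≠ 0 → (j - 1).val + 1 = j.val := by
    intro j hj
    have hv0 : j.val ≠ 0 := fun hc => hj ((ZMod.val_eq_zero j).mp hc)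
    have hvlt : j.val < 2*h+1 := ZMod.val_lt j
    have e1 : j - 1 = ((j.val - 1 : ℕ) : ZMod (2*h+1)) := by
      have : ((j.val : ℕ) : ZMod (2*h+1)) = j := ZMod.natCast_zmod_val j
      rw [Nat.cast_sub (by omega), this]
      norm_num
    rw [e1, ZMod.val_cast_of_lt (by omega)]
    omega
  have hsplitT : ∑ j : ZMod (2*h+1), g j * 3 ^ ((j-1).val+1)
      = g 0 * 3 ^ (2*h+1) + ∑ j ∈ Finset.univ.erase (0 : ZMod (2*h+1)), g j * 3 ^ j.val := by
    rw [← Finset.add_sum_erase _ _ (Finset.mem_univ (0:ZMod (2*h+1)))]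
    congr 1
    · rw [hval0]
    · exact Finset.sum_congr rfl (fun j hj => by rw [hvalne j (Finset.ne_of_mem_erase hj)])
  have hsplitG : ∑ j : ZMod (2*h+1), g j * 3 ^ (ZMod.val j)
      = g 0 + ∑ j ∈ Finset.univ.erase (0 : ZMod (2*h+1)), g j * 3 ^ j.val := by
    rw [← Finset.add_sum_erase _ _ (Finset.mem_univ (0:ZMod (2*h+1)))]
    congr 1
    rw [ZMod.val_zero]
    ring
  have hI1 : W + g 0 = B + g 0 * 3 ^ (2*h+1) := by
    rw [hT, hsplitT, hsplitG] at hsum1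
    omega
  -- divisibility: Q ∣ 3^(h+1) n - U
  have hzero : (2 : ZMod (2*h+1)) * (h : ZMod (2*h+1)) + 1 = 0 := by
    have h0 : ((2*h+1 : ℕ) : ZMod (2*h+1)) = 0 := ZMod.natCast_self _
    push_cast at h0
    linear_combination h0
  have hUZ : ((3:ℤ) ^ (2*h+1) - 1) ∣ 3 ^ (h+1) * (n:ℤ) - (U:ℤ) := by
    have hn' : (n:ℤ) = ∑ i : ZMod (2*h+1), (d i : ℤ) * 3 ^ i.val := by
      rw [← hNd]; push_cast; ring
    have hU' : (U:ℤ) = ∑ j : ZMod (2*h+1), (d j : ℤ) * 3 ^ ((j - (h:ZMod (2*h+1))).val) := by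
      rw [hUdef]
      push_cast
      apply Fintype.sum_equiv (Equiv.addRight ((h:ZMod (2*h+1))))
      intro x
      simp only [Equiv.coe_addRight]
      rw [add_sub_cancel_right]
    rw [hn', hU', Finset.mul_sum, ← Finset.sum_sub_distrib]
    apply Finset.dvd_sum
    intro j _
    have e : (3:ℤ) ^ (h+1) * ((d j:ℤ) * 3 ^ j.val) - (d j:ℤ) * 3 ^ ((j - (h:ZMod (2*h+1))).val)
        = (d j : ℤ) * (3 ^ (j.val + (h+1)) - 3 ^ ((j - (h:ZMod (2*h+1))).val)) := by
      rw [pow_add]; ring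
    rw [e]
    apply Dvd.dvd.mul_left
    apply pow_sub_dvd
    have hcast : ((j.val + (h+1) : ℕ) : ZMod (2*h+1)) = (((j - (h:ZMod (2*h+1))).val : ℕ) : ZMod (2*h+1)) := by
      rw [ZMod.natCast_zmod_val]
      push_cast
      rw [ZMod.natCast_zmod_val]
      linear_combination hzero
    exact (ZMod.natCast_eq_natCast_iff _ _ _).mp hcast
  -- the target integer
  set x : ℤ := ((3:ℤ) ^ (2*h+1) - 1) / 2 - a * ((3:ℤ) ^ (h+1) + 2) with hxdef
  have hxeq : x = (c' : ℤ) - ((3:ℤ) ^ (h+1) + 2) * a := by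
    rw [hxdef, hchalf]; ring
  set rI : ℤ := x % ((3:ℤ) ^ (2*h+1) - 1) with hrIdef
  have hQpos : (0:ℤ) < 3 ^ (2*h+1) - 1 := by linarith
  have hr0 : 0 ≤ rI := Int.emod_nonneg _ (by linarith)
  have hrlt : rI < 3 ^ (2*h+1) - 1 := Int.emod_lt_of_pos _ hQpos
  set r : ℕ := rI.toNat with hrdef
  have hrz : (r:ℤ) = rI := Int.toNat_of_nonneg hr0
  have hds2 : digitSum (2*h+1) x = s3 r := rfl
  have hWI2 : ((3:ℤ) ^ (2*h+1) - 1) ∣ (W:ℤ) - (((3:ℤ) ^ (h+1) + 2) * a + (c':ℤ)) := by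
    have hWZ : (W:ℤ) = 2 * (n:ℤ) + (U:ℤ) + (c':ℤ) := by exact_mod_cast hW
    have e : (W:ℤ) - (((3:ℤ) ^ (h+1) + 2) * a + (c':ℤ))
        = -(3 ^ (h+1) * (n:ℤ) - (U:ℤ)) := by
      rw [hWZ, ← hna]; ring
    rw [e]
    exact dvd_neg.mpr hUZ
  have hWBz : (W:ℤ) + (g 0 : ℤ) = (B:ℤ) + (g 0:ℤ) * 3 ^ (2*h+1) := by exact_mod_cast hI1
  have hdvd : ((3:ℤ) ^ (2*h+1) - 1) ∣ rI + (B:ℤ) := by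
    have hem : ((3:ℤ) ^ (2*h+1) - 1) ∣ rI - x := by
      rw [hrIdef, Int.emod_def]
      exact ⟨-(x / (3 ^ (2*h+1) - 1)), by ring⟩
    have hexpr : rI + (B:ℤ) = (rI - x) + ((W:ℤ) - (((3:ℤ) ^ (h+1) + 2) * a + (c':ℤ)))
        + (1 - (g 0 : ℤ)) * ((3:ℤ) ^ (2*h+1) - 1) := by
      linear_combination hxeq - hQeq - hWBz
    rw [hexpr]
    exact dvd_add (dvd_add hem hWI2) (dvd_mul_left _ _)
  have hBZle : (B:ℤ) ≤ 2*(c':ℤ) := by exact_mod_cast hBle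
  obtain ⟨k, hk⟩ := hdvd
  have hB0 : (0:ℤ) ≤ (B:ℤ) := Int.ofNat_nonneg B
  have hk01 : k = 0 ∨ k = 1 := by
    by_contra hcon
    have hQ0 : (0:ℤ) ≤ 3 ^ (2*h+1) - 1 := le_of_lt hQpos
    rcases lt_or_ge k 0 with hkn | hkp
    · have hk1 : k ≤ -1 := by omega
      have hmul : (3 ^ (2*h+1) - 1) * k ≤ (3 ^ (2*h+1) - 1) * (-1) :=
        mul_le_mul_of_nonneg_left hk1 hQ0
      linarith
    · have hk2 : (2:ℤ) ≤ k := by omega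
      have hmul : (3 ^ (2*h+1) - 1) * 2 ≤ (3 ^ (2*h+1) - 1) * k :=
        mul_le_mul_of_nonneg_left hk2 hQ0
      linarith
  rcases hk01 with hk0 | hk1
  · -- case rI + B = 0 : then a = c'
    rw [hk0, mul_zero] at hk
    have hrI0 : rI = 0 := by linarith
    have hQx : ((3:ℤ) ^ (2*h+1) - 1) ∣ x := Int.dvd_of_emod_eq_zero (by rw [← hrIdef]; exact hrI0)
    have hα2 : (3:ℤ) ^ (h+1) * 3 ^ (h+1) = 3 * 3 ^ (2*h+1) := by
      rw [← pow_add, show (h+1)+(h+1) = (2*h+1)+1 by omega, pow_succ]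
      ring
    set t' : ℕ := ∑ i ∈ Finset.range (h+1), 3 ^ i with ht'
    have hgeomt : 2 * t' + 1 = 3 ^ (h+1) := two_geom _
    have hgeomtZ : 2 * (t':ℤ) + 1 = 3 ^ (h+1) := by exact_mod_cast hgeomt
    have hαc : ((3:ℤ) ^ (2*h+1) - 1) ∣ ((3:ℤ) ^ (h+1) - 1) * (c':ℤ) :=
      ⟨(t':ℤ), by linear_combination (-(c':ℤ)) * hgeomtZ - (t':ℤ) * hQeq⟩
    have hsub : ((3:ℤ) ^ (2*h+1) - 1) ∣ (c' : ℤ) - a := by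
      have e : (c':ℤ) - a = ((3:ℤ) ^ (h+1) - 1) * (c':ℤ)
          - ((3:ℤ) ^ (h+1) - 2) * x - (3 * a) * ((3:ℤ) ^ (2*h+1) - 1) := by
        rw [hxeq]
        linear_combination (-a) * hα2
      rw [e]
      exact dvd_sub (dvd_sub hαc (Dvd.dvd.mul_left hQx _)) (dvd_mul_left _ _)
    have hac : a = (c':ℤ) := by
      obtain ⟨t, ht⟩ := hsub
      have hc'Z : 1 ≤ (c':ℤ) := by exact_mod_cast hc'pos
      have ht01 : t = 0 := by
        by_contra hcon
        have hQ0 : (0:ℤ) ≤ 3 ^ (2*h+1) - 1 := le_of_lt hQpos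
        rcases lt_or_ge t 0 with htn | htp
        · have h1 : t ≤ -1 := by omega
          have hmul : (3 ^ (2*h+1) - 1) * t ≤ (3 ^ (2*h+1) - 1) * (-1) :=
            mul_le_mul_of_nonneg_left h1 hQ0
          linarith
        · have h1 : (1:ℤ) ≤ t := by omega
          have hmul : (3 ^ (2*h+1) - 1) * 1 ≤ (3 ^ (2*h+1) - 1) * t :=
            mul_le_mul_of_nonneg_left h1 hQ0
          linarith
      rw [ht01, mul_zero] at ht
      linarith
    have hnc : n = c' := by
      have : (n:ℤ) = (c':ℤ) := by rw [hna, hac]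
      exact_mod_cast this
    have hs3c : s3 n = 2*h+1 := by
      rw [hnc, hc']
      have e := s3_ofdigits (fun _ => 1) (fun _ => by norm_num) (2*h+1)
      simp only [one_mul] at e
      rw [e]
      simp
    rw [hda, hs3c]
    omega
  · -- case rI + B = Q
    rw [hk1, mul_one] at hk
    have hrB : r + B = 2 * c' := by
      have : (r:ℤ) + (B:ℤ) = 2*(c':ℤ) := by rw [hrz]; linarith
      exact_mod_cast this
    have hQn3 : (3:ℕ) ≤ 3 ^ (2*h+1) := by exact_mod_cast hpow3
    have hrle : r ≤ 3 ^ (2*h+1) - 1 := by omega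
    have hcompl := s3_compl (2*h+1) r hrle
    have hBeq : 3 ^ (2*h+1) - 1 - r = B := by omega
    rw [hBeq] at hcompl
    -- s3 B = sum of b
    have hBrep : B = ∑ i ∈ Finset.range (2*h+1), b ((i : ZMod (2*h+1))) * 3 ^ i := by
      rw [hBdef, ← zmod_sum (2*h+1) (fun j => b ((j : ZMod (2*h+1))) * 3 ^ j)]
      apply Finset.sum_congr rfl
      intro i _
      rw [ZMod.natCast_zmod_val]
    have hs3B : s3 B = ∑ i : ZMod (2*h+1), b i := by
      rw [hBrep, s3_ofdigits (fun j => b ((j : ZMod (2*h+1)))) (fun j => hb2 _) (2*h+1),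
        ← zmod_sum (2*h+1) (fun j => b ((j : ZMod (2*h+1))))]
      apply Finset.sum_congr rfl
      intro i _
      rw [ZMod.natCast_zmod_val]
    -- sum identities
    have hsums : (∑ i : ZMod (2*h+1), w i) + ∑ i : ZMod (2*h+1), g i
        = 3 * (∑ i : ZMod (2*h+1), g i) + ∑ i : ZMod (2*h+1), b i := by
      have e1 : (∑ i : ZMod (2*h+1), w i) + ∑ i : ZMod (2*h+1), g i
          = ∑ i : ZMod (2*h+1), (3 * g (i+1) + b i) := by
        rw [← Finset.sum_add_distrib]
        exact Finset.sum_congr rfl (fun i _ => heuc i)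
      rw [e1, Finset.sum_add_distrib, ← Finset.mul_sum]
      congr 2
      exact zmod_shift (2*h+1) g 1
    have hw3 : ∑ i : ZMod (2*h+1), w i = 3 * (∑ i : ZMod (2*h+1), d i) + (2*h+1) := by
      calc ∑ i : ZMod (2*h+1), w i
          = ∑ i : ZMod (2*h+1), (2 * d i + (d (i + (h:ZMod (2*h+1))) + 1)) := by
            apply Finset.sum_congr rfl
            intro i _
            simp only [hwd]
            ring
        _ = 2 * (∑ i : ZMod (2*h+1), d i) + ((∑ i : ZMod (2*h+1), d (i + (h:ZMod (2*h+1)))) + ∑ _i : ZMod (2*h+1), 1) := by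
            rw [Finset.sum_add_distrib, Finset.sum_add_distrib, ← Finset.mul_sum]
        _ = 3 * (∑ i : ZMod (2*h+1), d i) + (2*h+1) := by
            rw [zmod_shift (2*h+1) d ((h:ZMod (2*h+1)))]
            rw [Finset.sum_const, Finset.card_univ, ZMod.card]
            ring
    rw [hda, hds2, hSd]
    omega
end

section
/- With the periodic carry-sequence setup (m odd, r = (m+1)/2, sequences (a_i), (c_i) periodic with period m, 0 ≤ a_i ≤ 2, 0 ≤ c_i ≤ 3, b_i = 5 + a_i − a_{i−1} − a_{i−r}, and 0 ≤ b_i − 3c_i + c_{i−1} ≤ 2 for all i ∈ ℤ): if c_i = 3 for some i, then c_{i−1} = 2, c_{i−r} ≤ 2, a_i = 2, and a_{i−1} = a_{i−r} = 0. -/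
theorem carry_base_lemma (m : ℕ) (hm : Odd m)
    (a c : ℤ → ℤ)
    (ha_per : ∀ i : ℤ, a (i + m) = a i) (hc_per : ∀ i : ℤ, c (i + m) = c i)
    (ha : ∀ i : ℤ, 0 ≤ a i ∧ a i ≤ 2) (hc : ∀ i : ℤ, 0 ≤ c i ∧ c i ≤ 3)
    (hs : ∀ i : ℤ,
      0 ≤ (5 + a i - a (i - 1) - a (i - ((m : ℤ) + 1) / 2)) - 3 * c i + c (i - 1) ∧
      (5 + a i - a (i - 1) - a (i - ((m : ℤ) + 1) / 2)) - 3 * c i + c (i - 1) ≤ 2)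
    (i : ℤ) (hci : c i = 3) :
    let r : ℤ := ((m : ℤ) + 1) / 2
    c (i - 1) = 2 ∧ c (i - r) ≤ 2 ∧ a i = 2 ∧ a (i - 1) = 0 ∧ a (i - r) = 0 := by
  intro r
  show c (i - 1) = 2 ∧ c (i - ((m : ℤ) + 1) / 2) ≤ 2 ∧ a i = 2 ∧
    a (i - 1) = 0 ∧ a (i - ((m : ℤ) + 1) / 2) = 0
  have key : ∀ j : ℤ, c j = 3 →
      c (j - 1) = 2 ∧ a j = 2 ∧ a (j - 1) = 0 ∧ a (j - ((m : ℤ) + 1) / 2) = 0 := by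
    intro j hj
    have ha3 := ha (j - 3)
    have h0 := hs j
    have h1 := hs (j - 1)
    have h2 := hs (j - 2)
    have e1 : j - 1 - 1 = j - 2 := by ring
    have e2 : j - 2 - 1 = j - 3 := by ring
    rw [e1] at h1
    rw [e2] at h2
    have ha0 := ha j
    have ha1 := ha (j - 1)
    have ha2 := ha (j - 2)
    have har0 := ha (j - ((m : ℤ) + 1) / 2)
    have har1 := ha (j - 1 - ((m : ℤ) + 1) / 2)
    have har2 := ha (j - 2 - ((m : ℤ) + 1) / 2)
    have hc1 := hc (j - 1)
    have hc2 := hc (j - 2)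
    have hc3 := hc (j - 3)
    omega
  have hmain := key i hci
  refine ⟨hmain.1, ?_, hmain.2.1, hmain.2.2.1, hmain.2.2.2⟩
  by_contra h
  have hcr : c (i - ((m : ℤ) + 1) / 2) = 3 := by
    have := hc (i - ((m : ℤ) + 1) / 2); omega
  have := (key (i - ((m : ℤ) + 1) / 2) hcr).2.1
  omega
end

section
/- With the periodic carry-sequence setup (m odd, r = (m+1)/2, sequences (a_i), (c_i) periodic with period m, 0 ≤ a_i ≤ 2, 0 ≤ c_i ≤ 3, b_i = 5 + a_i − a_{i−1} − a_{i−r}, and 0 ≤ b_i − 3c_i + c_{i−1} ≤ 2 for all i ∈ ℤ): let t ≥ 3 be an integer; if c_i = 3 and c_{i−jr} = 2 for all j = 1, 2, …, t, then a_i = 2, a_{i−jr} ≤ 1 for all j = 1, …, t−1, a_{i−(t−2)r} + a_{i−(t−1)r} ≤ 1, and c_{i−(t+1)r} ≤ 2. If, in addition, c_{i−(t+1)r} = 2, then also a_{i−tr} ≤ 1 and a_{i−(t−1)r} + a_{i−tr} ≤ 1. -/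
lemma carry_aux (t : ℤ) (ht : 3 ≤ t) (u w : ℤ → ℤ)
    (hu : ∀ j : ℤ, 0 ≤ u j ∧ u j ≤ 2) (hw : ∀ j : ℤ, 0 ≤ w j ∧ w j ≤ 3)
    (hS : ∀ j : ℤ, 0 ≤ 5 + u j - u (j+1) - u (j+2) - 3 * w j + w (j+2) ∧
        5 + u j - u (j+1) - u (j+2) - 3 * w j + w (j+2) ≤ 2)
    (hw0 : w 0 = 3) (hwt : ∀ j : ℤ, 1 ≤ j → j ≤ t → w j = 2) :
    u 0 = 2 ∧ (∀ j : ℤ, 1 ≤ j → j ≤ t - 1 → u j ≤ 1) ∧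
    u (t-2) + u (t-1) ≤ 1 ∧ w (t+1) ≤ 2 ∧
    (w (t+1) = 2 → u t ≤ 1 ∧ u (t-1) + u t ≤ 1) := by
  -- base facts at 0
  have h0 : u 0 = 2 ∧ u 1 = 0 ∧ u 2 = 0 := by
    have hs0 := hS 0
    rw [show (0:ℤ)+1 = 1 from by norm_num, show (0:ℤ)+2 = 2 from by norm_num,
      hw0, hwt 2 (by omega) (by omega)] at hs0
    have := hu 0; have := hu 1; have := hu 2
    omega
  -- key invariant
  have key : ∀ j : ℤ, 1 ≤ j → j ≤ t - 2 → u j + u (j + 1) ≤ 1 := by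
    refine Int.le_induction (motive := fun j _ => j ≤ t - 2 → u j + u (j + 1) ≤ 1) ?_ ?_
    · intro _
      rw [show (1:ℤ)+1 = 2 from by norm_num]
      omega
    · intro n hn ih hle
      have ih' := ih (by omega)
      have c1 := hS n
      have c2 := hS (n+1)
      rw [show n+1+1 = n+2 from by ring, show n+1+2 = n+3 from by ring] at c2
      have e1 : w n = 2 := hwt n (by omega) (by omega)
      have e2 : w (n+1) = 2 := hwt (n+1) (by omega) (by omega)
      have e3 : w (n+2) = 2 := hwt (n+2) (by omega) (by omega)
      have e4 : w (n+3) = 2 := hwt (n+3) (by omega) (by omega)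
      have := hu n; have := hu (n+1); have := hu (n+2); have := hu (n+3)
      rw [show n+1+1 = n+2 from by ring]
      omega
  have hA : u (t-2) + u (t-1) ≤ 1 := by
    have := key (t-2) (by omega) (by omega)
    rw [show t-2+1 = t-1 from by ring] at this
    exact this
  have h2 : ∀ j : ℤ, 1 ≤ j → j ≤ t - 1 → u j ≤ 1 := by
    intro j h1 hj2
    by_cases h : j ≤ t - 2
    · have hk := key j h1 h
      have hb := (hu (j+1)).1
      omega
    · have hj : j = t - 1 := by omega
      subst hj
      have hb := (hu (t-2)).1
      omega
  have h5 : w (t+1) = 2 → u t ≤ 1 ∧ u (t-1) + u t ≤ 1 := by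
    intro hq
    have d1 := hS (t-2)
    rw [show t-2+1 = t-1 from by ring, show t-2+2 = t from by ring] at d1
    have d2 := hS (t-1)
    rw [show t-1+1 = t from by ring, show t-1+2 = t+1 from by ring] at d2
    have w1 : w (t-2) = 2 := hwt (t-2) (by omega) (by omega)
    have w2 : w (t-1) = 2 := hwt (t-1) (by omega) (by omega)
    have w3 : w t = 2 := hwt t (by omega) (by omega)
    have b1 := hu (t-2); have b2 := hu (t-1); have b3 := hu t; have b4 := hu (t+1)
    omega
  have h4 : w (t+1) ≤ 2 := by
    have c1 := hS (t-2)
    rw [show t-2+1 = t-1 from by ring, show t-2+2 = t from by ring] at c1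
    have c2 := hS (t-1)
    rw [show t-1+1 = t from by ring, show t-1+2 = t+1 from by ring] at c2
    have c3 := hS t
    have c4 := hS (t+1)
    rw [show t+1+1 = t+2 from by ring, show t+1+2 = t+3 from by ring] at c4
    have c5 := hS (t+2)
    rw [show t+2+1 = t+3 from by ring, show t+2+2 = t+4 from by ring] at c5
    have c6 := hS (t+3)
    rw [show t+3+1 = t+4 from by ring, show t+3+2 = t+5 from by ring] at c6
    have w1 : w (t-2) = 2 := hwt (t-2) (by omega) (by omega)
    have w2 : w (t-1) = 2 := hwt (t-1) (by omega) (by omega)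
    have w3 : w t = 2 := hwt t (by omega) (by omega)
    have bu1 := hu (t-2); have bu2 := hu (t-1); have bu3 := hu t
    have bu4 := hu (t+1); have bu5 := hu (t+2); have bu6 := hu (t+3)
    have bu7 := hu (t+4); have bu8 := hu (t+5)
    have bw1 := hw (t+1); have bw2 := hw (t+2); have bw3 := hw (t+3)
    have bw4 := hw (t+4); have bw5 := hw (t+5)
    omega
  exact ⟨h0.1, h2, hA, h4, h5⟩

theorem carry_induction_lemma (m : ℕ) (hm : Odd m)
    (a c : ℤ → ℤ)
    (ha_per : ∀ i : ℤ, a (i + m) = a i) (hc_per : ∀ i : ℤ, c (i + m) = c i)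
    (ha : ∀ i : ℤ, 0 ≤ a i ∧ a i ≤ 2) (hc : ∀ i : ℤ, 0 ≤ c i ∧ c i ≤ 3)
    (hs : ∀ i : ℤ,
      0 ≤ (5 + a i - a (i - 1) - a (i - ((m : ℤ) + 1) / 2)) - 3 * c i + c (i - 1) ∧
      (5 + a i - a (i - 1) - a (i - ((m : ℤ) + 1) / 2)) - 3 * c i + c (i - 1) ≤ 2)
    (t : ℤ) (ht : 3 ≤ t) (i : ℤ) (hci : c i = 3)
    (hct : ∀ j : ℤ, 1 ≤ j → j ≤ t → c (i - j * (((m : ℤ) + 1) / 2)) = 2) :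
    let r : ℤ := ((m : ℤ) + 1) / 2
    a i = 2 ∧
    (∀ j : ℤ, 1 ≤ j → j ≤ t - 1 → a (i - j * r) ≤ 1) ∧
    a (i - (t - 2) * r) + a (i - (t - 1) * r) ≤ 1 ∧
    c (i - (t + 1) * r) ≤ 2 ∧
    (c (i - (t + 1) * r) = 2 →
      a (i - t * r) ≤ 1 ∧ a (i - (t - 1) * r) + a (i - t * r) ≤ 1) := by
  intro r
  have hr : ((m : ℤ) + 1) / 2 = r := rfl
  have h2r : 2 * r = (m : ℤ) + 1 := by
    rw [← hr]
    obtain ⟨k, hk⟩ := hm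
    subst hk
    push_cast
    omega
  have hS' : ∀ j : ℤ,
      0 ≤ 5 + a (i - j*r) - a (i - (j+1)*r) - a (i - (j+2)*r)
          - 3 * c (i - j*r) + c (i - (j+2)*r) ∧
      5 + a (i - j*r) - a (i - (j+1)*r) - a (i - (j+2)*r)
          - 3 * c (i - j*r) + c (i - (j+2)*r) ≤ 2 := by
    intro j
    have h := hs (i - j*r)
    rw [hr] at h
    have e1 : i - j*r - 1 = (i - (j+2)*r) + m := by linear_combination h2r
    have e2 : i - j*r - r = i - (j+1)*r := by ring
    rw [e1, e2, ha_per, hc_per] at h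
    constructor
    · linarith [h.1]
    · linarith [h.2]
  obtain ⟨H1, H2, H3, H4, H5⟩ := carry_aux t ht (fun j => a (i - j*r)) (fun j => c (i - j*r))
    (fun j => ha (i - j*r)) (fun j => hc (i - j*r)) hS'
    (by show c (i - 0*r) = 3; rw [show i - 0*r = i from by ring]; exact hci)
    (fun j h1 h2 => hct j h1 h2)
  refine ⟨?_, H2, H3, H4, H5⟩
  have H1' : a (i - 0*r) = 2 := H1
  rw [show i - 0*r = i from by ring] at H1'
  exact H1'
end

section
/- With the periodic carry-sequence setup (m odd, r = (m+1)/2, sequences (a_i), (c_i) periodic with period m, 0 ≤ a_i ≤ 2, 0 ≤ c_i ≤ 3, b_i = 5 + a_i − a_{i−1} − a_{i−r}, and 0 ≤ b_i − 3c_i + c_{i−1} ≤ 2 for all i ∈ ℤ): if c_i = 3, then c_{i−r} ≤ 2; moreover, for every integer t ≥ 1, if c_i = 3 and c_{i−jr} = 2 for all j = 1, …, t, then c_{i−(t+1)r} ≤ 2. -/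
theorem carry_corollary1 (m : ℕ) (hm : Odd m)
    (a c : ℤ → ℤ)
    (ha_per : ∀ i : ℤ, a (i + m) = a i) (hc_per : ∀ i : ℤ, c (i + m) = c i)
    (ha : ∀ i : ℤ, 0 ≤ a i ∧ a i ≤ 2) (hc : ∀ i : ℤ, 0 ≤ c i ∧ c i ≤ 3)
    (hs : ∀ i : ℤ,
      0 ≤ (5 + a i - a (i - 1) - a (i - ((m : ℤ) + 1) / 2)) - 3 * c i + c (i - 1) ∧
      (5 + a i - a (i - 1) - a (i - ((m : ℤ) + 1) / 2)) - 3 * c i + c (i - 1) ≤ 2) :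
    let r : ℤ := ((m : ℤ) + 1) / 2
    (∀ i : ℤ, c i = 3 → c (i - r) ≤ 2) ∧
    (∀ t : ℤ, 1 ≤ t → ∀ i : ℤ, c i = 3 →
      (∀ j : ℤ, 1 ≤ j → j ≤ t → c (i - j * r) = 2) → c (i - (t + 1) * r) ≤ 2) := by
  intro r
  obtain ⟨k, hk⟩ := hm
  have hm1 : (m : ℤ) = 2 * (k : ℤ) + 1 := by exact_mod_cast hk
  have hr : r = ((m : ℤ) + 1) / 2 := rfl
  have hr2 : 2 * r = (m : ℤ) + 1 := by omega
  have aper2 : ∀ x : ℤ, a (x - 1) = a (x - 2 * r) := by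
    intro x
    have h := ha_per (x - 2 * r)
    rw [show x - 2 * r + (m : ℤ) = x - 1 by omega] at h
    exact h
  have cper2 : ∀ x : ℤ, c (x - 1) = c (x - 2 * r) := by
    intro x
    have h := hc_per (x - 2 * r)
    rw [show x - 2 * r + (m : ℤ) = x - 1 by omega] at h
    exact h
  have hs' : ∀ x : ℤ,
      0 ≤ (5 + a x - a (x - 2 * r) - a (x - r)) - 3 * c x + c (x - 2 * r) ∧
      (5 + a x - a (x - 2 * r) - a (x - r)) - 3 * c x + c (x - 2 * r) ≤ 2 := by
    intro x
    have h := hs x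
    rw [← hr, aper2 x, cper2 x] at h
    exact h
  have lemA : ∀ x : ℤ, c x = 3 → a (x - r) + a (x - 2 * r) + 1 ≤ a x := by
    intro x hx
    have h := (hs' x).1
    have h1 := (hc (x - 2 * r)).2
    omega
  have lemC : ∀ x : ℤ, c x = 3 → a x = 2 := by
    intro x hx
    have h0 := lemA x hx
    have h1 := (ha x).2
    have h2 := (ha (x - r)).1
    have h3 := (ha (x - 2 * r)).1
    by_contra hne
    have h4 := (hs' x).1
    have hc1 : c (x - 2 * r) = 3 := by
      have := (hc (x - 2 * r)).2
      omega
    have h5 := lemA (x - 2 * r) hc1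
    have h6 := (ha (x - 2 * r - r)).1
    have h7 := (ha (x - 2 * r - 2 * r)).1
    omega
  constructor
  · intro i hi
    by_contra hlt
    push_neg at hlt
    have h3 : c (i - r) = 3 := by have := (hc (i - r)).2; omega
    have e1 := lemC i hi
    have e2 := lemC (i - r) h3
    have e3 := lemA i hi
    have e4 := (ha (i - 2 * r)).1
    omega
  · intro t ht i hi h2
    by_contra hlt
    push_neg at hlt
    have hd : c (i - (t + 1) * r) = 3 := by
      have := (hc (i - (t + 1) * r)).2
      omega
    have hs2 : ∀ j : ℤ,
        0 ≤ (5 + a (i - j * r) - a (i - (j + 2) * r) - a (i - (j + 1) * r)) -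
            3 * c (i - j * r) + c (i - (j + 2) * r) ∧
        (5 + a (i - j * r) - a (i - (j + 2) * r) - a (i - (j + 1) * r)) -
            3 * c (i - j * r) + c (i - (j + 2) * r) ≤ 2 := by
      intro j
      have h := hs' (i - j * r)
      rw [show i - j * r - 2 * r = i - (j + 2) * r by ring,
          show i - j * r - r = i - (j + 1) * r by ring] at h
      exact h
    have hai : a i = 2 := lemC i hi
    have hbase := lemA i hi
    by_cases ht1 : t = 1
    · subst ht1
      rw [show i - (1 + 1) * r = i - 2 * r by ring] at hd
      have xt1 : a (i - 2 * r) = 2 := lemC _ hd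
      have h := (hs' i).1
      have := (ha (i - r)).1
      omega
    -- now t ≥ 2
    have ht2 : 2 ≤ t := by omega
    have xt1 : a (i - (t + 1) * r) = 2 := lemC _ hd
    -- invariant R
    have R : ∀ n : ℕ, (n : ℤ) + 2 ≤ t →
        (a (i - ((n : ℤ) + 1) * r) + a (i - ((n : ℤ) + 2) * r) ≤ 1 ∨
         (a (i - ((n : ℤ) + 1) * r) = 0 ∧ a (i - ((n : ℤ) + 2) * r) = 2)) := by
      intro n
      induction n with
      | zero =>
        intro _
        left
        rw [show i - ((0 : ℕ) + 1 : ℤ) * r = i - r by push_cast; ring,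
            show i - ((0 : ℕ) + 2 : ℤ) * r = i - 2 * r by push_cast; ring]
        omega
      | succ n ih =>
        intro hle
        push_cast at hle
        have hR := ih (by omega)
        have hcj : c (i - ((n : ℤ) + 1) * r) = 2 := h2 ((n : ℤ) + 1) (by omega) (by omega)
        have hcj2 : c (i - ((n : ℤ) + 3) * r) = 2 := h2 ((n : ℤ) + 3) (by omega) (by omega)
        have hsj := (hs2 ((n : ℤ) + 1)).1
        rw [show ((n : ℤ) + 1 + 2) = (n : ℤ) + 3 by ring,
            show ((n : ℤ) + 1 + 1) = (n : ℤ) + 2 by ring] at hsj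
        have b1 := (ha (i - ((n : ℤ) + 1) * r)).1
        have b1' := (ha (i - ((n : ℤ) + 1) * r)).2
        have b2 := (ha (i - ((n : ℤ) + 2) * r)).1
        have b2' := (ha (i - ((n : ℤ) + 2) * r)).2
        have b3 := (ha (i - ((n : ℤ) + 3) * r)).1
        have b3' := (ha (i - ((n : ℤ) + 3) * r)).2
        rw [show ((n : ℕ) + 1 : ℕ) + 1 = (n : ℤ) + 2 by push_cast; ring,
            show ((n : ℕ) + 1 : ℕ) + 2 = (n : ℤ) + 3 by push_cast; ring]
        omega
    -- instantiate R at n = t - 2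
    obtain ⟨n, hn⟩ : ∃ n : ℕ, (n : ℤ) = t - 2 := ⟨(t - 2).toNat, Int.toNat_of_nonneg (by omega)⟩
    have hRt := R n (by omega)
    rw [show (n : ℤ) + 1 = t - 1 by omega, show (n : ℤ) + 2 = t by omega] at hRt
    -- s at j = t - 1 gives x_t = 0
    have hse := (hs2 (t - 1)).1
    rw [show (t - 1 + 2) = t + 1 by ring, show (t - 1 + 1) = t by ring] at hse
    have hct1 : c (i - (t - 1) * r) = 2 := h2 (t - 1) (by omega) (by omega)
    have bx1 := (ha (i - t * r)).1
    have bx2 := (ha (i - (t - 1) * r)).1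
    have hxt : a (i - t * r) = 0 := by omega
    -- s at j = t gives contradiction
    have hsf := (hs2 t).1
    have hct : c (i - t * r) = 2 := h2 t (by omega) (by omega)
    have hc2 := (hc (i - (t + 2) * r)).2
    have hc2' := (hc (i - (t + 2) * r)).1
    have ha2 := (ha (i - (t + 2) * r)).1
    have hd2 : c (i - (t + 2) * r) = 3 := by omega
    have := lemC (i - (t + 2) * r) hd2
    omega
end
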